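/- arXiv:1507.05818 — 8 statements merged into one kernel-verified Lean document; each statement's English description precedes it below -/
import Mathlib

section
/- Let (x_1,y_1),…,(x_m,y_m) and (x'_1,y'_1),…,(x'_k,y'_k) be two finite nonempty families of points of ℝ², and let N, N' ⊆ ℝ² be the convex hulls of the unions of the translated quadrants (x_j,y_j) − Q, respectively (x'_i,y'_i) − Q, where Q = [0,∞) × [0,∞). Then N = N' if and only if max_j (λ x_j + y_j) = max_i (λ x'_i + y'_i) for every λ ∈ [0,∞). -/
open Set Pointwise

/-- The half-plane `{z | lam * z.1 + z.2 ≤ M}` is convex. -/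
lemma halfspace_convex' (lam M : ℝ) : Convex ℝ {z : ℝ × ℝ | lam * z.1 + z.2 ≤ M} := by
  have h : IsLinearMap ℝ (fun z : ℝ × ℝ => lam * z.1 + z.2) := by
    constructor
    · intro x y; simp [Prod.fst_add, Prod.snd_add]; ring
    · intro c x; simp [Prod.smul_fst, Prod.smul_snd, smul_eq_mul]; ring
  exact convex_halfSpace_le h M

lemma hull_subset_halfspace {n : ℕ} (u : Fin n → ℝ × ℝ) {lam M : ℝ} (hl : 0 ≤ lam)
    (hM : ∀ j, lam * (u j).1 + (u j).2 ≤ M) :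
    convexHull ℝ (⋃ j, {z : ℝ × ℝ | z.1 ≤ (u j).1 ∧ z.2 ≤ (u j).2}) ⊆
      {z : ℝ × ℝ | lam * z.1 + z.2 ≤ M} := by
  apply convexHull_min _ (halfspace_convex' lam M)
  rintro z hz
  simp only [mem_iUnion, mem_setOf_eq] at hz ⊢
  obtain ⟨j, h1, h2⟩ := hz
  exact le_trans (add_le_add (mul_le_mul_of_nonneg_left h1 hl) h2) (hM j)

lemma mem_hull_of_le {n : ℕ} (u : Fin n → ℝ × ℝ) {z p : ℝ × ℝ}
    (hp : p ∈ convexHull ℝ (Set.range u)) (h1 : z.1 ≤ p.1) (h2 : z.2 ≤ p.2) :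
    z ∈ convexHull ℝ (⋃ j, {q : ℝ × ℝ | q.1 ≤ (u j).1 ∧ q.2 ≤ (u j).2}) := by
  have key : z ∈ convexHull ℝ (Set.range u + ({z - p} : Set (ℝ × ℝ))) := by
    rw [convexHull_add, convexHull_singleton]
    have := Set.add_mem_add hp (Set.mem_singleton (z - p))
    simpa using this
  refine convexHull_mono ?_ key
  rintro q hq
  rw [Set.mem_add] at hq
  obtain ⟨a, ⟨j, rfl⟩, b, hb, rfl⟩ := hq
  simp only [Set.mem_singleton_iff] at hb
  subst hb
  refine Set.mem_iUnion.2 ⟨j, ?_, ?_⟩ <;> simp only [Prod.fst_add, Prod.snd_add,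
    Prod.fst_sub, Prod.snd_sub, mem_setOf_eq] <;> linarith

/-- Core separation lemma: a point satisfying all the support inequalities lies below
some point of the convex hull of the vertices. -/
lemma exists_dominating {n : ℕ} (hn : 0 < n) (u : Fin n → ℝ × ℝ) (z : ℝ × ℝ)
    (hz : ∀ lam : ℝ, 0 ≤ lam →
      lam * z.1 + z.2 ≤ Finset.sup' Finset.univ ⟨⟨0, hn⟩, Finset.mem_univ _⟩
        (fun j => lam * (u j).1 + (u j).2)) :
    ∃ p ∈ convexHull ℝ (Set.range u), z.1 ≤ p.1 ∧ z.2 ≤ p.2 := by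
  set K := convexHull ℝ (Set.range u) with hK
  set C : Set (ℝ × ℝ) := {q | q.1 ≤ 0 ∧ q.2 ≤ 0} with hC
  by_contra hcon
  push_neg at hcon
  have hzS : z ∉ K + C := by
    intro hmemz
    rw [Set.mem_add] at hmemz
    obtain ⟨p, hp, q, ⟨hq1, hq2⟩, hpq⟩ := hmemz
    have hz1 : z.1 ≤ p.1 := by
      rw [← hpq]; simp only [Prod.fst_add]; linarith
    have := hcon p hp hz1
    rw [← hpq] at this; simp only [Prod.snd_add] at this; linarith
  have hSconv : Convex ℝ (K + C) := by
    apply Convex.add (convex_convexHull ℝ _)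
    intro x hx y hy a b ha hb _
    constructor
    · simp only [Prod.fst_add, Prod.smul_fst, smul_eq_mul]
      have := mul_nonpos_of_nonneg_of_nonpos ha hx.1
      have := mul_nonpos_of_nonneg_of_nonpos hb hy.1
      linarith
    · simp only [Prod.snd_add, Prod.smul_snd, smul_eq_mul]
      have := mul_nonpos_of_nonneg_of_nonpos ha hx.2
      have := mul_nonpos_of_nonneg_of_nonpos hb hy.2
      linarith
  have hCclosed : IsClosed C :=
    (isClosed_le (continuous_fst) continuous_const).inter
      (isClosed_le (continuous_snd) continuous_const)
  have hSclosed : IsClosed (K + C) :=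
    IsClosed.add_left_of_isCompact hCclosed (((Set.finite_range u).isCompact_convexHull ℝ))
  obtain ⟨f, t, hft, hfz⟩ := geometric_hahn_banach_closed_point hSconv hSclosed hzS
  set c₁ := f (1, 0) with hc₁
  set c₂ := f (0, 1) with hc₂
  have hf : ∀ q : ℝ × ℝ, f q = q.1 * c₁ + q.2 * c₂ := by
    intro q
    have hq : f q = q.1 • f ((1:ℝ), (0:ℝ)) + q.2 • f ((0:ℝ), (1:ℝ)) := by
      rw [← map_smul, ← map_smul, ← map_add]
      congr 1
      ext <;> simp
    rw [hq]; simp [smul_eq_mul, hc₁, hc₂]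
  have hmem : ∀ (j : Fin n) (a b : ℝ), 0 ≤ a → 0 ≤ b →
      ((u j).1 - a, (u j).2 - b) ∈ K + C := by
    intro j a b ha hb
    rw [Set.mem_add]
    refine ⟨u j, subset_convexHull ℝ _ ⟨j, rfl⟩, (-a, -b), ⟨by simpa using ha, by simpa using hb⟩, ?_⟩
    ext <;> simp <;> ring
  have j0 : Fin n := ⟨0, hn⟩
  have hc₁nn : 0 ≤ c₁ := by
    by_contra hcn
    push_neg at hcn
    set a := max 0 ((t - f (u j0)) / (-c₁)) with hadef
    have ha : 0 ≤ a := le_max_left _ _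
    have hmem' := hft _ (hmem j0 a 0 ha le_rfl)
    rw [hf] at hmem'
    simp only [sub_zero] at hmem'
    have h1 : (t - f (u j0)) / (-c₁) ≤ a := le_max_right _ _
    have h2 : (t - f (u j0)) ≤ a * (-c₁) := by
      rw [div_le_iff₀ (by linarith)] at h1; linarith
    rw [hf (u j0)] at h2
    nlinarith [hmem']
  have hc₂nn : 0 ≤ c₂ := by
    by_contra hcn
    push_neg at hcn
    set a := max 0 ((t - f (u j0)) / (-c₂)) with hadef
    have ha : 0 ≤ a := le_max_left _ _
    have hmem' := hft _ (hmem j0 0 a le_rfl ha)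
    rw [hf] at hmem'
    simp only [sub_zero] at hmem'
    have h1 : (t - f (u j0)) / (-c₂) ≤ a := le_max_right _ _
    have h2 : (t - f (u j0)) ≤ a * (-c₂) := by
      rw [div_le_iff₀ (by linarith)] at h1; linarith
    rw [hf (u j0)] at h2
    nlinarith [hmem']
  have huS : ∀ j, u j ∈ K + C := by
    intro j
    have := hmem j 0 0 le_rfl le_rfl
    simpa using this
  rcases lt_or_eq_of_le hc₂nn with hc₂pos | hc₂zero
  · -- c₂ > 0
    set lam := c₁ / c₂ with hlam
    have hlamnn : 0 ≤ lam := div_nonneg hc₁nn (le_of_lt hc₂pos)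
    have hmain := hz lam hlamnn
    obtain ⟨j, -, hj⟩ := Finset.exists_mem_eq_sup' (⟨j0, Finset.mem_univ _⟩ :
      (Finset.univ : Finset (Fin n)).Nonempty) (fun j => lam * (u j).1 + (u j).2)
    rw [hj] at hmain
    have hfle := hft _ (huS j)
    rw [hf] at hfz hfle
    have hc : c₂ * lam = c₁ := by
      rw [hlam, mul_comm, div_mul_cancel₀ _ (ne_of_gt hc₂pos)]
    have hm2 : c₂ * (lam * z.1 + z.2) ≤ c₂ * (lam * (u j).1 + (u j).2) :=
      mul_le_mul_of_nonneg_left hmain (le_of_lt hc₂pos)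
    have e1 : c₂ * (lam * z.1 + z.2) = c₁ * z.1 + c₂ * z.2 := by rw [← hc]; ring
    have e2 : c₂ * (lam * (u j).1 + (u j).2) = c₁ * (u j).1 + c₂ * (u j).2 := by
      rw [← hc]; ring
    clear_value lam
    linarith [hm2, e1, e2, hfz, hfle]
  · -- c₂ = 0
    have hc₂0 : c₂ = 0 := hc₂zero.symm
    have hc₁pos : 0 < c₁ := by
      rcases lt_or_eq_of_le hc₁nn with h | h
      · exact h
      · exfalso
        have h1 := hft _ (huS j0)
        rw [hf] at h1; rw [hf] at hfz
        rw [← h, hc₂0] at h1 hfz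
        simp only [mul_zero, add_zero, zero_add] at h1 hfz
        linarith
    have hX : ∀ j, (u j).1 < z.1 := by
      intro j
      have h1 := hft _ (huS j)
      rw [hf] at h1; rw [hf] at hfz
      rw [hc₂0] at h1 hfz
      simp only [mul_zero, add_zero] at h1 hfz
      have := lt_trans h1 hfz
      exact lt_of_mul_lt_mul_right this (le_of_lt hc₁pos)
    set X := Finset.sup' Finset.univ (⟨j0, Finset.mem_univ _⟩ :
      (Finset.univ : Finset (Fin n)).Nonempty) (fun j => (u j).1) with hXdef
    set Y := Finset.sup' Finset.univ (⟨j0, Finset.mem_univ _⟩ :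
      (Finset.univ : Finset (Fin n)).Nonempty) (fun j => (u j).2) with hYdef
    have hXlt : X < z.1 := by
      rw [hXdef]; refine (Finset.sup'_lt_iff _).2 ?_
      intro j _; exact hX j
    set d := z.1 - X with hd
    have hdpos : 0 < d := by simp only [hd]; linarith
    set lam := max 0 ((Y - z.2) / d) + 1 with hlamdef
    have hlamnn : 0 ≤ lam := by positivity
    have hmain := hz lam hlamnn
    have hsup : Finset.sup' Finset.univ ⟨⟨0, hn⟩, Finset.mem_univ _⟩
        (fun j => lam * (u j).1 + (u j).2) ≤ lam * X + Y := by
      apply Finset.sup'_le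
      intro j _
      have h1 : (u j).1 ≤ X := Finset.le_sup' (fun j => (u j).1) (Finset.mem_univ j)
      have h2 : (u j).2 ≤ Y := Finset.le_sup' (fun j => (u j).2) (Finset.mem_univ j)
      nlinarith
    have hld : lam * d ≤ Y - z.2 := by nlinarith [le_trans hmain hsup]
    have hexp : lam * d = (max 0 ((Y - z.2) / d)) * d + d := by
      rw [hlamdef]; ring
    have hge : Y - z.2 ≤ (max 0 ((Y - z.2) / d)) * d := by
      rw [← div_le_iff₀ hdpos]; exact le_max_right _ _
    clear_value lam d X Y
    linarith [hld, hexp, hge, hdpos]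

/-- Two Newton polygons (convex hulls of finite unions of translated quadrants
`(x_j,y_j) - Q`, `Q = [0,∞) × [0,∞)`) coincide if and only if their Legendre transforms
`λ ↦ max_j (λ x_j + y_j)` coincide on `[0,∞)`. -/
theorem statement1 (m k : ℕ) (hm : 0 < m) (hk : 0 < k) (v : Fin m → ℝ × ℝ)
    (w : Fin k → ℝ × ℝ) :
    convexHull ℝ (⋃ j : Fin m, {z : ℝ × ℝ | z.1 ≤ (v j).1 ∧ z.2 ≤ (v j).2}) =
      convexHull ℝ (⋃ i : Fin k, {z : ℝ × ℝ | z.1 ≤ (w i).1 ∧ z.2 ≤ (w i).2}) ↔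
    ∀ lam : ℝ, 0 ≤ lam →
      Finset.sup' Finset.univ ⟨⟨0, hm⟩, Finset.mem_univ _⟩
          (fun j => lam * (v j).1 + (v j).2) =
        Finset.sup' Finset.univ ⟨⟨0, hk⟩, Finset.mem_univ _⟩
          (fun i => lam * (w i).1 + (w i).2) := by
  constructor
  · intro h lam hlam
    apply le_antisymm
    · apply Finset.sup'_le
      intro j _
      have hj : v j ∈ convexHull ℝ (⋃ j : Fin m, {z : ℝ × ℝ | z.1 ≤ (v j).1 ∧ z.2 ≤ (v j).2}) :=
        subset_convexHull ℝ _ (Set.mem_iUnion.2 ⟨j, le_refl _, le_refl _⟩)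
      rw [h] at hj
      exact hull_subset_halfspace w hlam
        (fun i => Finset.le_sup' (fun i => lam * (w i).1 + (w i).2) (Finset.mem_univ i)) hj
    · apply Finset.sup'_le
      intro i _
      have hi : w i ∈ convexHull ℝ (⋃ i : Fin k, {z : ℝ × ℝ | z.1 ≤ (w i).1 ∧ z.2 ≤ (w i).2}) :=
        subset_convexHull ℝ _ (Set.mem_iUnion.2 ⟨i, le_refl _, le_refl _⟩)
      rw [← h] at hi
      exact hull_subset_halfspace v hlam
        (fun j => Finset.le_sup' (fun j => lam * (v j).1 + (v j).2) (Finset.mem_univ j)) hi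
  · intro h
    apply le_antisymm
    · apply convexHull_min _ (convex_convexHull ℝ _)
      rintro z hz
      obtain ⟨j, hz1, hz2⟩ := Set.mem_iUnion.1 hz
      have hvj : ∀ lam : ℝ, 0 ≤ lam →
          lam * (v j).1 + (v j).2 ≤ Finset.sup' Finset.univ ⟨⟨0, hk⟩, Finset.mem_univ _⟩
            (fun i => lam * (w i).1 + (w i).2) := by
        intro lam hlam
        rw [← h lam hlam]
        exact Finset.le_sup' (fun j => lam * (v j).1 + (v j).2) (Finset.mem_univ j)
      obtain ⟨p, hp, hp1, hp2⟩ := exists_dominating hk w (v j) hvj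
      exact mem_hull_of_le w hp (le_trans hz1 hp1) (le_trans hz2 hp2)
    · apply convexHull_min _ (convex_convexHull ℝ _)
      rintro z hz
      obtain ⟨i, hz1, hz2⟩ := Set.mem_iUnion.1 hz
      have hwi : ∀ lam : ℝ, 0 ≤ lam →
          lam * (w i).1 + (w i).2 ≤ Finset.sup' Finset.univ ⟨⟨0, hm⟩, Finset.mem_univ _⟩
            (fun j => lam * (v j).1 + (v j).2) := by
        intro lam hlam
        rw [h lam hlam]
        exact Finset.le_sup' (fun i => lam * (w i).1 + (w i).2) (Finset.mem_univ i)
      obtain ⟨p, hp, hp1, hp2⟩ := exists_dominating hm v (w i) hwi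
      exact mem_hull_of_le v hp (le_trans hz1 hp1) (le_trans hz2 hp2)
end

section
/- Let Ω ⊆ ℝ be a bounded open interval and let h : Ω → ℝ be a continuous piecewise affine function with slopes in ℤ, i.e., there is a finite subset S ⊂ Ω such that on each connected component of Ω \ S the function h is affine with derivative an integer. Then there exist convex continuous piecewise affine functions f, g : Ω → ℝ with slopes in ℤ (each affine off a finite set, with integer derivative on each affine piece) such that h = f − g. -/
open Set Topology Filter

private lemma affine_ext {n n' c c' z₁ z₂ : ℝ} (h₁ : n * z₁ + c = n' * z₁ + c')
    (h₂ : n * z₂ + c = n' * z₂ + c') (hz : z₁ ≠ z₂) (z : ℝ) :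
    n * z + c = n' * z + c' := by
  have h3 : (n - n') * (z₁ - z₂) = 0 := by nlinarith [h₁, h₂]
  rcases mul_eq_zero.1 h3 with h | h
  · have hn : n = n' := by linarith
    subst hn
    have : c = c' := by linarith
    linarith
  · exact absurd (by linarith : z₁ = z₂) hz

private lemma convexOn_affine (s : Set ℝ) (hs : Convex ℝ s) (m c : ℝ) :
    ConvexOn ℝ s (fun y => m * y + c) := by
  refine ⟨hs, fun x _ y _ p q hp hq hpq => le_of_eq ?_⟩
  simp only [smul_eq_mul]
  linear_combination (-c) * hpq

private lemma convexOn_smul_relu (s0 : Set ℝ) (hs : Convex ℝ s0) (c s : ℝ) (hc : 0 ≤ c) :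
    ConvexOn ℝ s0 (fun y => c * max (y - s) 0) := by
  refine ⟨hs, fun x _ y _ p q hp hq hpq => ?_⟩
  simp only [smul_eq_mul]
  have e : p * x + q * y - s = p * (x - s) + q * (y - s) := by linear_combination s * hpq
  have h1 : max (p * x + q * y - s) 0 ≤ p * max (x - s) 0 + q * max (y - s) 0 := by
    apply max_le
    · rw [e]
      exact add_le_add (mul_le_mul_of_nonneg_left (le_max_left (x - s) (0:ℝ)) hp)
        (mul_le_mul_of_nonneg_left (le_max_left (y - s) (0:ℝ)) hq)
    · nlinarith [mul_le_mul_of_nonneg_left (le_max_right (x - s) (0:ℝ)) hp,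
        mul_le_mul_of_nonneg_left (le_max_right (y - s) (0:ℝ)) hq]
  nlinarith [mul_le_mul_of_nonneg_left h1 hc]

private lemma extend_right (u v : ℝ) (f : ℝ → ℝ)
    (hf : ∀ x ∈ Ioo u v, ∃ ε > 0, ∃ (n : ℝ) (c : ℝ),
      ∀ y ∈ Ioo u v, |y - x| < ε → f y = n * y + c)
    (x₀ : ℝ) (hx₀ : x₀ ∈ Ioo u v) (ε₀ : ℝ) (hε₀ : 0 < ε₀) (n c : ℝ)
    (base : ∀ y ∈ Ioo u v, |y - x₀| < ε₀ → f y = n * y + c) :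
    ∀ y ∈ Ioo u v, x₀ ≤ y → f y = n * y + c := by
  set B : Set ℝ := {y | y ∈ Ico x₀ v ∧ ∀ z ∈ Icc x₀ y, f z = n * z + c} with hB
  have hx₀B : x₀ ∈ B := by
    refine ⟨⟨le_refl _, hx₀.2⟩, fun z hz => ?_⟩
    have hzx : z = x₀ := le_antisymm hz.2 hz.1
    subst hzx
    exact base z hx₀ (by simpa using hε₀)
  have hBne : B.Nonempty := ⟨x₀, hx₀B⟩
  have hBdd : BddAbove B := ⟨v, fun y hy => hy.1.2.le⟩
  set m := sSup B with hm
  have hx₀m : x₀ ≤ m := le_csSup hBdd hx₀B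
  have hmv : m ≤ v := csSup_le hBne (fun y hy => hy.1.2.le)
  have claim1 : ∀ z, x₀ ≤ z → z < m → f z = n * z + c := by
    intro z hz1 hz2
    obtain ⟨y, hyB, hzy⟩ := exists_lt_of_lt_csSup hBne hz2
    exact hyB.2 z ⟨hz1, hzy.le⟩
  have hvm : v ≤ m := by
    by_contra hcon
    push_neg at hcon
    have hmIoo : m ∈ Ioo u v := ⟨lt_of_lt_of_le hx₀.1 hx₀m, hcon⟩
    rcases eq_or_lt_of_le hx₀m with heq | hlt
    · -- m = x₀ : extend using base patch
      set δ := min ε₀ (v - m) with hδ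
      have hδ0 : 0 < δ := lt_min hε₀ (by linarith)
      have h1 : δ ≤ ε₀ := min_le_left _ _
      have h2 : δ ≤ v - m := min_le_right _ _
      have hy1B : m + δ / 2 ∈ B := by
        refine ⟨⟨by linarith, by linarith⟩, fun z hz => ?_⟩
        have hz1 : x₀ ≤ z := hz.1
        have hz2 : z ≤ m + δ / 2 := hz.2
        refine base z ⟨lt_of_lt_of_le hx₀.1 hz1, by linarith⟩ ?_
        rw [abs_lt]
        constructor <;> linarith [heq]
      exact absurd (le_csSup hBdd hy1B) (by linarith)
    · -- x₀ < m : use patch at m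
      obtain ⟨ε₁, hε₁, n', c', patch⟩ := hf m hmIoo
      set w := max x₀ (m - ε₁) with hw
      have hwm : w < m := max_lt hlt (by linarith)
      set z₁ := (w + m) / 2 with hz₁
      set z₂ := (z₁ + m) / 2 with hz₂
      have hz₁w : w < z₁ := by rw [hz₁]; linarith
      have hz₁m : z₁ < m := by rw [hz₁]; linarith
      have hz₂w : z₁ < z₂ := by rw [hz₂]; linarith
      have hz₂m : z₂ < m := by rw [hz₂]; linarith
      have hagree : ∀ z, n * z + c = n' * z + c' := by
        have hgen : ∀ z, w < z → z < m → n * z + c = n' * z + c' := by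
          intro z hzw hzm
          have hx₀z : x₀ ≤ z := le_of_lt (lt_of_le_of_lt (le_max_left _ _) hzw)
          have hzIoo : z ∈ Ioo u v := ⟨lt_of_lt_of_le hx₀.1 hx₀z, lt_of_lt_of_le hzm hmv⟩
          have h1 : f z = n * z + c := claim1 z hx₀z hzm
          have h2 : f z = n' * z + c' := by
            refine patch z hzIoo ?_
            rw [abs_lt]
            have : m - ε₁ ≤ w := le_max_right _ _
            constructor <;> linarith
          rw [← h1, ← h2]
        exact affine_ext (hgen z₁ hz₁w hz₁m) (hgen z₂ (lt_trans hz₁w hz₂w) hz₂m)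
          (ne_of_lt hz₂w)
      set δ := min ε₁ (v - m) with hδ
      have hδ0 : 0 < δ := lt_min hε₁ (by linarith)
      have hδv : δ ≤ v - m := min_le_right _ _
      have hδε : δ ≤ ε₁ := min_le_left _ _
      have hy1B : m + δ / 2 ∈ B := by
        refine ⟨⟨by linarith, by linarith⟩, fun z hz => ?_⟩
        rcases lt_or_ge z m with hzm | hzm
        · exact claim1 z hz.1 hzm
        · have hzIoo : z ∈ Ioo u v := ⟨lt_of_lt_of_le hmIoo.1 hzm, by linarith [hz.2]⟩
          have h2 : f z = n' * z + c' := by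
            refine patch z hzIoo ?_
            rw [abs_lt]
            constructor <;> linarith [hz.2]
          rw [h2, ← hagree z]
      exact absurd (le_csSup hBdd hy1B) (by linarith)
  intro y hy hxy
  exact claim1 y hxy (lt_of_lt_of_le hy.2 hvm)

private lemma locallyAffineR (u v : ℝ) (f : ℝ → ℝ)
    (hf : ∀ x ∈ Ioo u v, ∃ ε > 0, ∃ (n : ℝ) (c : ℝ),
      ∀ y ∈ Ioo u v, |y - x| < ε → f y = n * y + c)
    (x₀ : ℝ) (hx₀ : x₀ ∈ Ioo u v) (ε₀ : ℝ) (hε₀ : 0 < ε₀) (n c : ℝ)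
    (base : ∀ y ∈ Ioo u v, |y - x₀| < ε₀ → f y = n * y + c) :
    ∀ y ∈ Ioo u v, f y = n * y + c := by
  intro y hy
  rcases le_total x₀ y with hle | hle
  · exact extend_right u v f hf x₀ hx₀ ε₀ hε₀ n c base y hy hle
  · have hrefl := extend_right (-v) (-u) (fun t => f (-t)) ?_ (-x₀)
      ⟨by linarith [hx₀.2], by linarith [hx₀.1]⟩ ε₀ hε₀ (-n) c ?_ (-y)
      ⟨by linarith [hy.2], by linarith [hy.1]⟩ (by linarith)
    · have : f y = -n * -y + c := by simpa using hrefl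
      rw [this]; ring
    · intro x hx
      obtain ⟨ε, hε, n', c', patch⟩ := hf (-x) ⟨by linarith [hx.2], by linarith [hx.1]⟩
      refine ⟨ε, hε, -n', c', fun z hz hd => ?_⟩
      have h1 : f (-z) = n' * (-z) + c' := by
        refine patch (-z) ⟨by linarith [hz.2], by linarith [hz.1]⟩ ?_
        calc |(-z) - (-x)| = |z - x| := by rw [abs_sub_comm]; congr 1; ring
        _ < ε := hd
      show f (-z) = _
      rw [h1]; ring
    · intro z hz hd
      have h1 : f (-z) = n * (-z) + c := by
        refine base (-z) ⟨by linarith [hz.2], by linarith [hz.1]⟩ ?_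
        calc |(-z) - x₀| = |z - (-x₀)| := by rw [abs_sub_comm]; congr 1; ring
        _ < ε₀ := hd
      show f (-z) = _
      rw [h1]; ring

/-- A function `f` is continuous piecewise affine with slopes in `ℤ` on the bounded open
interval `Ioo a b` if it is continuous there and there is a finite subset `S ⊆ Ioo a b` off
which `f` is locally affine with integer derivative. -/
def PiecewiseAffineInt (a b : ℝ) (f : ℝ → ℝ) : Prop :=
  ContinuousOn f (Set.Ioo a b) ∧
    ∃ S : Finset ℝ, ↑S ⊆ Set.Ioo a b ∧
      ∀ x ∈ Set.Ioo a b, x ∉ S →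
        ∃ ε > 0, ∃ (n : ℤ) (c : ℝ),
          ∀ y ∈ Set.Ioo a b, |y - x| < ε → f y = (n : ℝ) * y + c

private lemma continuous_relu (s : ℝ) : Continuous (fun y : ℝ => max (y - s) 0) :=
  (continuous_id.sub continuous_const).max continuous_const

private lemma pai_add_relu (a b : ℝ) (f : ℝ → ℝ) (s : ℝ) (hs : s ∈ Set.Ioo a b) (m : ℤ)
    (hf : PiecewiseAffineInt a b f) :
    PiecewiseAffineInt a b (fun y => f y + (m : ℝ) * max (y - s) 0) := by
  obtain ⟨hc, S', hsub, hloc⟩ := hf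
  refine ⟨hc.add (Continuous.continuousOn (continuous_const.mul (continuous_relu s))), ?_⟩
  refine ⟨insert s S', ?_, ?_⟩
  · intro x hx
    simp only [Finset.coe_insert, Set.mem_insert_iff] at hx
    rcases hx with rfl | hx
    · exact hs
    · exact hsub hx
  · intro x hx hxmem
    simp only [Finset.mem_insert, not_or] at hxmem
    obtain ⟨hxs, hxS⟩ := hxmem
    obtain ⟨ε, hε, n, c, patch⟩ := hloc x hx hxS
    have habs : 0 < |x - s| := abs_pos.2 (sub_ne_zero.2 hxs)
    refine ⟨min ε |x - s|, lt_min hε habs, ?_⟩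
    rcases lt_or_gt_of_ne hxs with hlt | hgt
    · -- x < s : relu vanishes nearby
      refine ⟨n, c, fun y hy hd => ?_⟩
      have hd1 : |y - x| < ε := lt_of_lt_of_le hd (min_le_left _ _)
      have hd2 : |y - x| < |x - s| := lt_of_lt_of_le hd (min_le_right _ _)
      have hys : y < s := by
        rw [abs_of_neg (by linarith : x - s < 0)] at hd2
        have := abs_lt.1 hd2
        linarith [this.2]
      have hmx : max (y - s) 0 = 0 := max_eq_right (by linarith)
      show f y + (m : ℝ) * max (y - s) 0 = _
      rw [hmx, patch y hy hd1]; ring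
    · -- x > s
      refine ⟨n + m, c - m * s, fun y hy hd => ?_⟩
      have hd1 : |y - x| < ε := lt_of_lt_of_le hd (min_le_left _ _)
      have hd2 : |y - x| < |x - s| := lt_of_lt_of_le hd (min_le_right _ _)
      have hys : s < y := by
        rw [abs_of_pos (by linarith : 0 < x - s)] at hd2
        have := abs_lt.1 hd2
        linarith [this.1]
      have hmx : max (y - s) 0 = y - s := max_eq_left (by linarith)
      show f y + (m : ℝ) * max (y - s) 0 = _
      rw [hmx, patch y hy hd1]
      push_cast
      ring

private lemma continuous_reluE (s : ℝ) : Continuous (fun y : ℝ => max (y - s) 0) :=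
  (continuous_id.sub continuous_const).max continuous_const

private lemma main_ind (a b : ℝ) : ∀ (k : ℕ) (S : Finset ℝ) (h : ℝ → ℝ),
    S.card = k →
    ContinuousOn h (Set.Ioo a b) →
    ↑S ⊆ Set.Ioo a b →
    (∀ x ∈ Set.Ioo a b, x ∉ S →
       ∃ ε > 0, ∃ (n : ℤ) (c : ℝ), ∀ y ∈ Set.Ioo a b, |y - x| < ε → h y = (n : ℝ) * y + c) →
    ∃ f g : ℝ → ℝ, PiecewiseAffineInt a b f ∧ PiecewiseAffineInt a b g ∧
      ConvexOn ℝ (Set.Ioo a b) f ∧ ConvexOn ℝ (Set.Ioo a b) g ∧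
      ∀ x ∈ Set.Ioo a b, h x = f x - g x := by
  intro k
  induction k with
  | zero =>
    intro S h hcard hcont hsub hloc
    have hSempty : S = ∅ := Finset.card_eq_zero.1 hcard
    subst hSempty
    rcases Set.eq_empty_or_nonempty (Ioo a b) with hemp | ⟨x₀, hx₀⟩
    · refine ⟨fun _ => 0, fun _ => 0, ?_, ?_, ?_, ?_, ?_⟩
      · exact ⟨continuousOn_const, ∅, by simp, fun x hx => by rw [hemp] at hx; exact absurd hx (Set.notMem_empty x)⟩
      · exact ⟨continuousOn_const, ∅, by simp, fun x hx => by rw [hemp] at hx; exact absurd hx (Set.notMem_empty x)⟩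
      · exact convexOn_const 0 (convex_Ioo a b)
      · exact convexOn_const 0 (convex_Ioo a b)
      · intro x hx; rw [hemp] at hx; exact absurd hx (Set.notMem_empty x)
    · obtain ⟨ε₀, hε₀, n, c, base⟩ := hloc x₀ hx₀ (Finset.notMem_empty x₀)
      have haff : ∀ y ∈ Ioo a b, h y = (n : ℝ) * y + c := by
        refine locallyAffineR a b h ?_ x₀ hx₀ ε₀ hε₀ (n : ℝ) c base
        intro x hx
        obtain ⟨ε, hε, n', c', patch⟩ := hloc x hx (Finset.notMem_empty x)
        exact ⟨ε, hε, (n' : ℝ), c', patch⟩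
      refine ⟨fun y => (n : ℝ) * y + c, fun _ => 0, ?_, ?_, ?_, ?_, ?_⟩
      · refine ⟨Continuous.continuousOn (by continuity), ∅, by simp, ?_⟩
        intro x hx _
        exact ⟨1, one_pos, n, c, fun y _ _ => rfl⟩
      · exact ⟨continuousOn_const, ∅, by simp, fun x _ _ => ⟨1, one_pos, 0, 0, fun y _ _ => by simp⟩⟩
      · exact convexOn_affine _ (convex_Ioo a b) _ c
      · exact convexOn_const 0 (convex_Ioo a b)
      · intro x hx
        rw [haff x hx]
        ring
  | succ k ih =>
    intro S h hcard hcont hsub hloc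
    have hSne : S.Nonempty := Finset.card_pos.1 (by omega)
    obtain ⟨s, hsS⟩ := hSne
    have hsab : s ∈ Ioo a b := hsub hsS
    -- find ε isolating s
    obtain ⟨ε, hε, hεa, hεb, hεT⟩ : ∃ ε > 0, a ≤ s - ε ∧ s + ε ≤ b ∧
        ∀ t ∈ S.erase s, ε ≤ |t - s| := by
      have hgap : ∃ ε > 0, ∀ t ∈ S.erase s, ε ≤ |t - s| := by
        rcases (S.erase s).eq_empty_or_nonempty with hT | hT
        · exact ⟨1, one_pos, by simp [hT]⟩
        · refine ⟨(S.erase s).inf' hT (fun t => |t - s|), ?_, fun t ht => Finset.inf'_le _ ht⟩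
          exact (Finset.lt_inf'_iff hT).mpr
            (fun t ht => abs_pos.2 (sub_ne_zero.2 (Finset.ne_of_mem_erase ht)))
      obtain ⟨ε₂, hε₂, h2⟩ := hgap
      refine ⟨min ε₂ (min (s - a) (b - s)), ?_, ?_, ?_, ?_⟩
      · refine lt_min hε₂ (lt_min ?_ ?_) <;> [linarith [hsab.1]; linarith [hsab.2]]
      · have := min_le_right ε₂ (min (s - a) (b - s))
        have := min_le_left (s - a) (b - s)
        linarith [le_trans (min_le_right ε₂ (min (s - a) (b - s))) (min_le_left (s - a) (b - s))]
      · linarith [le_trans (min_le_right ε₂ (min (s - a) (b - s))) (min_le_right (s - a) (b - s))]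
      · exact fun t ht => le_trans (min_le_left _ _) (h2 t ht)
    have hsubIoo : ∀ x, x ∈ Ioo (s - ε) (s + ε) → x ∈ Ioo a b := by
      intro x hx
      exact ⟨lt_of_le_of_lt hεa hx.1, lt_of_lt_of_le hx.2 hεb⟩
    have hnotS : ∀ x, x ∈ Ioo (s - ε) (s + ε) → x ≠ s → x ∉ S := by
      intro x hx hxs hxS
      have h1 := hεT x (Finset.mem_erase.2 ⟨hxs, hxS⟩)
      have h2 : |x - s| < ε := abs_lt.2 ⟨by linarith [hx.1], by linarith [hx.2]⟩
      linarith
    -- left piece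
    have hmemL : ∀ x ∈ Ioo (s - ε) s, x ∈ Ioo a b ∧ x ∉ S := by
      intro x hx
      have hx' : x ∈ Ioo (s - ε) (s + ε) := ⟨hx.1, by linarith [hx.2]⟩
      exact ⟨hsubIoo x hx', hnotS x hx' (ne_of_lt hx.2)⟩
    have hsubL : Ioo (s - ε) s ⊆ Ioo a b := fun x hx => (hmemL x hx).1
    have hfL : ∀ x ∈ Ioo (s - ε) s, ∃ ε' > 0, ∃ (n' : ℝ) (c' : ℝ),
        ∀ y ∈ Ioo (s - ε) s, |y - x| < ε' → h y = n' * y + c' := by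
      intro x hx
      obtain ⟨ε', hε', n', c', patch⟩ := hloc x (hmemL x hx).1 (hmemL x hx).2
      exact ⟨ε', hε', (n' : ℝ), c', fun y hy hd => patch y (hsubL hy) hd⟩
    have hx₀L : s - ε / 2 ∈ Ioo (s - ε) s := ⟨by linarith, by linarith⟩
    obtain ⟨ε₀L, hε₀L, n₁, c₁, base₁⟩ := hloc _ (hmemL _ hx₀L).1 (hmemL _ hx₀L).2
    have hleft : ∀ y ∈ Ioo (s - ε) s, h y = (n₁ : ℝ) * y + c₁ :=
      locallyAffineR _ _ h hfL _ hx₀L ε₀L hε₀L _ c₁ (fun y hy hd => base₁ y (hsubL hy) hd)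
    -- right piece
    have hmemR : ∀ x ∈ Ioo s (s + ε), x ∈ Ioo a b ∧ x ∉ S := by
      intro x hx
      have hx' : x ∈ Ioo (s - ε) (s + ε) := ⟨by linarith [hx.1], hx.2⟩
      exact ⟨hsubIoo x hx', hnotS x hx' (ne_of_gt hx.1)⟩
    have hsubR : Ioo s (s + ε) ⊆ Ioo a b := fun x hx => (hmemR x hx).1
    have hfR : ∀ x ∈ Ioo s (s + ε), ∃ ε' > 0, ∃ (n' : ℝ) (c' : ℝ),
        ∀ y ∈ Ioo s (s + ε), |y - x| < ε' → h y = n' * y + c' := by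
      intro x hx
      obtain ⟨ε', hε', n', c', patch⟩ := hloc x (hmemR x hx).1 (hmemR x hx).2
      exact ⟨ε', hε', (n' : ℝ), c', fun y hy hd => patch y (hsubR hy) hd⟩
    have hx₀R : s + ε / 2 ∈ Ioo s (s + ε) := ⟨by linarith, by linarith⟩
    obtain ⟨ε₀R, hε₀R, n₂, c₂, base₂⟩ := hloc _ (hmemR _ hx₀R).1 (hmemR _ hx₀R).2
    have hright : ∀ y ∈ Ioo s (s + ε), h y = (n₂ : ℝ) * y + c₂ :=
      locallyAffineR _ _ h hfR _ hx₀R ε₀R hε₀R _ c₂ (fun y hy hd => base₂ y (hsubR hy) hd)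
    -- values at s by continuity
    have hlim : ∀ (t : Set ℝ) (nn cc : ℝ), s ∈ closure t → t ⊆ Ioo a b →
        (∀ y ∈ t, h y = nn * y + cc) → h s = nn * s + cc := by
      intro t nn cc hcl hts heqt
      have hne : (𝓝[t] s).NeBot := mem_closure_iff_nhdsWithin_neBot.1 hcl
      have t1 : Filter.Tendsto h (𝓝[t] s) (𝓝 (h s)) := (hcont s hsab).mono hts
      have t3 : Filter.Tendsto (fun y => nn * y + cc) (𝓝[t] s) (𝓝 (nn * s + cc)) :=
        ((continuous_const.mul continuous_id).add continuous_const).continuousWithinAt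
      have t2 : Filter.Tendsto h (𝓝[t] s) (𝓝 (nn * s + cc)) :=
        Filter.Tendsto.congr' (Filter.eventuallyEq_of_mem self_mem_nhdsWithin
          (fun y hy => (heqt y hy).symm)) t3
      exact tendsto_nhds_unique t1 t2
    have hcl₁ : s ∈ closure (Ioo (s - ε) s) := by
      rw [closure_Ioo (by linarith : s - ε ≠ s)]
      exact ⟨by linarith, le_refl s⟩
    have hcl₂ : s ∈ closure (Ioo s (s + ε)) := by
      rw [closure_Ioo (by linarith : s ≠ s + ε)]
      exact ⟨le_refl s, by linarith⟩
    have hhs₁ : h s = (n₁ : ℝ) * s + c₁ := hlim _ _ _ hcl₁ hsubL hleft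
    have hhs₂ : h s = (n₂ : ℝ) * s + c₂ := hlim _ _ _ hcl₂ hsubR hright
    -- subtract the kink
    set d : ℤ := n₂ - n₁ with hdd
    set h' : ℝ → ℝ := fun y => h y - (d : ℝ) * max (y - s) 0 with hh'
    have hcont' : ContinuousOn h' (Ioo a b) :=
      hcont.sub (Continuous.continuousOn (continuous_const.mul (continuous_reluE s)))
    have hsub' : ↑(S.erase s) ⊆ Ioo a b := fun x hx => hsub (Finset.erase_subset s S hx)
    have hloc' : ∀ x ∈ Ioo a b, x ∉ S.erase s →
        ∃ ε' > 0, ∃ (n : ℤ) (c : ℝ),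
          ∀ y ∈ Ioo a b, |y - x| < ε' → h' y = (n : ℝ) * y + c := by
      intro x hx hxS'
      by_cases hxs : x = s
      · subst hxs
        refine ⟨ε, hε, n₁, c₁, fun y hy hd' => ?_⟩
        rw [abs_lt] at hd'
        show h y - (d : ℝ) * max (y - x) 0 = (n₁ : ℝ) * y + c₁
        rcases lt_trichotomy y x with hy1 | hy1 | hy1
        · have hmx : max (y - x) 0 = 0 := max_eq_right (by linarith)
          rw [hmx, hleft y ⟨by linarith [hd'.1], hy1⟩]; ring
        · subst hy1
          have hmx : max (y - y) 0 = 0 := by simp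
          rw [hmx, hhs₁]; ring
        · have hmx : max (y - x) 0 = y - x := max_eq_left (by linarith)
          rw [hmx, hright y ⟨hy1, by linarith [hd'.2]⟩, hdd]
          push_cast
          linear_combination hhs₁ - hhs₂
      · have hxS : x ∉ S := fun hmem => hxS' (Finset.mem_erase.2 ⟨hxs, hmem⟩)
        obtain ⟨ε', hε', n, c, patch⟩ := hloc x hx hxS
        have habs : 0 < |x - s| := abs_pos.2 (sub_ne_zero.2 hxs)
        refine ⟨min ε' |x - s|, lt_min hε' habs, ?_⟩
        rcases lt_or_gt_of_ne hxs with hlt | hgt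
        · refine ⟨n, c, fun y hy hd' => ?_⟩
          have hd1 : |y - x| < ε' := lt_of_lt_of_le hd' (min_le_left _ _)
          have hd2 : |y - x| < |x - s| := lt_of_lt_of_le hd' (min_le_right _ _)
          have hys : y < s := by
            rw [abs_of_neg (by linarith : x - s < 0)] at hd2
            have := abs_lt.1 hd2
            linarith [this.2]
          show h y - (d : ℝ) * max (y - s) 0 = (n : ℝ) * y + c
          rw [max_eq_right (by linarith : y - s ≤ 0), patch y hy hd1]; ring
        · refine ⟨n - d, c + d * s, fun y hy hd' => ?_⟩
          have hd1 : |y - x| < ε' := lt_of_lt_of_le hd' (min_le_left _ _)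
          have hd2 : |y - x| < |x - s| := lt_of_lt_of_le hd' (min_le_right _ _)
          have hys : s < y := by
            rw [abs_of_pos (by linarith : 0 < x - s)] at hd2
            have := abs_lt.1 hd2
            linarith [this.1]
          show h y - (d : ℝ) * max (y - s) 0 = ((n - d : ℤ) : ℝ) * y + (c + (d : ℝ) * s)
          rw [max_eq_left (by linarith : 0 ≤ y - s), patch y hy hd1]
          push_cast
          ring
    have hcard' : (S.erase s).card = k := by
      rw [Finset.card_erase_of_mem hsS]
      omega
    obtain ⟨f', g', hf'pai, hg'pai, hf'cvx, hg'cvx, heq'⟩ :=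
      ih (S.erase s) h' hcard' hcont' hsub' hloc'
    set p : ℤ := max d 0 with hpp
    set q : ℤ := max (-d) 0 with hqq
    have hdpq : p - q = d := by
      rcases le_total 0 d with hd0 | hd0
      · rw [hpp, hqq, max_eq_left hd0, max_eq_right (by omega : -d ≤ 0)]; ring
      · rw [hpp, hqq, max_eq_right hd0, max_eq_left (by omega : 0 ≤ -d)]; ring
    have hp0 : (0 : ℝ) ≤ (p : ℝ) := by exact_mod_cast le_max_right d 0
    have hq0 : (0 : ℝ) ≤ (q : ℝ) := by exact_mod_cast le_max_right (-d) 0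
    refine ⟨fun y => f' y + (p : ℝ) * max (y - s) 0,
            fun y => g' y + (q : ℝ) * max (y - s) 0,
            pai_add_relu a b f' s hsab p hf'pai,
            pai_add_relu a b g' s hsab q hg'pai, ?_, ?_, ?_⟩
    · exact hf'cvx.add (convexOn_smul_relu _ (convex_Ioo a b) _ s hp0)
    · exact hg'cvx.add (convexOn_smul_relu _ (convex_Ioo a b) _ s hq0)
    · intro x hx
      have e1 := heq' x hx
      have e2 : h' x = h x - (d : ℝ) * max (x - s) 0 := rfl
      rw [e2] at e1
      have e3 : (p : ℝ) - (q : ℝ) = (d : ℝ) := by exact_mod_cast hdpq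
      show h x = (f' x + (p : ℝ) * max (x - s) 0) - (g' x + (q : ℝ) * max (x - s) 0)
      linear_combination e1 - (max (x - s) 0) * e3

/-- every continuous piecewise affine function with integral slopes on a bounded
open interval is the difference of two convex continuous piecewise affine functions with
integral slopes. -/
theorem statement2 (a b : ℝ) (h : ℝ → ℝ) (hh : PiecewiseAffineInt a b h) :
    ∃ f g : ℝ → ℝ,
      PiecewiseAffineInt a b f ∧ PiecewiseAffineInt a b g ∧
      ConvexOn ℝ (Set.Ioo a b) f ∧ ConvexOn ℝ (Set.Ioo a b) g ∧
      ∀ x ∈ Set.Ioo a b, h x = f x - g x := by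
  obtain ⟨hcont, S, hsub, hloc⟩ := hh
  exact main_ind a b S.card S h rfl hcont hsub hloc
end

section
/- Let p be a prime and let f : ℝ_{>0} → ℝ be a continuous function satisfying f(pλ) = f(λ) for all λ > 0, which is piecewise affine with slopes in H_p = ℤ[1/p]: there is a finite subset S ⊂ [1,p) such that f is locally affine with derivative in H_p at every point of ℝ_{>0} whose class modulo multiplication by p^ℤ is not in S, and at every λ the one-sided derivatives f'₊(λ) and f'₋(λ) exist and lie in H_p. Then the sum over λ ∈ [1,p) of the orders Order(f)(λ) = λ·(f'₊(λ) − f'₋(λ)) is zero: ∑_{λ ∈ [1,p)} λ·(f'₊(λ) − f'₋(λ)) = 0. -/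
/-- The additive subgroup `H_p = ℤ[1/p] ⊆ ℝ` of rational numbers whose denominator is a
power of `p`. -/
def Hp (p : ℕ) : AddSubgroup ℝ where
  carrier := {x : ℝ | ∃ (a : ℤ) (n : ℕ), x * (p : ℝ) ^ n = (a : ℝ)}
  zero_mem' := ⟨0, 0, by simp⟩
  add_mem' := by
    rintro x y ⟨a, n, ha⟩ ⟨b, m, hb⟩
    refine ⟨a * (p : ℤ) ^ m + b * (p : ℤ) ^ n, n + m, ?_⟩
    push_cast
    rw [pow_add]
    linear_combination (p : ℝ) ^ m * ha + (p : ℝ) ^ n * hb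
  neg_mem' := by
    rintro x ⟨a, n, ha⟩
    exact ⟨-a, n, by push_cast; linear_combination -ha⟩

lemma oneMemHp (p : ℕ) : (1 : ℝ) ∈ Hp p := ⟨1, 0, by simp⟩

lemma intMemHp (p : ℕ) (n : ℤ) : (n : ℝ) ∈ Hp p := ⟨n, 0, by simp⟩

/-- The subgroup `λ·H_p = {λq : q ∈ H_p}` of `ℝ`. -/
def scaledHp (p : ℕ) (lam : ℝ) : AddSubgroup ℝ where
  carrier := {x : ℝ | ∃ q ∈ Hp p, x = lam * q}
  zero_mem' := ⟨0, (Hp p).zero_mem, by ring⟩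
  add_mem' := by
    rintro x y ⟨q, hq, rfl⟩ ⟨r, hr, rfl⟩
    exact ⟨q + r, add_mem hq hr, by ring⟩
  neg_mem' := by
    rintro x ⟨q, hq, rfl⟩
    exact ⟨-q, neg_mem hq, by ring⟩




open Set Topology Filter

private lemma hasDerivAt_affine (a c x : ℝ) : HasDerivAt (fun y => a * y + c) a x := by
  simpa using ((hasDerivAt_id x).const_mul a).add_const c

/-- A continuous function on `[u,v]` which is locally affine on `(u,v)` is affine on `[u,v]`. -/
private lemma affine_of_locally_affine {f : ℝ → ℝ} {u v : ℝ} (huv : u < v)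
    (hcont : ContinuousOn f (Set.Icc u v))
    (hloc : ∀ x ∈ Set.Ioo u v, ∃ ε > (0:ℝ), ∃ a c : ℝ,
      ∀ y ∈ Set.Ioo (x - ε) (x + ε), f y = a * y + c) :
    ∃ a c : ℝ, ∀ x ∈ Set.Icc u v, f x = a * x + c := by
  have key : ∀ x ∈ Set.Ioo u v, ∃ ε > (0:ℝ), HasDerivAt f (deriv f x) x ∧
      ∀ y ∈ Set.Ioo (x - ε) (x + ε), deriv f y = deriv f x := by
    intro x hx
    obtain ⟨ε, hε, a, c, hac⟩ := hloc x hx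
    have hd : ∀ y ∈ Set.Ioo (x - ε) (x + ε), HasDerivAt f a y := by
      intro y hy
      exact (hasDerivAt_affine a c y).congr_of_eventuallyEq
        (Filter.eventually_of_mem (isOpen_Ioo.mem_nhds hy) hac)
    have hxmem : x ∈ Set.Ioo (x - ε) (x + ε) := ⟨by linarith, by linarith⟩
    have hdx : deriv f x = a := (hd x hxmem).deriv
    refine ⟨ε, hε, ?_, ?_⟩
    · rw [hdx]; exact hd x hxmem
    · intro y hy; rw [(hd y hy).deriv, hdx]
  have hconst : ∀ x ∈ Set.Ioo u v, ∀ y ∈ Set.Ioo u v, deriv f x = deriv f y := by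
    haveI : PreconnectedSpace (Set.Ioo u v) := Subtype.preconnectedSpace isPreconnected_Ioo
    have hlc : IsLocallyConstant (fun z : Set.Ioo u v => deriv f z.val) := by
      rw [IsLocallyConstant.iff_exists_open]
      rintro ⟨x, hx⟩
      obtain ⟨ε, hε, _, hcst⟩ := key x hx
      refine ⟨Subtype.val ⁻¹' Set.Ioo (x - ε) (x + ε),
        isOpen_Ioo.preimage continuous_subtype_val, ⟨by linarith, by linarith⟩, ?_⟩
      rintro ⟨y, hy⟩ hyU
      exact hcst y hyU
    intro x hx y hy
    exact hlc.apply_eq_of_preconnectedSpace ⟨x, hx⟩ ⟨y, hy⟩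
  have hx₀ : (u + v) / 2 ∈ Set.Ioo u v := ⟨by linarith, by linarith⟩
  set x₀ : ℝ := (u + v) / 2
  set a : ℝ := deriv f x₀ with ha
  have hda : ∀ x ∈ Set.Ioo u v, HasDerivAt f a x := by
    intro x hx
    obtain ⟨ε, hε, hdx, -⟩ := key x hx
    rw [show a = deriv f x from hconst x₀ hx₀ x hx]
    exact hdx
  have hstep : ∀ x y : ℝ, x ∈ Set.Ioo u v → y ∈ Set.Ioo u v → x ≤ y →
      f y - a * y = f x - a * x := by
    intro x y hx hy hxy
    have hIcc : Set.Icc x y ⊆ Set.Ioo u v := fun z hz =>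
      ⟨lt_of_lt_of_le hx.1 hz.1, lt_of_le_of_lt hz.2 hy.2⟩
    have hgc : ContinuousOn (fun z => f z - a * z) (Set.Icc x y) := by
      refine ContinuousOn.sub (hcont.mono ?_) ((continuous_const.mul continuous_id).continuousOn)
      exact Set.Subset.trans hIcc Set.Ioo_subset_Icc_self
    have hder : ∀ z ∈ Set.Ico x y, HasDerivWithinAt (fun z => f z - a * z) 0 (Set.Ici z) z := by
      intro z hz
      have hz' : z ∈ Set.Ioo u v := hIcc ⟨hz.1, hz.2.le⟩
      have h0 : HasDerivAt (fun z => f z - a * z) (a - a * 1) z :=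
        (hda z hz').sub ((hasDerivAt_id z).const_mul a)
      simpa using h0.hasDerivWithinAt
    exact constant_of_has_deriv_right_zero hgc hder y ⟨hxy, le_refl y⟩
  set c : ℝ := f x₀ - a * x₀ with hc
  have hIoo : ∀ x ∈ Set.Ioo u v, f x = a * x + c := by
    intro x hx
    rcases le_total x x₀ with h | h
    · have := hstep x x₀ hx hx₀ h
      rw [hc]; linarith
    · have := hstep x₀ x hx₀ hx h
      rw [hc]; linarith
  refine ⟨a, c, ?_⟩
  have hend : ∀ w : ℝ, w ∈ Set.Icc u v → w ∈ closure (Set.Ioo u v) → f w = a * w + c := by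
    intro w hw hwc
    haveI hnb : (𝓝[Set.Ioo u v] w).NeBot := mem_closure_iff_nhdsWithin_neBot.mp hwc
    have h1 : Filter.Tendsto f (𝓝[Set.Ioo u v] w) (𝓝 (f w)) :=
      (hcont w hw).mono Set.Ioo_subset_Icc_self
    have h1' : Filter.Tendsto (fun x => a * x + c) (𝓝[Set.Ioo u v] w) (𝓝 (f w)) := by
      refine h1.congr' ?_
      exact Filter.eventually_of_mem self_mem_nhdsWithin (fun y hy => (hIoo y hy))
    have h2 : Filter.Tendsto (fun x => a * x + c) (𝓝[Set.Ioo u v] w) (𝓝 (a * w + c)) :=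
      ((continuous_const.mul continuous_id).add continuous_const).continuousAt.continuousWithinAt
    exact tendsto_nhds_unique h1' h2
  intro x hx
  rcases eq_or_lt_of_le hx.1 with h | h
  · exact hend x hx (by rw [closure_Ioo huv.ne]; exact hx)
  rcases eq_or_lt_of_le hx.2 with h' | h'
  · exact hend x hx (by rw [closure_Ioo huv.ne]; exact hx)
  · exact hIoo x ⟨h, h'⟩


/-- for a global rational function on the periodic orbit `C_p` — a continuous
`f : ℝ_{>0} → ℝ` with `f(pλ) = f(λ)`, piecewise affine with slopes in `H_p = ℤ[1/p]` (locally
affine with slope in `H_p` off finitely many `p^ℤ`-orbits of points of `[1,p)`, with one-sided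
derivatives everywhere in `H_p`) — the sum over `λ ∈ [1,p)` of the orders
`Order(f)(λ) = λ·(f'₊(λ) - f'₋(λ))` vanishes. -/
theorem statement5 (p : ℕ) (hp : p.Prime) (f dplus dminus : ℝ → ℝ)
    (hcont : ContinuousOn f (Set.Ioi 0))
    (hper : ∀ lam : ℝ, 0 < lam → f ((p : ℝ) * lam) = f lam)
    (S : Finset ℝ) (hS : ↑S ⊆ Set.Ico (1 : ℝ) (p : ℝ))
    (haff : ∀ lam : ℝ, 0 < lam → (∀ s ∈ S, ∀ n : ℤ, lam ≠ s * (p : ℝ) ^ n) →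
      ∃ ε > (0 : ℝ), ∃ a c : ℝ, a ∈ Hp p ∧
        ∀ y ∈ Set.Ioo (lam - ε) (lam + ε), f y = a * y + c)
    (hdp : ∀ lam : ℝ, 0 < lam →
      HasDerivWithinAt f (dplus lam) (Set.Ici lam) lam ∧ dplus lam ∈ Hp p)
    (hdm : ∀ lam : ℝ, 0 < lam →
      HasDerivWithinAt f (dminus lam) (Set.Iic lam) lam ∧ dminus lam ∈ Hp p) :
    ∑ᶠ lam ∈ Set.Ico (1 : ℝ) (p : ℝ), lam * (dplus lam - dminus lam) = 0 := by
  classical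
  set P : ℝ := (p : ℝ) with hPdef
  have hP1 : (1:ℝ) < P := by rw [hPdef]; exact_mod_cast hp.one_lt
  have hP0 : (0:ℝ) < P := lt_trans one_pos hP1
  set g : ℝ → ℝ := fun lam => lam * (dplus lam - dminus lam) with hgdef
  -- one-sided derivatives are unique
  have dplus_eq : ∀ x a : ℝ, 0 < x → HasDerivWithinAt f a (Set.Ici x) x → dplus x = a := by
    intro x a hx h
    exact (uniqueDiffOn_Ici x x Set.self_mem_Ici).eq_deriv _ (hdp x hx).1 h
  have dminus_eq : ∀ x a : ℝ, 0 < x → HasDerivWithinAt f a (Set.Iic x) x → dminus x = a := by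
    intro x a hx h
    exact (uniqueDiffOn_Iic x x Set.self_mem_Iic).eq_deriv _ (hdm x hx).1 h
  -- points of [1,P) not in S are not on the orbit of S
  have hgood : ∀ x : ℝ, x ∈ Set.Ico (1:ℝ) P → x ∉ S → ∀ s ∈ S, ∀ n : ℤ, x ≠ s * P ^ n := by
    intro x hx hxS s hs n heq
    have hsI : s ∈ Set.Ico (1:ℝ) P := hS hs
    have hPn : (0:ℝ) < P ^ n := zpow_pos hP0 n
    have hn0 : n = 0 := by
      by_contra hn
      rcases lt_or_gt_of_ne hn with hneg | hpos
      · have h1 : x < P ^ (n + 1) := by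
          rw [zpow_add_one₀ (ne_of_gt hP0)]
          calc x = s * P ^ n := heq
          _ < P * P ^ n := by nlinarith [hsI.2, hPn]
          _ = P ^ n * P := mul_comm _ _
        have h2 : P ^ (n + 1) ≤ P ^ (0:ℤ) := zpow_le_zpow_right₀ hP1.le (by omega)
        rw [zpow_zero] at h2
        linarith [hx.1]
      · have h1 : P ^ (1:ℤ) ≤ P ^ n := zpow_le_zpow_right₀ hP1.le (by omega)
        rw [zpow_one] at h1
        have : P ≤ x := by
          rw [heq]
          nlinarith [hsI.1, hPn]
        linarith [hx.2]
    rw [hn0, zpow_zero, mul_one] at heq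
    exact hxS (heq ▸ hs)
  -- order vanishes at points of [1,P) off S
  have hgzero : ∀ x ∈ Set.Ico (1:ℝ) P, x ∉ S → g x = 0 := by
    intro x hx hxS
    have hx0 : (0:ℝ) < x := lt_of_lt_of_le one_pos hx.1
    obtain ⟨ε, hε, a, c, -, hac⟩ := haff x hx0 (hgood x hx hxS)
    have hda : HasDerivAt f a x := (hasDerivAt_affine a c x).congr_of_eventuallyEq
      (Filter.eventually_of_mem (isOpen_Ioo.mem_nhds ⟨by linarith, by linarith⟩) hac)
    have h1 := dplus_eq x a hx0 hda.hasDerivWithinAt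
    have h2 := dminus_eq x a hx0 hda.hasDerivWithinAt
    simp [hgdef, h1, h2]
  -- the finsum reduces to a finite sum over T = insert 1 S
  set T : Finset ℝ := insert 1 S with hTdef
  have hT : ↑T ⊆ Set.Ico (1:ℝ) P := by
    intro x hx
    rcases Finset.mem_insert.mp hx with h | h
    · subst h; exact ⟨le_refl 1, hP1⟩
    · exact hS h
  have hsum : ∑ᶠ lam ∈ Set.Ico (1:ℝ) P, g lam = ∑ lam ∈ T, g lam := by
    apply finsum_mem_eq_sum_of_inter_support_eq
    ext x
    constructor
    · rintro ⟨hx1, hx2⟩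
      refine ⟨?_, hx2⟩
      by_cases hxS : x ∈ S
      · exact Finset.mem_coe.mpr (Finset.mem_insert_of_mem hxS)
      · exact absurd (hgzero x hx1 hxS) hx2
    · rintro ⟨hx1, hx2⟩
      exact ⟨hT hx1, hx2⟩
  rw [hsum]
  -- the sorted list of points of T
  set l : List ℝ := T.sort (· ≤ ·) with hldef
  set k : ℕ := l.length with hkdef
  have hmeml : ∀ x : ℝ, x ∈ l ↔ x ∈ T := fun x => Finset.mem_sort _
  have hsl : l.Pairwise (· < ·) := ((T.pairwise_sort _).and (T.sort_nodup _)).imp fun h => lt_of_le_of_ne h.1 h.2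
  have hnd : l.Nodup := T.sort_nodup _
  have h1T : (1:ℝ) ∈ T := Finset.mem_insert_self _ _
  have h1l : (1:ℝ) ∈ l := (hmeml 1).mpr h1T
  have hk0 : 0 < k := List.length_pos_iff.mpr (List.ne_nil_of_mem h1l)
  obtain ⟨m, hm⟩ : ∃ m, k = m + 1 := ⟨k - 1, (Nat.succ_pred_eq_of_pos hk0).symm⟩
  set pts : ℕ → ℝ := fun i => if h : i < k then l.get ⟨i, h⟩ else P with hptsdef
  have hptsval : ∀ i (h : i < k), pts i = l.get ⟨i, h⟩ := by
    intro i h; simp [hptsdef, dif_pos h]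
  have hptsk : ∀ i, k ≤ i → pts i = P := by
    intro i h; simp [hptsdef, dif_neg (not_lt.mpr h)]
  have hmemT : ∀ i, i < k → pts i ∈ T := by
    intro i h
    rw [hptsval i h]
    exact (hmeml _).mp (List.get_mem _ ⟨_, h⟩)
  have hsm : ∀ i j (hi : i < k) (hj : j < k), i < j → pts i < pts j := by
    intro i j hi hj hij
    rw [hptsval i hi, hptsval j hj]
    exact List.pairwise_iff_get.mp hsl ⟨i, hi⟩ ⟨j, hj⟩ hij
  have hpts_ge_1 : ∀ i, i < k → 1 ≤ pts i := fun i h => (hT (hmemT i h)).1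
  have hpts_lt_P : ∀ i, i < k → pts i < P := fun i h => (hT (hmemT i h)).2
  have hpts_le_P : ∀ i, i ≤ k → pts i ≤ P := by
    intro i h
    rcases lt_or_eq_of_le h with h' | h'
    · exact (hpts_lt_P i h').le
    · exact le_of_eq (hptsk i h'.ge)
  have hpts0 : pts 0 = 1 := by
    obtain ⟨j, hj⟩ := List.mem_iff_get.mp h1l
    have h01 : pts 0 ≤ 1 := by
      rcases Nat.eq_zero_or_pos j.val with h | h
      · have hj0 : j = (⟨0, hk0⟩ : Fin l.length) := Fin.ext (by simpa using h)
        rw [hptsval 0 hk0, ← hj, hj0]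
      · have := hsm 0 j.val hk0 j.isLt h
        rw [hptsval j.val j.isLt] at this
        simp only [Fin.eta] at this
        rw [hj] at this
        exact this.le
    exact le_antisymm h01 (hpts_ge_1 0 hk0)
  have hstep : ∀ i, i < k → pts i < pts (i + 1) := by
    intro i hi
    rcases lt_or_ge (i+1) k with h | h
    · exact hsm i (i+1) hi h (Nat.lt_succ_self i)
    · rw [hptsk (i+1) h]; exact hpts_lt_P i hi
  have hgap : ∀ i, i < k → ∀ t ∈ T, ¬(pts i < t ∧ t < pts (i + 1)) := by
    intro i hi t ht ⟨hlt, hgt⟩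
    obtain ⟨j, hj⟩ := List.mem_iff_get.mp ((hmeml t).mpr ht)
    rcases lt_or_ge i j.val with h | h
    · rcases lt_or_ge (i+1) k with h' | h'
      · have : pts (i+1) ≤ t := by
          rcases eq_or_lt_of_le (Nat.succ_le_of_lt h) with h'' | h''
          · rw [hptsval (i+1) h', ← hj]
            rw [show (⟨i+1, h'⟩ : Fin l.length) = j from Fin.val_injective (by simpa using h'')]
          · exact le_of_lt (by rw [← hj, ← hptsval j.val j.isLt]
                               exact hsm (i+1) j.val h' j.isLt h'')
        linarith
      · have : j.val < i + 1 := lt_of_lt_of_le j.isLt h'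
        omega
    · have : t ≤ pts i := by
        rcases eq_or_lt_of_le h with h'' | h''
        · rw [hptsval i hi, ← hj]
          rw [show (⟨i, hi⟩ : Fin l.length) = j from Fin.val_injective (by simpa using h''.symm)]
        · exact le_of_lt (by rw [← hj, ← hptsval j.val j.isLt]
                             exact hsm j.val i j.isLt hi h'')
      linarith
  -- affine structure on each gap
  have Hi : ∀ i, i < k → ∃ a c : ℝ, ∀ x ∈ Set.Icc (pts i) (pts (i+1)), f x = a * x + c := by
    intro i hi
    have h1i := hpts_ge_1 i hi
    apply affine_of_locally_affine (hstep i hi)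
    · apply hcont.mono
      intro x hx
      have : (1:ℝ) ≤ x := le_trans h1i hx.1
      exact lt_of_lt_of_le one_pos this
    · intro x hx
      have hx1 : (1:ℝ) ≤ x := le_of_lt (lt_of_le_of_lt h1i hx.1)
      have hxP : x < P := lt_of_lt_of_le hx.2 (hpts_le_P (i+1) (Nat.succ_le_of_lt hi))
      have hxS : x ∉ S := by
        intro hmemS
        exact hgap i hi x (Finset.mem_insert_of_mem hmemS) ⟨hx.1, hx.2⟩
      obtain ⟨ε, hε, a, c, -, hac⟩ := haff x (by linarith) (hgood x ⟨hx1, hxP⟩ hxS)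
      exact ⟨ε, hε, a, c, hac⟩
  choose! A C hAC using Hi
  -- right derivatives at the left endpoints of gaps
  have hdp_eq : ∀ i, i < k → dplus (pts i) = A i := by
    intro i hi
    have hiE := hAC i hi
    have hu1 : 1 ≤ pts i := hpts_ge_1 i hi
    have hder : HasDerivWithinAt f (A i) (Set.Ici (pts i)) (pts i) := by
      refine HasDerivWithinAt.congr_of_eventuallyEq
        ((hasDerivAt_affine (A i) (C i) (pts i)).hasDerivWithinAt) ?_
        (hiE _ ⟨le_refl _, (hstep i hi).le⟩)
      exact Filter.eventually_of_mem
        (Icc_mem_nhdsGE_of_mem ⟨le_refl _, hstep i hi⟩) hiE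
    exact dplus_eq _ _ (by linarith) hder
  -- left derivatives at the right endpoints of gaps
  have hdm_eq : ∀ i, i < k → dminus (pts (i+1)) = A i := by
    intro i hi
    have hiE := hAC i hi
    have hu1 : 1 ≤ pts i := hpts_ge_1 i hi
    have hder : HasDerivWithinAt f (A i) (Set.Iic (pts (i+1))) (pts (i+1)) := by
      refine HasDerivWithinAt.congr_of_eventuallyEq
        ((hasDerivAt_affine (A i) (C i) (pts (i+1))).hasDerivWithinAt) ?_
        (hiE _ ⟨(hstep i hi).le, le_refl _⟩)
      exact Filter.eventually_of_mem
        (Icc_mem_nhdsLE_of_mem ⟨hstep i hi, le_refl _⟩) hiE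
    exact dminus_eq _ _ (by linarith [hstep i hi]) hder
  -- the left derivative at 1, via periodicity
  have hmk : m < k := by omega
  have hptsm1 : pts (m+1) = P := hptsk (m+1) (by omega)
  have hdm1 : dminus 1 = P * A m := by
    have hE := hAC m hmk
    have h1m : 1 ≤ pts m := hpts_ge_1 m hmk
    have hmP : pts m < P := hpts_lt_P m hmk
    have hlast : ∀ x ∈ Set.Ioc (pts m / P) 1, f x = A m * P * x + C m := by
      intro x hx
      have hx0 : 0 < x := lt_trans (div_pos (by linarith) hP0) hx.1
      have hPx : P * x ∈ Set.Icc (pts m) (pts (m+1)) := by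
        rw [hptsm1]
        constructor
        · have hdiv := hx.1
          rw [div_lt_iff₀ hP0] at hdiv
          nlinarith [hdiv]
        · nlinarith [hx.2]
      calc f x = f (P * x) := (hper x hx0).symm
      _ = A m * (P * x) + C m := hE (P * x) hPx
      _ = A m * P * x + C m := by ring
    have hder : HasDerivWithinAt f (A m * P) (Set.Iic 1) 1 := by
      refine HasDerivWithinAt.congr_of_eventuallyEq
        ((hasDerivAt_affine (A m * P) (C m) 1).hasDerivWithinAt) ?_
        (hlast 1 ⟨by rw [div_lt_one hP0]; exact hmP, le_refl 1⟩)
      exact Filter.eventually_of_mem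
        (Ioc_mem_nhdsLE (by rw [div_lt_one hP0]; exact hmP)) hlast
    rw [dminus_eq 1 _ one_pos hder]
    ring
  -- the junction identities
  have hjunc : ∀ i, i + 1 < k → A i * pts (i+1) + C i = A (i+1) * pts (i+1) + C (i+1) := by
    intro i hi
    have hik : i < k := by omega
    have h1 := hAC i hik (pts (i+1)) ⟨(hstep i hik).le, le_refl _⟩
    have h2 := hAC (i+1) hi (pts (i+1)) ⟨le_refl _, (hstep (i+1) hi).le⟩
    rw [← h1, ← h2]
  have hwrap : A m * P + C m = A 0 * 1 + C 0 := by
    have h1 := hAC m hmk (pts (m+1)) ⟨(hstep m hmk).le, le_refl _⟩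
    rw [hptsm1] at h1
    have h2 := hAC 0 hk0 (pts 0) ⟨le_refl _, (hstep 0 hk0).le⟩
    rw [hpts0] at h2
    have hfP : f P = f 1 := by
      have := hper 1 one_pos
      rwa [mul_one] at this
    rw [← h1, ← h2, hfP]
  -- rewrite the sum over T as a sum over indices
  have hTsum : ∑ lam ∈ T, g lam = ∑ i ∈ Finset.range k, g (pts i) := by
    refine Finset.sum_nbij' (i := fun t => l.idxOf t) (j := fun i => pts i)
      ?_ ?_ ?_ ?_ ?_
    · intro t ht
      exact Finset.mem_range.mpr (List.idxOf_lt_length_iff.mpr ((hmeml t).mpr ht))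
    · intro i hi
      exact hmemT i (Finset.mem_range.mp hi)
    · intro t ht
      have hlt : l.idxOf t < k := List.idxOf_lt_length_iff.mpr ((hmeml t).mpr ht)
      show pts (List.idxOf t l) = t
      rw [hptsval _ hlt]
      exact List.idxOf_get hlt
    · intro i hi
      have hik := Finset.mem_range.mp hi
      show List.idxOf (pts i) l = i
      rw [hptsval i hik]
      exact List.get_idxOf hnd ⟨i, hik⟩
    · intro t ht
      have hlt : l.idxOf t < k := List.idxOf_lt_length_iff.mpr ((hmeml t).mpr ht)
      show g t = g (pts (List.idxOf t l))
      rw [hptsval _ hlt, List.idxOf_get hlt]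
  rw [hTsum, hm, Finset.sum_range_succ']
  -- compute each term
  have hterm : ∀ i ∈ Finset.range m, g (pts (i+1)) = C i - C (i+1) := by
    intro i hi
    have him := Finset.mem_range.mp hi
    have hik : i + 1 < k := by omega
    have h1 := hdp_eq (i+1) hik
    have h2 := hdm_eq i (by omega)
    have h3 := hjunc i hik
    simp only [hgdef]
    rw [h1, h2]
    have hne : pts (i+1) * (A (i+1) - A i) = C i - C (i+1) := by linarith
    exact hne
  have hterm0 : g (pts 0) = C m - C 0 := by
    have h1 := hdp_eq 0 hk0
    simp only [hgdef]
    rw [h1, hpts0, hdm1]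
    linarith [hwrap]
  rw [Finset.sum_congr rfl hterm, hterm0, Finset.sum_range_sub']
  ring
end

section
/- Let p be a prime and let f : ℝ_{>0} → ℝ be a continuous function satisfying f(pλ) = f(λ) for all λ > 0, which is piecewise affine with slopes in H_p = ℤ[1/p]: f is locally affine off finitely many p^ℤ-orbits of points and its one-sided derivatives f'₊, f'₋ exist everywhere and belong to H_p. Then ∑_{λ ∈ [1,p)} (f'₊(λ) − f'₋(λ)) belongs to the subgroup (p−1)·H_p of H_p; that is, the invariant χ of the principal divisor of f vanishes in H_p/(p−1)H_p. -/
open Set Filter Topology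

private lemma st6_line_eq {m₁ c₁ m₂ c₂ α β : ℝ} (hαβ : α < β)
    (h : ∀ y ∈ Set.Ioo α β, m₁ * y + c₁ = m₂ * y + c₂) : m₁ = m₂ ∧ c₁ = c₂ := by
  have h1 := h ((3*α + β)/4) ⟨by linarith, by linarith⟩
  have h2 := h ((α + 3*β)/4) ⟨by linarith, by linarith⟩
  have hm : m₁ = m₂ := by
    rcases mul_eq_zero.1 (show (m₁ - m₂) * ((α - β)/2) = 0 by linarith) with h' | h'
    · linarith
    · linarith
  subst hm
  exact ⟨rfl, by linarith⟩

private lemma st6_affine_on {f : ℝ → ℝ} (hcont : ContinuousOn f (Set.Ioi 0))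
    {u v : ℝ} (hu : 0 < u) (huv : u < v)
    (h : ∀ x ∈ Set.Ioo u v, ∃ ε > (0:ℝ), ∃ m c : ℝ,
      ∀ y ∈ Set.Ioo (x - ε) (x + ε), f y = m * y + c) :
    ∃ m c : ℝ, ∀ y ∈ Set.Icc u v, f y = m * y + c := by
  classical
  have hx₀ : (u + v) / 2 ∈ Set.Ioo u v := ⟨by linarith, by linarith⟩
  obtain ⟨ε₀, hε₀, m, c, hmc⟩ := h _ hx₀
  set U : Set ℝ := {y | ∃ δ > (0:ℝ), ∀ z ∈ Set.Ioo (y - δ) (y + δ), f z = m * z + c} with hU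
  set V : Set ℝ := {y | ∃ δ > (0:ℝ), ∃ m' c' : ℝ, ¬(m' = m ∧ c' = c) ∧
      ∀ z ∈ Set.Ioo (y - δ) (y + δ), f z = m' * z + c'} with hV
  have hUopen : IsOpen U := by
    rw [Metric.isOpen_iff]
    rintro y ⟨δ, hδ, hy⟩
    refine ⟨δ/2, by linarith, fun y' hy' => ?_⟩
    rw [Metric.mem_ball, Real.dist_eq, abs_lt] at hy'
    exact ⟨δ/2, by linarith, fun z hz => hy z ⟨by linarith [hz.1, hy'.1], by linarith [hz.2, hy'.2]⟩⟩
  have hVopen : IsOpen V := by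
    rw [Metric.isOpen_iff]
    rintro y ⟨δ, hδ, m', c', hne, hy⟩
    refine ⟨δ/2, by linarith, fun y' hy' => ?_⟩
    rw [Metric.mem_ball, Real.dist_eq, abs_lt] at hy'
    exact ⟨δ/2, by linarith, m', c', hne,
      fun z hz => hy z ⟨by linarith [hz.1, hy'.1], by linarith [hz.2, hy'.2]⟩⟩
  have hcover : Set.Ioo u v ⊆ U ∪ V := by
    intro x hx
    obtain ⟨ε, hε, m', c', hm'⟩ := h x hx
    by_cases hc : m' = m ∧ c' = c
    · exact Or.inl ⟨ε, hε, fun z hz => by rw [hm' z hz, hc.1, hc.2]⟩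
    · exact Or.inr ⟨ε, hε, m', c', hc, hm'⟩
  have hdisj : ∀ y : ℝ, y ∉ U ∩ V := by
    rintro y ⟨⟨δ₁, hδ₁, h₁⟩, ⟨δ₂, hδ₂, m', c', hne, h₂⟩⟩
    apply hne
    have hlt : y - min δ₁ δ₂ < y + min δ₁ δ₂ := by
      have := lt_min hδ₁ hδ₂; linarith
    refine st6_line_eq hlt fun z hz => ?_
    have hz₁ : z ∈ Set.Ioo (y - δ₁) (y + δ₁) :=
      ⟨by linarith [hz.1, min_le_left δ₁ δ₂], by linarith [hz.2, min_le_left δ₁ δ₂]⟩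
    have hz₂ : z ∈ Set.Ioo (y - δ₂) (y + δ₂) :=
      ⟨by linarith [hz.1, min_le_right δ₁ δ₂], by linarith [hz.2, min_le_right δ₁ δ₂]⟩
    rw [← h₂ z hz₂, h₁ z hz₁]
  have hsub : Set.Ioo u v ⊆ U := by
    by_contra hns
    rw [Set.not_subset] at hns
    obtain ⟨x, hx, hxU⟩ := hns
    obtain ⟨z, -, hz⟩ := isPreconnected_Ioo U V hUopen hVopen hcover
      ⟨_, hx₀, ⟨ε₀, hε₀, hmc⟩⟩ ⟨x, hx, (hcover hx).resolve_left hxU⟩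
    exact hdisj z hz
  have hIoo : ∀ y ∈ Set.Ioo u v, f y = m * y + c := by
    intro y hy
    obtain ⟨δ, hδ, hyd⟩ := hsub hy
    exact hyd y ⟨by linarith, by linarith⟩
  have hlinecont : Continuous (fun y : ℝ => m * y + c) :=
    (continuous_const.mul continuous_id).add continuous_const
  have hbu : f u = m * u + c := by
    have hmem : Set.Ioo u v ∈ 𝓝[>] u := Ioo_mem_nhdsGT_of_mem ⟨le_refl u, huv⟩
    have t1 : Filter.Tendsto f (𝓝[>] u) (𝓝 (f u)) :=
      (hcont u hu).mono (Set.Ioi_subset_Ioi hu.le)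
    have t2 : Filter.Tendsto f (𝓝[>] u) (𝓝 (m * u + c)) := by
      refine (hlinecont.tendsto u).mono_left nhdsWithin_le_nhds |>.congr' ?_
      filter_upwards [hmem] with z hz using (hIoo z hz).symm
    exact tendsto_nhds_unique t1 t2
  have hbv : f v = m * v + c := by
    have hmem : Set.Ioo u v ∈ 𝓝[<] v := Ioo_mem_nhdsLT_of_mem ⟨huv, le_refl v⟩
    have t1 : Filter.Tendsto f (𝓝[<] v) (𝓝 (f v)) :=
      (hcont v (hu.trans huv)).mono_of_mem_nhdsWithin
        (mem_nhdsWithin_of_mem_nhds (Ioi_mem_nhds (hu.trans huv)))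
    have t2 : Filter.Tendsto f (𝓝[<] v) (𝓝 (m * v + c)) := by
      refine (hlinecont.tendsto v).mono_left nhdsWithin_le_nhds |>.congr' ?_
      filter_upwards [hmem] with z hz using (hIoo z hz).symm
    exact tendsto_nhds_unique t1 t2
  refine ⟨m, c, fun y hy => ?_⟩
  rcases eq_or_lt_of_le hy.1 with h1 | h1
  · rw [← h1]; exact hbu
  rcases eq_or_lt_of_le hy.2 with h2 | h2
  · rw [h2]; exact hbv
  · exact hIoo y ⟨h1, h2⟩

private lemma st6_dplus_eq {f : ℝ → ℝ} {u v m c d : ℝ} (huv : u < v)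
    (hf : ∀ y ∈ Set.Icc u v, f y = m * y + c)
    (hd : HasDerivWithinAt f d (Set.Ici u) u) : d = m := by
  have hline : HasDerivWithinAt (fun y : ℝ => m * y + c) m (Set.Ici u) u := by
    simpa using (((hasDerivAt_id' u).const_mul m).add_const c).hasDerivWithinAt
  have hev : f =ᶠ[𝓝[Set.Ici u] u] fun y : ℝ => m * y + c := by
    filter_upwards [inter_mem self_mem_nhdsWithin
      (mem_nhdsWithin_of_mem_nhds (Iio_mem_nhds huv))] with z hz
    exact hf z ⟨hz.1, hz.2.le⟩
  have h2 : HasDerivWithinAt f m (Set.Ici u) u :=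
    hline.congr_of_eventuallyEq hev (hf u ⟨le_refl u, huv.le⟩)
  rw [← hd.derivWithin (uniqueDiffOn_Ici u u Set.self_mem_Ici),
    h2.derivWithin (uniqueDiffOn_Ici u u Set.self_mem_Ici)]

private lemma st6_dminus_eq {f : ℝ → ℝ} {u v m c d : ℝ} (huv : u < v)
    (hf : ∀ y ∈ Set.Icc u v, f y = m * y + c)
    (hd : HasDerivWithinAt f d (Set.Iic v) v) : d = m := by
  have hline : HasDerivWithinAt (fun y : ℝ => m * y + c) m (Set.Iic v) v := by
    simpa using (((hasDerivAt_id' v).const_mul m).add_const c).hasDerivWithinAt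
  have hev : f =ᶠ[𝓝[Set.Iic v] v] fun y : ℝ => m * y + c := by
    filter_upwards [inter_mem self_mem_nhdsWithin
      (mem_nhdsWithin_of_mem_nhds (Ioi_mem_nhds huv))] with z hz
    exact hf z ⟨hz.2.le, hz.1⟩
  have h2 : HasDerivWithinAt f m (Set.Iic v) v :=
    hline.congr_of_eventuallyEq hev (hf v ⟨huv.le, le_refl v⟩)
  rw [← hd.derivWithin (uniqueDiffOn_Iic v v Set.self_mem_Iic),
    h2.derivWithin (uniqueDiffOn_Iic v v Set.self_mem_Iic)]

private lemma st6_telescope {f dplus dminus : ℝ → ℝ} (hcont : ContinuousOn f (Set.Ioi 0))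
    (hdp : ∀ lam : ℝ, 0 < lam → HasDerivWithinAt f (dplus lam) (Set.Ici lam) lam)
    (hdm : ∀ lam : ℝ, 0 < lam → HasDerivWithinAt f (dminus lam) (Set.Iic lam) lam)
    (T : Finset ℝ) :
    ∀ u v : ℝ, 0 < u → u < v → ↑T ⊆ Set.Ioo u v →
      (∀ x ∈ Set.Ioo u v, x ∉ T → ∃ ε > (0:ℝ), ∃ m c : ℝ,
        ∀ y ∈ Set.Ioo (x - ε) (x + ε), f y = m * y + c) →
      ∑ s ∈ T, (dplus s - dminus s) = dminus v - dplus u := by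
  classical
  induction T using Finset.induction_on_max with
  | empty =>
    intro u v hu huv _ hloc
    obtain ⟨m, c, hmc⟩ := st6_affine_on hcont hu huv
      (fun x hx => hloc x hx (Finset.notMem_empty x))
    rw [Finset.sum_empty, st6_dminus_eq huv hmc (hdm v (hu.trans huv)),
      st6_dplus_eq huv hmc (hdp u hu), sub_self]
  | insert a s hmax ih =>
    intro u v hu huv hsub hloc
    have haI : a ∈ Set.Ioo u v := hsub (Finset.mem_coe.2 (Finset.mem_insert_self a s))
    have ha0 : 0 < a := hu.trans haI.1
    obtain ⟨m, c, hmc⟩ := st6_affine_on hcont ha0 haI.2 (fun x hx => by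
      refine hloc x ⟨haI.1.trans hx.1, hx.2⟩ ?_
      simp only [Finset.mem_insert, not_or]
      exact ⟨ne_of_gt hx.1, fun hxs => absurd (hmax x hxs) (not_lt.2 hx.1.le)⟩)
    have e1 : dminus v = m := st6_dminus_eq haI.2 hmc (hdm v (hu.trans huv))
    have e2 : dplus a = m := st6_dplus_eq haI.2 hmc (hdp a ha0)
    have e3 : ∑ x ∈ s, (dplus x - dminus x) = dminus a - dplus u := by
      refine ih u a hu haI.1 (fun x hx => ?_) (fun x hx hxs => ?_)
      · have hx' := hsub (Finset.mem_coe.2 (Finset.mem_insert_of_mem hx))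
        exact ⟨hx'.1, hmax x hx⟩
      · refine hloc x ⟨hx.1, hx.2.trans haI.2⟩ ?_
        simp only [Finset.mem_insert, not_or]
        exact ⟨ne_of_lt hx.2, hxs⟩
    rw [Finset.sum_insert (fun ha' => absurd (hmax a ha') (lt_irrefl a)), e3, e1, e2]
    ring

private lemma st6_div_p_mem {p : ℕ} (hp0 : (0:ℝ) < p) {x : ℝ} (hx : x ∈ Hp p) :
    x / p ∈ Hp p := by
  obtain ⟨b, n, hb⟩ := hx
  refine ⟨b, n + 1, ?_⟩
  have h2 : x / (p:ℝ) * (p:ℝ) ^ (n+1) = x * (p:ℝ) ^ n := by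
    rw [pow_succ]; field_simp
  rw [h2, hb]

/-- for a global rational function `f` on the periodic orbit `C_p` (continuous,
`f(pλ) = f(λ)`, piecewise affine with slopes in `H_p`), the sum `∑_{λ ∈ [1,p)} (f'₊(λ) - f'₋(λ))`
belongs to `(p-1)·H_p`; i.e. the invariant `χ` of the principal divisor of `f` vanishes in
`H_p/(p-1)H_p`. -/
theorem statement6 (p : ℕ) (hp : p.Prime) (f dplus dminus : ℝ → ℝ)
    (hcont : ContinuousOn f (Set.Ioi 0))
    (hper : ∀ lam : ℝ, 0 < lam → f ((p : ℝ) * lam) = f lam)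
    (S : Finset ℝ) (hS : ↑S ⊆ Set.Ico (1 : ℝ) (p : ℝ))
    (haff : ∀ lam : ℝ, 0 < lam → (∀ s ∈ S, ∀ n : ℤ, lam ≠ s * (p : ℝ) ^ n) →
      ∃ ε > (0 : ℝ), ∃ a c : ℝ, a ∈ Hp p ∧
        ∀ y ∈ Set.Ioo (lam - ε) (lam + ε), f y = a * y + c)
    (hdp : ∀ lam : ℝ, 0 < lam →
      HasDerivWithinAt f (dplus lam) (Set.Ici lam) lam ∧ dplus lam ∈ Hp p)
    (hdm : ∀ lam : ℝ, 0 < lam →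
      HasDerivWithinAt f (dminus lam) (Set.Iic lam) lam ∧ dminus lam ∈ Hp p) :
    (∑ᶠ lam ∈ Set.Ico (1 : ℝ) (p : ℝ), (dplus lam - dminus lam)) ∈
      scaledHp p ((p : ℝ) - 1) := by
  classical
  have hp1 : (1:ℝ) < p := by exact_mod_cast hp.one_lt
  have hp0 : (0:ℝ) < p := by linarith
  set M := (insert (1:ℝ) S).max' (Finset.insert_nonempty _ _) with hMdef
  have hM1 : (1:ℝ) ≤ M := Finset.le_max' _ _ (Finset.mem_insert_self _ _)
  have hMp : M < p := by
    rcases Finset.mem_insert.1 ((insert (1:ℝ) S).max'_mem (Finset.insert_nonempty _ _)) with h | h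
    · rw [← hMdef] at h; rw [h]; exact hp1
    · exact (hS (Finset.mem_coe.2 h)).2
  have hsM : ∀ s ∈ S, s ≤ M := fun s hs => Finset.le_max' _ _ (Finset.mem_insert_of_mem hs)
  have hs1 : ∀ s ∈ S, (1:ℝ) ≤ s := fun s hs => (hS (Finset.mem_coe.2 hs)).1
  have hMp1 : M / p < 1 := (div_lt_one hp0).2 hMp
  set a := (M / p + 1) / 2 with hadef
  have haMp : M / p < a := by rw [hadef]; linarith
  have ha1 : a < 1 := by rw [hadef]; linarith
  have ha0 : 0 < a := lt_trans (div_pos (by linarith) hp0) haMp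
  have hpa : M < p * a := by
    have := (div_lt_iff₀ hp0).1 haMp
    nlinarith
  have hpap : p * a < p := by nlinarith
  have haa : a < p * a := by nlinarith
  have hpa0 : 0 < p * a := by positivity
  -- zpow facts
  have hzpow0 : ∀ n : ℤ, (0:ℝ) < (p:ℝ) ^ n := fun n => zpow_pos hp0 n
  have hnotorb : ∀ x : ℝ, M / p < x → x < p → x ∉ S →
      ∀ s ∈ S, ∀ n : ℤ, x ≠ s * (p:ℝ) ^ n := by
    intro x hx1 hx2 hxS s hs n heq
    rcases lt_trichotomy n 0 with hn | hn | hn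
    · have h2 : ((p:ℝ)) ^ n ≤ (p:ℝ)⁻¹ := by
        calc ((p:ℝ)) ^ n ≤ (p:ℝ) ^ (-1 : ℤ) := zpow_le_zpow_right₀ hp1.le (by omega)
          _ = (p:ℝ)⁻¹ := zpow_neg_one _
      have h3 : s * (p:ℝ) ^ n ≤ M * (p:ℝ)⁻¹ :=
        mul_le_mul (hsM s hs) h2 (hzpow0 n).le (by linarith [hs1 s hs])
      rw [← div_eq_mul_inv] at h3
      rw [heq] at hx1
      linarith
    · rw [hn, zpow_zero, mul_one] at heq
      exact hxS (by rwa [heq])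
    · have h1 : (p:ℝ) ≤ (p:ℝ) ^ n := by
        calc (p:ℝ) = (p:ℝ) ^ (1:ℤ) := (zpow_one _).symm
          _ ≤ _ := zpow_le_zpow_right₀ hp1.le (by omega)
      have h3 : (p:ℝ) ≤ s * (p:ℝ) ^ n :=
        h1.trans (le_mul_of_one_le_left (hzpow0 n).le (hs1 s hs))
      rw [heq] at hx2
      linarith
  have haS : a ∉ S := fun haS => absurd (hs1 a haS) (by linarith)
  -- slopes at a
  obtain ⟨ε, hε, m₀, c₀, hm₀Hp, hm₀⟩ :=
    haff a ha0 (hnotorb a haMp (by linarith) haS)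
  have hda : dplus a = m₀ :=
    st6_dplus_eq (show a < a + ε/2 by linarith)
      (fun y hy => hm₀ y ⟨by linarith [hy.1], by linarith [hy.2]⟩) (hdp a ha0).1
  have hdma : dminus a = m₀ :=
    st6_dminus_eq (show a - ε/2 < a by linarith)
      (fun y hy => hm₀ y ⟨by linarith [hy.1], by linarith [hy.2]⟩) (hdm a ha0).1
  -- periodicity: dminus (p*a) = dminus a * (1/p)
  have hcomp : HasDerivWithinAt (f ∘ fun y : ℝ => y / p) (dminus a * (1/p))
      (Set.Iic (p*a)) (p*a) := by
    have hinner : HasDerivWithinAt (fun y : ℝ => y / p) (1/p) (Set.Iic (p*a)) (p*a) := by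
      simpa using ((hasDerivAt_id' (p*a)).div_const p).hasDerivWithinAt
    have houter : HasDerivWithinAt f (dminus a) (Set.Iic a) ((p*a) / p) := by
      rw [mul_div_cancel_left₀ _ (ne_of_gt hp0)]
      exact (hdm a ha0).1
    exact HasDerivWithinAt.comp (p*a) houter hinner
      (fun y hy => by
        simp only [Set.mem_Iic] at *
        rw [div_le_iff₀ hp0]
        linarith [mul_comm a (p:ℝ)])
  have hfeq : HasDerivWithinAt f (dminus a * (1/p)) (Set.Iic (p*a)) (p*a) := by
    refine hcomp.congr_of_eventuallyEq ?_ ?_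
    · filter_upwards [mem_nhdsWithin_of_mem_nhds (Ioi_mem_nhds hpa0)] with y hy
      have hy0 : (0:ℝ) < y := hy
      have h := hper (y / p) (div_pos hy0 hp0)
      rw [show (p:ℝ) * (y / p) = y by field_simp] at h
      simp only [Function.comp_apply]
      exact h
    · show f (p*a) = (f ∘ fun y : ℝ => y / p) (p*a)
      simp only [Function.comp_apply]
      rw [mul_div_cancel_left₀ _ (ne_of_gt hp0)]
      exact hper a ha0
  have e4 : dminus (p*a) = dminus a * (1/p) := by
    rw [← (hdm (p*a) hpa0).1.derivWithin (uniqueDiffOn_Iic (p*a) (p*a) Set.self_mem_Iic),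
      hfeq.derivWithin (uniqueDiffOn_Iic (p*a) (p*a) Set.self_mem_Iic)]
  -- telescoping over S on (a, p*a)
  have hTel : ∑ s ∈ S, (dplus s - dminus s) = dminus (p*a) - dplus a := by
    refine st6_telescope hcont (fun l hl => (hdp l hl).1) (fun l hl => (hdm l hl).1) S
      a (p*a) ha0 haa (fun s hs => ?_) (fun x hx hxS => ?_)
    · have hs' := Finset.mem_coe.1 hs
      exact ⟨lt_of_lt_of_le ha1 (hs1 s hs'), lt_of_le_of_lt (hsM s hs') hpa⟩
    · obtain ⟨ε', hε', m', c', -, h'⟩ := haff x (ha0.trans hx.1)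
        (hnotorb x (haMp.trans hx.1) (hx.2.trans hpap) hxS)
      exact ⟨ε', hε', m', c', h'⟩
  -- finsum reduction to S
  have hsupp : Set.Ico (1:ℝ) (p:ℝ) ∩ Function.support (fun lam => dplus lam - dminus lam)
      = ↑S ∩ Function.support (fun lam => dplus lam - dminus lam) := by
    ext x
    simp only [Set.mem_inter_iff, Function.mem_support, Set.mem_Ico, Finset.mem_coe]
    constructor
    · rintro ⟨⟨hx1, hx2⟩, hne⟩
      refine ⟨?_, hne⟩
      by_contra hxS
      have hx0 : (0:ℝ) < x := by linarith
      obtain ⟨ε', hε', m', c', -, h'⟩ := haff x hx0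
        (hnotorb x (lt_of_lt_of_le hMp1 hx1) hx2 hxS)
      have h1 : dplus x = m' :=
        st6_dplus_eq (show x < x + ε'/2 by linarith)
          (fun y hy => h' y ⟨by linarith [hy.1], by linarith [hy.2]⟩) (hdp x hx0).1
      have h2 : dminus x = m' :=
        st6_dminus_eq (show x - ε'/2 < x by linarith)
          (fun y hy => h' y ⟨by linarith [hy.1], by linarith [hy.2]⟩) (hdm x hx0).1
      exact hne (by rw [h1, h2, sub_self])
    · rintro ⟨hxS, hne⟩
      exact ⟨hS (Finset.mem_coe.2 hxS), hne⟩
  have hfin : (∑ᶠ lam ∈ Set.Ico (1:ℝ) (p:ℝ), (dplus lam - dminus lam))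
      = ∑ s ∈ S, (dplus s - dminus s) :=
    finsum_mem_eq_sum_of_inter_support_eq _ hsupp
  rw [hfin, hTel, e4, hda, hdma]
  refine ⟨-(m₀ / p), neg_mem (st6_div_p_mem hp0 hm₀Hp), ?_⟩
  field_simp
  ring
end

section
/- Let p be a prime. Let λ_1 < … < λ_m be points of [1,p) and let h_1,…,h_m be real numbers with h_i ∈ λ_i·H_p for each i, where H_p = ℤ[1/p]. Then there exists a continuous function f : ℝ_{>0} → ℝ with f(pλ) = f(λ) for all λ, piecewise affine with slopes in H_p, whose points of non-differentiability in [1,p) are contained in {λ_1,…,λ_m} and which satisfies Order(f)(λ_i) = λ_i·(f'₊(λ_i) − f'₋(λ_i)) = h_i for every i, if and only if ∑_i h_i = 0 and ∑_i h_i/λ_i ∈ (p−1)·H_p. In particular, a divisor of degree 0 on C_p is principal if and only if its invariant χ vanishes in H_p/(p−1)H_p. -/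
open Set Filter Real

-- Hp closed under multiplication by p^k, k : ℤ
lemma zpowMulMemHp {p : ℕ} (hp : 0 < p) {x : ℝ} (hx : x ∈ Hp p) (k : ℤ) :
    (p : ℝ) ^ k * x ∈ Hp p := by
  obtain ⟨a, n, ha⟩ := hx
  have hp0 : (p : ℝ) ≠ 0 := by positivity
  refine ⟨a * (p : ℤ) ^ (k - n).toNat, (n - k).toNat, ?_⟩
  have key : (p:ℝ)^k * ((p:ℝ)^((n:ℕ):ℤ))⁻¹ * (p:ℝ)^((((n:ℤ) - k).toNat : ℕ):ℤ)
      = (p:ℝ)^(((k - n).toNat : ℕ):ℤ) := by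
    rw [← zpow_neg, ← zpow_add₀ hp0, ← zpow_add₀ hp0]
    congr 1
    omega
  have hxa : x = (a:ℝ) * ((p:ℝ)^(n:ℕ))⁻¹ := by
    field_simp
    linarith [ha]
  push_cast
  rw [hxa, ← zpow_natCast (p:ℝ) n, ← zpow_natCast (p:ℝ) (((n:ℤ) - k).toNat),
    ← zpow_natCast (p:ℝ) ((k - n).toNat)]
  linear_combination (a:ℝ) * key

-- two affine functions agreeing on a nontrivial interval are equal
lemma affine_eq_affine {a c a' c' z δ : ℝ} (hδ : 0 < δ)
    (h : ∀ y ∈ Ioo (z - δ) (z + δ), a * y + c = a' * y + c') : a = a' ∧ c = c' := by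
  have h1 := h z ⟨by linarith, by linarith⟩
  have h2 := h (z + δ/2) ⟨by linarith, by linarith⟩
  have ha : a = a' := by
    have h3 : a * (δ/2) = a' * (δ/2) := by linarith
    exact mul_right_cancel₀ (by positivity) h3
  exact ⟨ha, by rw [ha] at h1; linarith⟩

lemma locally_affine_eq (f : ℝ → ℝ) {u v : ℝ} (huv : u < v)
    (hc : ContinuousOn f (Icc u v))
    (hloc : ∀ x ∈ Ioo u v, ∃ ε > 0, ∃ a c : ℝ, ∀ y ∈ Ioo (x - ε) (x + ε), f y = a * y + c) :
    ∃ a c : ℝ, ∀ y ∈ Icc u v, f y = a * y + c := by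
  obtain ⟨ε₀, hε₀, a₀, c₀, hac₀⟩ := hloc ((u+v)/2) ⟨by linarith, by linarith⟩
  set g : ℝ → ℝ := fun y => a₀ * y + c₀ with hg
  -- the set where f is locally g
  set U : Set ℝ := {x | f =ᶠ[nhds x] g} with hU
  have hUopen : IsOpen U := by
    rw [isOpen_iff_mem_nhds]
    intro x hx
    exact hx.eventually_nhds
  have hx₀ : (u+v)/2 ∈ U := by
    have : Ioo ((u+v)/2 - ε₀) ((u+v)/2 + ε₀) ∈ nhds ((u+v)/2) :=
      Ioo_mem_nhds (by linarith) (by linarith)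
    exact eventually_of_mem this hac₀
  -- U ∩ Ioo is clopen in Ioo
  have key : ∀ x ∈ Ioo u v, x ∈ U := by
    have hpc : PreconnectedSpace (Ioo u v) := Subtype.preconnectedSpace isPreconnected_Ioo
    set U' : Set (Ioo u v) := (Subtype.val) ⁻¹' U with hU'
    have hopen' : IsOpen U' := hUopen.preimage continuous_subtype_val
    have hclosed' : IsClosed U' := by
      rw [← isOpen_compl_iff, isOpen_iff_mem_nhds]
      rintro ⟨x, hx⟩ hxn
      obtain ⟨ε, hε, a, c, hac⟩ := hloc x hx
      have hIoo : (Subtype.val : (Ioo u v) → ℝ) ⁻¹' (Ioo (x - ε) (x + ε)) ∈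
          nhds (⟨x, hx⟩ : Ioo u v) :=
        continuous_subtype_val.continuousAt.preimage_mem_nhds
          (Ioo_mem_nhds (by linarith) (by linarith))
      refine mem_of_superset hIoo ?_
      rintro ⟨z, hz⟩ hzI hzU
      -- z ∈ U and f = a y + c near z; derive x ∈ U, contradiction
      apply hxn
      obtain ⟨t, htn, htEq⟩ := hzU.exists_mem
      obtain ⟨δ, hδ, hball⟩ := Metric.mem_nhds_iff.mp htn
      have hzI' : z ∈ Ioo (x - ε) (x + ε) := hzI
      set δ' := min δ (min (z - (x - ε)) ((x + ε) - z)) with hδ'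
      have hδ'0 : 0 < δ' := by
        simp only [hδ', lt_min_iff]
        exact ⟨hδ, by constructor <;> [linarith [hzI'.1]; linarith [hzI'.2]]⟩
      have hd1 : δ' ≤ δ := min_le_left _ _
      have hd2 : δ' ≤ z - (x - ε) := le_trans (min_le_right _ _) (min_le_left _ _)
      have hd3 : δ' ≤ (x + ε) - z := le_trans (min_le_right _ _) (min_le_right _ _)
      have hagree : ∀ y ∈ Ioo (z - δ') (z + δ'), a * y + c = a₀ * y + c₀ := by
        intro y hy
        have hy1 : y ∈ Ioo (x - ε) (x + ε) := ⟨by linarith [hy.1], by linarith [hy.2]⟩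
        have hy2 : y ∈ t := by
          apply hball
          simp only [Metric.mem_ball, Real.dist_eq, abs_lt]
          constructor <;> [linarith [hy.1]; linarith [hy.2]]
        rw [← hac y hy1, htEq hy2]
      obtain ⟨ha, hc'⟩ := affine_eq_affine hδ'0 hagree
      have : Ioo (x - ε) (x + ε) ∈ nhds x := Ioo_mem_nhds (by linarith) (by linarith)
      refine eventually_of_mem this fun y hy => ?_
      rw [hac y hy, hg, ha, hc']
    have hne : U'.Nonempty := ⟨⟨(u+v)/2, by constructor <;> linarith⟩, hx₀⟩
    have := (IsClopen.eq_univ ⟨hclosed', hopen'⟩ hne : U' = univ)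
    intro x hx
    have : (⟨x, hx⟩ : Ioo u v) ∈ U' := by rw [this]; trivial
    exact this
  have hint : ∀ y ∈ Ioo u v, f y = a₀ * y + c₀ := fun y hy => (key y hy).self_of_nhds
  -- extend to all of Icc by continuity
  refine ⟨a₀, c₀, fun w hw => ?_⟩
  have hne : (nhdsWithin w (Ioo u v)).NeBot := by
    rw [← mem_closure_iff_nhdsWithin_neBot, closure_Ioo (ne_of_lt huv)]
    exact hw
  have t1 : Tendsto f (nhdsWithin w (Ioo u v)) (nhds (f w)) :=
    (hc.continuousWithinAt hw).mono_left (nhdsWithin_mono _ Ioo_subset_Icc_self)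
  have t2 : Tendsto f (nhdsWithin w (Ioo u v)) (nhds (a₀ * w + c₀)) := by
    have hgt : Tendsto g (nhdsWithin w (Ioo u v)) (nhds (a₀ * w + c₀)) :=
      Tendsto.mono_left (((continuous_const.mul continuous_id).add continuous_const).tendsto w)
        nhdsWithin_le_nhds
    refine hgt.congr' ?_
    exact eventually_of_mem self_mem_nhdsWithin fun y hy => (hint y hy).symm
  exact tendsto_nhds_unique t1 t2

-- affine function has the obvious derivative within any set
lemma affine_hasDerivWithinAt (a c x : ℝ) (s : Set ℝ) :
    HasDerivWithinAt (fun y => a * y + c) a s x := by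
  simpa using (((hasDerivAt_id x).const_mul a).add_const c).hasDerivWithinAt

lemma slope_right_unique {f : ℝ → ℝ} {a c u v d : ℝ} (huv : u < v)
    (haff : ∀ y ∈ Icc u v, f y = a * y + c)
    (hd : HasDerivWithinAt f d (Ici u) u) : d = a := by
  have h1 : HasDerivWithinAt f a (Ici u) u := by
    refine (affine_hasDerivWithinAt a c u (Ici u)).congr_of_eventuallyEq ?_
      (haff u ⟨le_refl _, le_of_lt huv⟩)
    have hmem : Icc u v ∈ nhdsWithin u (Ici u) := by
      rw [← Ici_inter_Iic]
      exact inter_mem_nhdsWithin _ (Iic_mem_nhds huv)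
    exact eventually_of_mem hmem fun y hy => haff y hy
  rw [← h1.derivWithin (uniqueDiffOn_Ici u u self_mem_Ici),
    ← hd.derivWithin (uniqueDiffOn_Ici u u self_mem_Ici)]

lemma slope_left_unique {f : ℝ → ℝ} {a c u v d : ℝ} (huv : u < v)
    (haff : ∀ y ∈ Icc u v, f y = a * y + c)
    (hd : HasDerivWithinAt f d (Iic v) v) : d = a := by
  have h1 : HasDerivWithinAt f a (Iic v) v := by
    refine (affine_hasDerivWithinAt a c v (Iic v)).congr_of_eventuallyEq ?_
      (haff v ⟨le_of_lt huv, le_refl _⟩)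
    have hmem : Icc u v ∈ nhdsWithin v (Iic v) := by
      rw [← Ici_inter_Iic, inter_comm]
      exact inter_mem_nhdsWithin _ (Ici_mem_nhds huv)
    exact eventually_of_mem hmem fun y hy => haff y hy
  rw [← h1.derivWithin (uniqueDiffOn_Iic v v self_mem_Iic),
    ← hd.derivWithin (uniqueDiffOn_Iic v v self_mem_Iic)]

noncomputable def nuF (p : ℕ) (x : ℝ) : ℤ := ⌊Real.logb p x⌋

lemma nu_spec {p : ℕ} (hp1 : (1:ℝ) < p) {x : ℝ} (hx : 0 < x) :
    (p:ℝ) ^ (nuF p x) ≤ x ∧ x < (p:ℝ) ^ (nuF p x + 1) := by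
  constructor
  · have h := Int.floor_le (Real.logb p x)
    rw [← Real.rpow_intCast (p:ℝ) (nuF p x)]
    exact (Real.le_logb_iff_rpow_le hp1 hx).mp h
  · have h := Int.lt_floor_add_one (Real.logb p x)
    rw [← Real.rpow_intCast (p:ℝ) (nuF p x + 1)]
    have := (Real.logb_lt_iff_lt_rpow hp1 hx).mp (by exact_mod_cast h)
    exact this

lemma nu_unique {p : ℕ} (hp1 : (1:ℝ) < p) {x : ℝ} {n : ℤ} (h1 : (p:ℝ) ^ n ≤ x)
    (h2 : x < (p:ℝ) ^ (n + 1)) : nuF p x = n := by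
  have hx : 0 < x := lt_of_lt_of_le (zpow_pos (by linarith) n) h1
  have a1 : (n : ℝ) ≤ Real.logb p x := by
    rw [Real.le_logb_iff_rpow_le hp1 hx, Real.rpow_intCast]
    exact h1
  have a2 : Real.logb p x < (n : ℝ) + 1 := by
    have : Real.logb p x < ((n + 1 : ℤ) : ℝ) := by
      rw [Real.logb_lt_iff_lt_rpow hp1 hx, Real.rpow_intCast]
      exact h2
    push_cast at this
    exact this
  exact Int.floor_eq_iff.mpr ⟨a1, a2⟩

lemma nu_scale {p : ℕ} (hp1 : (1:ℝ) < p) {x : ℝ} (hx : 0 < x) :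
    nuF p ((p:ℝ) * x) = nuF p x + 1 := by
  unfold nuF
  rw [Real.logb_mul (by linarith : (p:ℝ) ≠ 0) (ne_of_gt hx),
    Real.logb_self_eq_one hp1, add_comm (1:ℝ), Int.floor_add_one]

section FLocal
variable {p m : ℕ} (lam : Fin m → ℝ) (d : Fin m → ℝ) (s₀ : ℝ)

-- local structure of the tent-sum function
lemma F_local (u : ℝ) :
    ∃ ε > 0,
      (∀ w, u - ε < w → w ≤ u →
        (s₀ * w + ∑ i, d i * max (w - lam i) 0) =
        (s₀ * u + ∑ i, d i * max (u - lam i) 0) +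
          (s₀ + ∑ i ∈ Finset.univ.filter (fun i => lam i < u), d i) * (w - u)) ∧
      (∀ w, u ≤ w → w < u + ε →
        (s₀ * w + ∑ i, d i * max (w - lam i) 0) =
        (s₀ * u + ∑ i, d i * max (u - lam i) 0) +
          (s₀ + ∑ i ∈ Finset.univ.filter (fun i => lam i ≤ u), d i) * (w - u)) := by
  classical
  -- a separation radius
  obtain ⟨ε, hε, hsep⟩ : ∃ ε > 0, ∀ i, lam i = u ∨ ε ≤ |lam i - u| := by
    by_cases hS : ((Finset.univ : Finset (Fin m)).filter fun i => lam i ≠ u).Nonempty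
    · set s := ((Finset.univ : Finset (Fin m)).filter fun i => lam i ≠ u).image
        fun i => |lam i - u| with hs
      have hsne : s.Nonempty := hS.image _
      refine ⟨s.min' hsne, ?_, ?_⟩
      · obtain ⟨z, hz⟩ := Finset.mem_image.mp (s.min'_mem hsne)
        rw [← hz.2]
        have : lam z ≠ u := (Finset.mem_filter.mp hz.1).2
        exact abs_pos.mpr (sub_ne_zero.mpr this)
      · intro i
        by_cases hi : lam i = u
        · exact Or.inl hi
        · exact Or.inr (Finset.min'_le s _ (Finset.mem_image.mpr
            ⟨i, Finset.mem_filter.mpr ⟨Finset.mem_univ _, hi⟩, rfl⟩))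
    · refine ⟨1, one_pos, fun i => Or.inl ?_⟩
      by_contra hne
      exact hS ⟨i, Finset.mem_filter.mpr ⟨Finset.mem_univ _, hne⟩⟩
  refine ⟨ε, hε, ?_, ?_⟩
  · intro w hw1 hw2
    have key : ∀ i, d i * max (w - lam i) 0 =
        d i * max (u - lam i) 0 + (if lam i < u then d i * (w - u) else 0) := by
      intro i
      rcases hsep i with hi | hi
      · rw [hi, if_neg (lt_irrefl u), max_eq_right (by linarith), max_eq_right (by linarith)]
        ring
      · rcases lt_or_ge (lam i) u with hlt | hle
        · have : ε ≤ u - lam i := by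
            rw [abs_of_neg (by linarith)] at hi; linarith
          rw [if_pos hlt, max_eq_left (by linarith), max_eq_left (by linarith)]
          ring
        · have hlt' : u < lam i := by
            rcases eq_or_lt_of_le hle with he | hl
            · exfalso; rw [← he] at hi; simp at hi; linarith
            · exact hl
          rw [if_neg (not_lt.mpr hle), max_eq_right (by linarith), max_eq_right (by linarith)]
          ring
    rw [Finset.sum_congr rfl fun i _ => key i, Finset.sum_add_distrib, ← Finset.sum_filter,
      ← Finset.sum_mul]
    ring
  · intro w hw1 hw2
    have key : ∀ i, d i * max (w - lam i) 0 =
        d i * max (u - lam i) 0 + (if lam i ≤ u then d i * (w - u) else 0) := by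
      intro i
      rcases hsep i with hi | hi
      · rw [hi, if_pos (le_refl u), max_eq_left (by linarith), max_eq_right (by linarith)]
        ring
      · rcases lt_or_ge (lam i) u with hlt | hle
        · rw [if_pos (le_of_lt hlt), max_eq_left (by linarith), max_eq_left (by linarith)]
          ring
        · have hlt' : u < lam i := by
            rcases eq_or_lt_of_le hle with he | hl
            · exfalso; rw [← he] at hi; simp at hi; linarith
            · exact hl
          have : ε ≤ lam i - u := by
            rw [abs_of_pos (by linarith)] at hi; linarith
          rw [if_neg (not_le.mpr hlt'), max_eq_right (by linarith), max_eq_right (by linarith)]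
          ring
    rw [Finset.sum_congr rfl fun i _ => key i, Finset.sum_add_distrib, ← Finset.sum_filter,
      ← Finset.sum_mul]
    ring
end FLocal


lemma backward (p : ℕ) (hp : p.Prime) (m : ℕ) (lam : Fin m → ℝ)
    (hinj : Function.Injective lam) (hlam : ∀ i, lam i ∈ Set.Ico (1 : ℝ) (p : ℝ))
    (h : Fin m → ℝ) (hmem : ∀ i, h i ∈ scaledHp p (lam i))
    (hdeg : (∑ i, h i) = 0) (q : ℝ) (hqHp : q ∈ Hp p)
    (hq : (∑ i, h i / lam i) = ((p : ℝ) - 1) * q) :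
    ∃ f dplus dminus : ℝ → ℝ,
        ContinuousOn f (Set.Ioi 0) ∧
        (∀ x : ℝ, 0 < x → f ((p : ℝ) * x) = f x) ∧
        (∀ x : ℝ, 0 < x →
          HasDerivWithinAt f (dplus x) (Set.Ici x) x ∧ dplus x ∈ Hp p) ∧
        (∀ x : ℝ, 0 < x →
          HasDerivWithinAt f (dminus x) (Set.Iic x) x ∧ dminus x ∈ Hp p) ∧
        (∀ x : ℝ, 0 < x → (∀ i, ∀ n : ℤ, x ≠ lam i * (p : ℝ) ^ n) →
          ∃ ε > (0 : ℝ), ∃ a c : ℝ, a ∈ Hp p ∧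
            ∀ y ∈ Set.Ioo (x - ε) (x + ε), f y = a * y + c) ∧
        (∀ i, lam i * (dplus (lam i) - dminus (lam i)) = h i) := by
  classical
  have hp1 : (1:ℝ) < p := by exact_mod_cast hp.one_lt
  have hp0 : (0:ℝ) < p := by linarith
  have hpne : (p:ℝ) ≠ 0 := ne_of_gt hp0
  have hlam0 : ∀ i, (0:ℝ) < lam i := fun i => lt_of_lt_of_le one_pos (hlam i).1
  set d : Fin m → ℝ := fun i => h i / lam i with hd
  have hdHp : ∀ i, d i ∈ Hp p := by
    intro i
    obtain ⟨r, hr, hre⟩ := hmem i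
    have hne := (hlam0 i).ne'
    have hdr : d i = r := by
      show h i / lam i = r
      rw [hre]
      field_simp
    rwa [hdr]
  have hdlam : ∀ i, lam i * d i = h i := by
    intro i
    have hne := (hlam0 i).ne'
    show lam i * (h i / lam i) = h i
    field_simp
  set s0 : ℝ := -((p:ℝ) * q) with hs0
  have hs0Hp : s0 ∈ Hp p := by
    have h1 := zpowMulMemHp hp.pos (neg_mem hqHp) 1
    rw [zpow_one] at h1
    have : s0 = (p:ℝ) * -q := by rw [hs0]; ring
    rwa [this]
  have hsumd : (∑ i, d i) = ((p:ℝ) - 1) * q := by rw [← hq]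
  set F : ℝ → ℝ := fun w => s0 * w + ∑ i, d i * max (w - lam i) 0 with hF
  set A : ℝ → ℝ := fun u => s0 + ∑ i ∈ Finset.univ.filter (fun i => lam i < u), d i with hA
  set B : ℝ → ℝ := fun u => s0 + ∑ i ∈ Finset.univ.filter (fun i => lam i ≤ u), d i with hB
  have hAHp : ∀ u, A u ∈ Hp p := fun u => add_mem hs0Hp (sum_mem fun i _ => hdHp i)
  have hBHp : ∀ u, B u ∈ Hp p := fun u => add_mem hs0Hp (sum_mem fun i _ => hdHp i)
  have hFloc : ∀ u : ℝ, ∃ ε > 0,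
      (∀ w, u - ε < w → w ≤ u → F w = F u + A u * (w - u)) ∧
      (∀ w, u ≤ w → w < u + ε → F w = F u + B u * (w - u)) := by
    intro u
    obtain ⟨ε, hε, h1, h2⟩ := F_local lam d s0 u
    exact ⟨ε, hε, h1, h2⟩
  have hApall : A (p:ℝ) = -q := by
    rw [hA]; simp only
    have hfil : (Finset.univ.filter fun i => lam i < (p:ℝ)) = Finset.univ :=
      Finset.filter_true_of_mem fun i _ => (hlam i).2
    rw [hfil, hsumd, hs0]; ring
  have hFp1 : F (p:ℝ) = F 1 := by
    rw [hF]; simp only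
    have e1 : (∑ i, d i * max ((p:ℝ) - lam i) 0) = (p:ℝ) * (∑ i, d i) - (∑ i, h i) := by
      rw [Finset.mul_sum, ← Finset.sum_sub_distrib]
      refine Finset.sum_congr rfl fun i _ => ?_
      rw [max_eq_left (by linarith [(hlam i).2]), ← hdlam i]; ring
    have e2 : (∑ i, d i * max ((1:ℝ) - lam i) 0) = 0 := by
      refine Finset.sum_eq_zero fun i _ => ?_
      rw [max_eq_right (by linarith [(hlam i).1]), mul_zero]
    rw [e1, e2, hsumd, hdeg, hs0]; ring
  set f : ℝ → ℝ := fun x => F ((p:ℝ) ^ (-(nuF p x)) * x) with hf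
  have hper : ∀ x : ℝ, 0 < x → f ((p:ℝ) * x) = f x := by
    intro x hx
    rw [hf]; simp only
    rw [nu_scale hp1 hx]
    congr 1
    rw [neg_add, zpow_add₀ hpne, zpow_neg_one]
    field_simp
  have floc : ∀ x : ℝ, ∃ ε a b : ℝ, a ∈ Hp p ∧ b ∈ Hp p ∧ (0 < x →
      0 < ε ∧
      (∀ y, x - ε < y → y ≤ x → f y = f x + a * (y - x)) ∧
      (∀ y, x ≤ y → y < x + ε → f y = f x + b * (y - x)) ∧
      ((∀ i, ∀ k : ℤ, x ≠ lam i * (p:ℝ) ^ k) → a = b) ∧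
      (∀ i, x = lam i → b - a = d i)) := by
    intro x
    by_cases hx : 0 < x
    swap
    · exact ⟨1, 0, 0, zero_mem _, zero_mem _, fun hc => absurd hc hx⟩
    set n := nuF p x with hn
    obtain ⟨hxl, hxr⟩ := nu_spec hp1 hx
    set u := (p:ℝ) ^ (-n) * x with huu
    have hpnpos : ∀ k : ℤ, (0:ℝ) < (p:ℝ) ^ k := fun k => zpow_pos hp0 _
    have hz1 : (p:ℝ) ^ (-n) * (p:ℝ) ^ n = 1 := by
      rw [← zpow_add₀ hpne]; simp
    have hz2 : (p:ℝ) ^ (-n) * (p:ℝ) ^ (n+1) = p := by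
      rw [← zpow_add₀ hpne, show -n + (n+1) = 1 by ring, zpow_one]
    have hz3 : (p:ℝ) ^ (1-n) * (p:ℝ) ^ (n-1) = 1 := by
      rw [← zpow_add₀ hpne, show (1:ℤ)-n + (n-1) = 0 by ring, zpow_zero]
    have hz4 : (p:ℝ) ^ (1-n) * (p:ℝ) ^ n = p := by
      rw [← zpow_add₀ hpne, show (1:ℤ)-n + n = 1 by ring, zpow_one]
    have hu1 : 1 ≤ u := by
      calc (1:ℝ) = (p:ℝ)^(-n) * (p:ℝ)^n := hz1.symm
        _ ≤ (p:ℝ)^(-n) * x := mul_le_mul_of_nonneg_left hxl (le_of_lt (hpnpos _))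
        _ = u := huu.symm
    have hup : u < p := by
      calc u = (p:ℝ)^(-n) * x := huu
        _ < (p:ℝ)^(-n) * (p:ℝ)^(n+1) := mul_lt_mul_of_pos_left hxr (hpnpos _)
        _ = p := hz2
    have hxnu : (p:ℝ) ^ n * u = x := by
      rw [huu, ← mul_assoc, mul_comm ((p:ℝ)^n), hz1, one_mul]
    have hfxu : f x = F u := by rw [hf]
    rcases eq_or_lt_of_le hu1 with hueq | hugt
    · -- CASE u = 1 : x = p^n
      have hxpn : x = (p:ℝ) ^ n := by rw [← hxnu, ← hueq, mul_one]
      have hfx1 : f x = F 1 := by rw [hfxu, ← hueq]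
      obtain ⟨ε1, hε1, _, hR1⟩ := hFloc 1
      obtain ⟨εp, hεp, hLp, _⟩ := hFloc (p:ℝ)
      have hpn1x : (p:ℝ) ^ (n-1) < x := by
        rw [hxpn]; exact zpow_lt_zpow_right₀ hp1 (by omega)
      set ε : ℝ := min (min (εp * (p:ℝ)^(n-1)) (x - (p:ℝ)^(n-1)))
        (min (ε1 * (p:ℝ)^n) ((p:ℝ)^(n+1) - x)) with hε
      have hεpos : 0 < ε := by
        refine lt_min (lt_min (by positivity) (by linarith)) (lt_min (by positivity) (by linarith))
      have hεle1 : ε ≤ εp * (p:ℝ)^(n-1) := le_trans (min_le_left _ _) (min_le_left _ _)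
      have hεle2 : ε ≤ x - (p:ℝ)^(n-1) := le_trans (min_le_left _ _) (min_le_right _ _)
      have hεle3 : ε ≤ ε1 * (p:ℝ)^n := le_trans (min_le_right _ _) (min_le_left _ _)
      have hεle4 : ε ≤ (p:ℝ)^(n+1) - x := le_trans (min_le_right _ _) (min_le_right _ _)
      refine ⟨ε, (p:ℝ)^(1-n) * A (p:ℝ), (p:ℝ)^(-n) * B 1,
        zpowMulMemHp hp.pos (hAHp _) _, zpowMulMemHp hp.pos (hBHp _) _,
        fun _ => ⟨hεpos, ?_, ?_, ?_, ?_⟩⟩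
      · -- left side
        intro y hy1 hy2
        rcases eq_or_lt_of_le hy2 with heq | hylt
        · rw [heq]; ring
        · have hy3 : (p:ℝ)^(n-1) < y := by linarith
          have hny : nuF p y = n - 1 :=
            nu_unique hp1 (le_of_lt hy3) (by rw [show n-1+1 = n by ring, ← hxpn]; exact hylt)
          have hfy : f y = F ((p:ℝ)^(1-n) * y) := by
            rw [hf]; simp only; rw [hny, show -(n-1) = 1-n by ring]
          set w := (p:ℝ)^(1-n) * y with hw
          have he3 : (p:ℝ)^(1-n) * x = p := by rw [hxpn, hz4]
          have hwp : w < p := by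
            calc w = (p:ℝ)^(1-n) * y := hw
              _ < (p:ℝ)^(1-n) * x := mul_lt_mul_of_pos_left hylt (hpnpos _)
              _ = p := he3
          have hwl : (p:ℝ) - εp < w := by
            have : (p:ℝ)^(1-n) * (x - ε) < w := by
              rw [hw]
              exact mul_lt_mul_of_pos_left hy1 (hpnpos _)
            have h2 : (p:ℝ)^(1-n) * (x - ε) ≥ p - εp := by
              rw [mul_sub, he3]
              have : (p:ℝ)^(1-n) * ε ≤ εp := by
                calc (p:ℝ)^(1-n) * ε ≤ (p:ℝ)^(1-n) * (εp * (p:ℝ)^(n-1)) :=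
                      mul_le_mul_of_nonneg_left hεle1 (le_of_lt (hpnpos _))
                  _ = εp := by rw [show (p:ℝ)^(1-n) * (εp * (p:ℝ)^(n-1)) =
                        εp * ((p:ℝ)^(1-n) * (p:ℝ)^(n-1)) by ring, hz3, mul_one]
              linarith
            linarith
          have := hLp w hwl (le_of_lt hwp)
          rw [hfy, this, hfx1, ← hFp1]
          have hwx : w - p = (p:ℝ)^(1-n) * (y - x) := by
            rw [hw]; linear_combination he3
          rw [hwx]; ring
      · -- right side
        intro y hy1 hy2
        have hny : nuF p y = n :=
          nu_unique hp1 (by rw [← hxpn]; linarith) (by linarith)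
        have hfy : f y = F ((p:ℝ)^(-n) * y) := by rw [hf]; simp only; rw [hny]
        set w := (p:ℝ)^(-n) * y with hw
        have hu1' : (p:ℝ)^(-n) * x = 1 := by rw [← huu, ← hueq]
        have hw1 : 1 ≤ w := by
          calc (1:ℝ) = (p:ℝ)^(-n) * x := hu1'.symm
            _ ≤ (p:ℝ)^(-n) * y := mul_le_mul_of_nonneg_left hy1 (le_of_lt (hpnpos _))
            _ = w := hw.symm
        have hw2 : w < 1 + ε1 := by
          have h1 : w < (p:ℝ)^(-n) * (x + ε) := mul_lt_mul_of_pos_left hy2 (hpnpos _)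
          have h2 : (p:ℝ)^(-n) * (x + ε) ≤ 1 + ε1 := by
            rw [mul_add, hu1']
            have : (p:ℝ)^(-n) * ε ≤ ε1 := by
              calc (p:ℝ)^(-n) * ε ≤ (p:ℝ)^(-n) * (ε1 * (p:ℝ)^n) :=
                    mul_le_mul_of_nonneg_left hεle3 (le_of_lt (hpnpos _))
                _ = ε1 := by rw [show (p:ℝ)^(-n) * (ε1 * (p:ℝ)^n) =
                      ε1 * ((p:ℝ)^(-n) * (p:ℝ)^n) by ring, hz1, mul_one]
            linarith
          linarith
        have := hR1 w hw1 hw2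
        rw [hfy, this, hfx1]
        have hwx : w - 1 = (p:ℝ)^(-n) * (y - x) := by
          rw [hw]; linear_combination hu1'
        rw [hwx]; ring
      · -- non-orbit : a = b
        intro hno
        have hno1 : ∀ i, lam i ≠ 1 := by
          intro i hi
          exact hno i n (by rw [hi, one_mul, hxpn])
        have hB1 : B 1 = s0 := by
          rw [hB]; simp only
          have : (Finset.univ.filter fun i => lam i ≤ (1:ℝ)) = ∅ := by
            refine Finset.filter_eq_empty_iff.mpr fun i _ => ?_
            push_neg
            exact lt_of_le_of_ne (hlam i).1 (Ne.symm (hno1 i))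
          rw [this, Finset.sum_empty, add_zero]
        rw [hApall, hB1, hs0, show (1:ℤ)-n = 1 + -n by ring, zpow_add₀ hpne, zpow_one]
        ring
      · -- jump at lam i
        intro i hxi
        have hlampn : lam i = (p:ℝ)^n := by rw [← hxi, hxpn]
        have hn0 : n = 0 := by
          have h1 : (p:ℝ)^n < (p:ℝ)^(1:ℤ) := by
            rw [zpow_one, ← hlampn]; exact (hlam i).2
          have h2 : (p:ℝ)^(0:ℤ) ≤ (p:ℝ)^n := by
            rw [zpow_zero, ← hlampn]; exact (hlam i).1
          have := (zpow_lt_zpow_iff_right₀ hp1).mp h1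
          have h4 : ¬ ((p:ℝ)^n < (p:ℝ)^(0:ℤ)) := not_lt.mpr h2
          by_contra hne
          rcases lt_or_gt_of_ne hne with hlt | hgt
          · exact h4 (zpow_lt_zpow_right₀ hp1 hlt)
          · omega
        have hlam1 : lam i = 1 := by rw [hlampn, hn0, zpow_zero]
        have hfil : (Finset.univ.filter fun j => lam j ≤ (1:ℝ)) = {i} := by
          ext j
          simp only [Finset.mem_filter, Finset.mem_univ, true_and, Finset.mem_singleton]
          constructor
          · intro hle
            exact hinj (by rw [hlam1]; exact le_antisymm hle (hlam j).1)
          · intro hji; rw [hji, hlam1]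
        have hB1 : B 1 = s0 + d i := by
          rw [hB]; simp only; rw [hfil, Finset.sum_singleton]
        rw [hn0, hB1, hApall, hs0]
        norm_num
    · -- CASE u > 1
      obtain ⟨εu, hεu, hLu, hRu⟩ := hFloc u
      have hxgt : (p:ℝ)^n < x := by
        calc (p:ℝ)^n = (p:ℝ)^n * 1 := by rw [mul_one]
          _ < (p:ℝ)^n * u := by exact mul_lt_mul_of_pos_left hugt (hpnpos _)
          _ = x := hxnu
      set ε : ℝ := min (εu * (p:ℝ)^n) (min (x - (p:ℝ)^n) ((p:ℝ)^(n+1) - x)) with hε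
      have hεpos : 0 < ε :=
        lt_min (by positivity) (lt_min (by linarith) (by linarith))
      have hεle1 : ε ≤ εu * (p:ℝ)^n := min_le_left _ _
      have hεle2 : ε ≤ x - (p:ℝ)^n := le_trans (min_le_right _ _) (min_le_left _ _)
      have hεle3 : ε ≤ (p:ℝ)^(n+1) - x := le_trans (min_le_right _ _) (min_le_right _ _)
      have hscale : (p:ℝ)^(-n) * ε ≤ εu := by
        calc (p:ℝ)^(-n) * ε ≤ (p:ℝ)^(-n) * (εu * (p:ℝ)^n) :=
              mul_le_mul_of_nonneg_left hεle1 (le_of_lt (hpnpos _))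
          _ = εu := by rw [show (p:ℝ)^(-n) * (εu * (p:ℝ)^n) =
                εu * ((p:ℝ)^(-n) * (p:ℝ)^n) by ring, hz1, mul_one]
      have hnuy : ∀ y, x - ε < y → y < x + ε → nuF p y = n := by
        intro y hya hyb
        exact nu_unique hp1 (by linarith) (by linarith)
      refine ⟨ε, (p:ℝ)^(-n) * A u, (p:ℝ)^(-n) * B u,
        zpowMulMemHp hp.pos (hAHp _) _, zpowMulMemHp hp.pos (hBHp _) _,
        fun _ => ⟨hεpos, ?_, ?_, ?_, ?_⟩⟩
      · intro y hy1 hy2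
        have hny : nuF p y = n := hnuy y hy1 (by linarith)
        have hfy : f y = F ((p:ℝ)^(-n) * y) := by rw [hf]; simp only; rw [hny]
        set w := (p:ℝ)^(-n) * y with hw
        have hwu : w ≤ u := by
          rw [hw, huu]
          exact mul_le_mul_of_nonneg_left hy2 (le_of_lt (hpnpos _))
        have hwl : u - εu < w := by
          have h1 : (p:ℝ)^(-n) * (x - ε) < w := mul_lt_mul_of_pos_left hy1 (hpnpos _)
          have h2 : u - εu ≤ (p:ℝ)^(-n) * (x - ε) := by
            rw [mul_sub, ← huu]
            have := hscale
            linarith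
          linarith
        have := hLu w hwl hwu
        rw [hfy, this, hfxu]
        have hwx : w - u = (p:ℝ)^(-n) * (y - x) := by rw [hw, huu]; ring
        rw [hwx]; ring
      · intro y hy1 hy2
        have hny : nuF p y = n := hnuy y (by linarith) hy2
        have hfy : f y = F ((p:ℝ)^(-n) * y) := by rw [hf]; simp only; rw [hny]
        set w := (p:ℝ)^(-n) * y with hw
        have hwu : u ≤ w := by
          rw [hw, huu]
          exact mul_le_mul_of_nonneg_left hy1 (le_of_lt (hpnpos _))
        have hwr : w < u + εu := by
          have h1 : w < (p:ℝ)^(-n) * (x + ε) := mul_lt_mul_of_pos_left hy2 (hpnpos _)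
          have h2 : (p:ℝ)^(-n) * (x + ε) ≤ u + εu := by
            rw [mul_add, ← huu]
            have := hscale
            linarith
          linarith
        have := hRu w hwu hwr
        rw [hfy, this, hfxu]
        have hwx : w - u = (p:ℝ)^(-n) * (y - x) := by rw [hw, huu]; ring
        rw [hwx]; ring
      · intro hno
        have hnulam : ∀ i, lam i ≠ u := by
          intro i hi
          exact hno i n (by rw [← hxnu, hi]; ring)
        have hfeq : (Finset.univ.filter fun j => lam j < u) =
            (Finset.univ.filter fun j => lam j ≤ u) := by
          ext j
          simp only [Finset.mem_filter, Finset.mem_univ, true_and]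
          exact ⟨le_of_lt, fun hle => lt_of_le_of_ne hle (hnulam j)⟩
        have : A u = B u := by
          rw [hA, hB]; simp only
          rw [hfeq]
        rw [this]
      · intro i hxi
        have hn0 : n = 0 := by
          rw [hn, hxi]
          exact nu_unique hp1 (by rw [zpow_zero]; exact (hlam i).1)
            (by rw [show (0:ℤ)+1 = 1 by ring, zpow_one]; exact (hlam i).2)
        have hux : u = lam i := by
          rw [huu, hn0, neg_zero, zpow_zero, one_mul, ← hxi]
        have hinot : i ∉ Finset.univ.filter (fun j => lam j < u) := by
          simp only [Finset.mem_filter, Finset.mem_univ, true_and, not_lt, hux, le_refl]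
        have hfil : (Finset.univ.filter fun j => lam j ≤ u) =
            insert i (Finset.univ.filter fun j => lam j < u) := by
          ext j
          simp only [Finset.mem_filter, Finset.mem_univ, true_and, Finset.mem_insert]
          constructor
          · intro hle
            rcases eq_or_lt_of_le hle with he | hl
            · exact Or.inl (hinj (by rw [he, hux]))
            · exact Or.inr hl
          · rintro (rfl | hl)
            · rw [hux]
            · exact le_of_lt hl
        have hBA : B u = A u + d i := by
          rw [hA, hB]; simp only
          rw [hfil, Finset.sum_insert hinot]; ring
        rw [hn0, hBA]
        norm_num
  -- assemble
  choose ε a b haHp hbHp hmain using floc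
  have hderL : ∀ x : ℝ, 0 < x → HasDerivWithinAt f (a x) (Set.Iic x) x := by
    intro x hx
    obtain ⟨hε, hL, hR, _, _⟩ := hmain x hx
    have hg : HasDerivWithinAt (fun y => a x * y + (f x - a x * x)) (a x) (Set.Iic x) x :=
      affine_hasDerivWithinAt _ _ _ _
    refine hg.congr_of_eventuallyEq ?_ (by ring)
    have hmem : Set.Ioc (x - ε x) x ∈ nhdsWithin x (Set.Iic x) := by
      rw [← Set.Ioi_inter_Iic, inter_comm]
      exact inter_mem_nhdsWithin _ (Ioi_mem_nhds (by linarith))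
    refine eventually_of_mem hmem fun y hy => ?_
    rw [hL y hy.1 hy.2]; ring
  have hderR : ∀ x : ℝ, 0 < x → HasDerivWithinAt f (b x) (Set.Ici x) x := by
    intro x hx
    obtain ⟨hε, hL, hR, _, _⟩ := hmain x hx
    have hg : HasDerivWithinAt (fun y => b x * y + (f x - b x * x)) (b x) (Set.Ici x) x :=
      affine_hasDerivWithinAt _ _ _ _
    refine hg.congr_of_eventuallyEq ?_ (by ring)
    have hmem : Set.Ico x (x + ε x) ∈ nhdsWithin x (Set.Ici x) := by
      rw [← Set.Ici_inter_Iio]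
      exact inter_mem_nhdsWithin _ (Iio_mem_nhds (by linarith))
    refine eventually_of_mem hmem fun y hy => ?_
    rw [hR y hy.1 hy.2]; ring
  refine ⟨f, b, a, ?_, hper, fun x hx => ⟨hderR x hx, hbHp x⟩,
    fun x hx => ⟨hderL x hx, haHp x⟩, ?_, ?_⟩
  · -- continuity
    intro x hx
    have hca : ContinuousAt f x := by
      have h1 := (hderL x hx).continuousWithinAt
      have h2 := (hderR x hx).continuousWithinAt
      have := h1.union h2
      rwa [Set.Iic_union_Ici, continuousWithinAt_univ] at this
    exact hca.continuousWithinAt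
  · -- local affineness off orbits
    intro x hx hno
    obtain ⟨hε, hL, hR, hab, _⟩ := hmain x hx
    have hab' := hab hno
    refine ⟨ε x, hε, a x, f x - a x * x, haHp x, fun y hy => ?_⟩
    rcases le_or_gt y x with hle | hlt
    · rw [hL y hy.1 hle]; ring
    · rw [hR y (le_of_lt hlt) hy.2, ← hab']; ring
  · -- jumps
    intro i
    obtain ⟨_, _, _, _, hjump⟩ := hmain (lam i) (hlam0 i)
    rw [show b (lam i) - a (lam i) = d i from hjump i rfl] at *
    · exact hdlam i

lemma forward (p : ℕ) (hp : p.Prime) (m : ℕ) (lam : Fin m → ℝ)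
    (hmono : StrictMono lam) (hlam : ∀ i, lam i ∈ Set.Ico (1 : ℝ) (p : ℝ))
    (h : Fin m → ℝ) (f dplus dminus : ℝ → ℝ)
    (hcont : ContinuousOn f (Set.Ioi 0))
    (hper : ∀ x : ℝ, 0 < x → f ((p : ℝ) * x) = f x)
    (hdp : ∀ x : ℝ, 0 < x → HasDerivWithinAt f (dplus x) (Set.Ici x) x ∧ dplus x ∈ Hp p)
    (hdm : ∀ x : ℝ, 0 < x → HasDerivWithinAt f (dminus x) (Set.Iic x) x ∧ dminus x ∈ Hp p)
    (hloc : ∀ x : ℝ, 0 < x → (∀ i, ∀ n : ℤ, x ≠ lam i * (p : ℝ) ^ n) →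
      ∃ ε > (0 : ℝ), ∃ a c : ℝ, a ∈ Hp p ∧
        ∀ y ∈ Set.Ioo (x - ε) (x + ε), f y = a * y + c)
    (hjump : ∀ i, lam i * (dplus (lam i) - dminus (lam i)) = h i) :
    (∑ i, h i) = 0 ∧ (∑ i, h i / lam i) ∈ scaledHp p ((p : ℝ) - 1) := by
  classical
  rcases Nat.eq_zero_or_pos m with hm0 | hm
  · subst hm0
    have e1 : (∑ i : Fin 0, h i) = 0 := by simp
    have e2 : (∑ i : Fin 0, h i / lam i) = 0 := by simp
    exact ⟨e1, e2 ▸ zero_mem _⟩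
  have hp1 : (1:ℝ) < p := by exact_mod_cast hp.one_lt
  have hp0 : (0:ℝ) < p := by linarith
  have hpne : (p:ℝ) ≠ 0 := ne_of_gt hp0
  have hlam0 : ∀ i, (0:ℝ) < lam i := fun i => lt_of_lt_of_le one_pos (hlam i).1
  obtain ⟨M, hM⟩ : ∃ M, m = M + 1 := ⟨m - 1, by omega⟩
  set i0 : Fin m := ⟨0, hm⟩ with hi0
  set lam' : ℕ → ℝ := fun i => if hi : i < m then lam ⟨i, hi⟩ else (p:ℝ) * lam i0 with hlam'
  have hl0 : ∀ i (hi : i < m), lam' i = lam ⟨i, hi⟩ := by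
    intro i hi; simp only [hlam']; rw [dif_pos hi]
  have hlm : lam' m = (p:ℝ) * lam i0 := by
    simp only [hlam']; rw [dif_neg (lt_irrefl m)]
  have hl0' : lam' 0 = lam i0 := hl0 0 hm
  have hpos : ∀ i, i ≤ m → 0 < lam' i := by
    intro i hi
    rcases lt_or_eq_of_le hi with hlt | heq
    · rw [hl0 i hlt]; exact hlam0 _
    · rw [heq, hlm]; exact mul_pos hp0 (hlam0 i0)
  have hge1 : ∀ i, i < m → 1 ≤ lam' i := by
    intro i hi; rw [hl0 i hi]; exact (hlam ⟨i, hi⟩).1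
  have horder : ∀ i, i < m → lam' i < lam' (i + 1) := by
    intro i hi
    rcases Nat.lt_or_ge (i+1) m with hlt | hge
    · rw [hl0 i hi, hl0 (i+1) hlt]
      exact hmono (by exact Fin.mk_lt_mk.mpr (Nat.lt_succ_self i))
    · have heq : i + 1 = m := by omega
      rw [heq, hlm, hl0 i hi]
      calc lam ⟨i, hi⟩ < (p:ℝ) := (hlam _).2
        _ ≤ (p:ℝ) * lam i0 := le_mul_of_one_le_right (le_of_lt hp0) (hlam i0).1
  -- main per-interval analysis
  have key : ∀ i, (hi : i < m) →
      f (lam' (i+1)) = f (lam' i) + dplus (lam' i) * (lam' (i+1) - lam' i) ∧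
      (i + 1 < m → dminus (lam' (i+1)) = dplus (lam' i)) ∧
      (i + 1 = m → dminus (lam' 0) = (p:ℝ) * dplus (lam' i)) := by
    intro i hi
    have huv : lam' i < lam' (i+1) := horder i hi
    have hu0 : 0 < lam' i := hpos i (le_of_lt hi)
    have hu1 : 1 ≤ lam' i := hge1 i hi
    have hIcc : Icc (lam' i) (lam' (i+1)) ⊆ Ioi 0 :=
      fun y hy => lt_of_lt_of_le hu0 hy.1
    -- no orbit points in the interior
    have hnorb : ∀ x ∈ Ioo (lam' i) (lam' (i+1)), ∀ j, ∀ k : ℤ, x ≠ lam j * (p:ℝ) ^ k := by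
      intro x hx j k heq
      have hj1 : 1 ≤ lam j := (hlam j).1
      have hjp : lam j < p := (hlam j).2
      have hxu : lam' i < x := hx.1
      have hxv : x < lam' (i+1) := hx.2
      rcases lt_trichotomy k 0 with hk | hk | hk
      · -- k ≤ -1 : x < 1
        have e1 : (p:ℝ) ^ k ≤ (p:ℝ) ^ (-1 : ℤ) := zpow_le_zpow_right₀ (le_of_lt hp1) (by omega)
        have e2 : (p:ℝ) ^ (-1 : ℤ) = (p:ℝ)⁻¹ := zpow_neg_one _
        have hpk : (0:ℝ) < (p:ℝ) ^ k := zpow_pos hp0 _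
        have : x < 1 := by
          rw [heq]
          calc lam j * (p:ℝ) ^ k < (p:ℝ) * (p:ℝ) ^ k := by
                exact mul_lt_mul_of_pos_right hjp hpk
            _ ≤ (p:ℝ) * (p:ℝ)⁻¹ := by
                rw [← e2]
                exact mul_le_mul_of_nonneg_left e1 (le_of_lt hp0)
            _ = 1 := mul_inv_cancel₀ hpne
        linarith
      · -- k = 0 : x = lam j
        rw [hk, zpow_zero, mul_one] at heq
        rcases Nat.lt_or_ge (i+1) m with hlt | hge
        · rw [hl0 i hi] at hxu
          rw [hl0 (i+1) hlt] at hxv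
          rw [heq] at hxu hxv
          have c1 : (⟨i, hi⟩ : Fin m) < j := hmono.lt_iff_lt.mp hxu
          have c2 : j < (⟨i+1, hlt⟩ : Fin m) := hmono.lt_iff_lt.mp hxv
          rw [Fin.lt_def] at c1 c2
          simp only [] at c1 c2
          omega
        · -- i is the last index : lam j ≤ lam' i
          have hm1 : i + 1 = m := by omega
          have hji : j ≤ (⟨i, hi⟩ : Fin m) := by
            have hjv : j.val < i + 1 := by rw [hm1]; exact j.isLt
            exact Nat.lt_succ_iff.mp hjv
          have : lam j ≤ lam' i := by
            rw [hl0 i hi]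
            exact hmono.monotone hji
          rw [heq] at hxu
          linarith
      · -- k ≥ 1
        have hpk : (0:ℝ) < (p:ℝ) ^ k := zpow_pos hp0 _
        have e1 : (p:ℝ) ≤ (p:ℝ) ^ k := by
          have h2 : (p:ℝ) ^ (1:ℤ) ≤ (p:ℝ) ^ k := zpow_le_zpow_right₀ (le_of_lt hp1) (by omega)
          rwa [zpow_one] at h2
        have hxp : (p:ℝ) ≤ x := by
          rw [heq]
          calc (p:ℝ) ≤ (p:ℝ) ^ k := e1
            _ = 1 * (p:ℝ) ^ k := (one_mul _).symm
            _ ≤ lam j * (p:ℝ) ^ k := mul_le_mul_of_nonneg_right hj1 (le_of_lt hpk)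
        rcases Nat.lt_or_ge (i+1) m with hlt | hge
        · rw [hl0 (i+1) hlt] at hxv
          linarith [(hlam (⟨i+1, hlt⟩ : Fin m)).2]
        · have hm1 : i + 1 = m := by omega
          rw [hm1, hlm] at hxv
          rcases eq_or_lt_of_le (show (1:ℤ) ≤ k by omega) with hk1 | hk2
          · -- k = 1
            rw [← hk1, zpow_one] at heq
            have : lam i0 ≤ lam j := hmono.monotone (by rw [Fin.le_def]; exact Nat.zero_le _)
            rw [heq] at hxv
            nlinarith
          · -- k ≥ 2
            have e2 : (p:ℝ) * (p:ℝ) ≤ (p:ℝ) ^ k := by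
              have : (p:ℝ) ^ (2:ℤ) ≤ (p:ℝ) ^ k := zpow_le_zpow_right₀ (le_of_lt hp1) (by omega)
              calc (p:ℝ) * (p:ℝ) = (p:ℝ) ^ (2:ℤ) := by
                    rw [show (2:ℤ) = 1 + 1 by ring, zpow_add₀ hpne, zpow_one]
                _ ≤ (p:ℝ) ^ k := this
            have hx2 : (p:ℝ) * (p:ℝ) ≤ x := by
              rw [heq]
              calc (p:ℝ) * (p:ℝ) ≤ (p:ℝ) ^ k := e2
                _ = 1 * (p:ℝ) ^ k := (one_mul _).symm
                _ ≤ lam j * (p:ℝ) ^ k := mul_le_mul_of_nonneg_right hj1 (le_of_lt hpk)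
            have : (p:ℝ) * lam i0 < (p:ℝ) * (p:ℝ) :=
              mul_lt_mul_of_pos_left (hlam i0).2 hp0
            linarith
    have hlocI : ∀ x ∈ Ioo (lam' i) (lam' (i+1)),
        ∃ ε > 0, ∃ a c : ℝ, ∀ y ∈ Ioo (x - ε) (x + ε), f y = a * y + c := by
      intro x hx
      obtain ⟨ε, hε, a, c, _, hfa⟩ := hloc x (lt_trans hu0 hx.1) (hnorb x hx)
      exact ⟨ε, hε, a, c, hfa⟩
    obtain ⟨a, c, haff⟩ := locally_affine_eq f huv (hcont.mono hIcc) hlocI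
    have hdpa : dplus (lam' i) = a :=
      slope_right_unique huv haff (hdp (lam' i) hu0).1
    refine ⟨?_, ?_, ?_⟩
    · rw [haff (lam' (i+1)) ⟨le_of_lt huv, le_refl _⟩,
        haff (lam' i) ⟨le_refl _, le_of_lt huv⟩, hdpa]
      ring
    · intro hi1
      rw [hdpa]
      exact slope_left_unique huv haff (hdm (lam' (i+1)) (hpos _ (le_of_lt hi1))).1
    · intro hi1
      have hv : lam' (i+1) = (p:ℝ) * lam' 0 := by rw [hi1, hlm, hl0']
      have hu0' : 0 < lam' 0 := hpos 0 (le_of_lt hm)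
      have huv' : lam' i / p < lam' 0 := by
        rw [div_lt_iff₀ hp0]
        calc lam' i < lam' (i+1) := huv
          _ = (p:ℝ) * lam' 0 := hv
          _ = lam' 0 * p := mul_comm _ _
      have haff' : ∀ y ∈ Icc (lam' i / p) (lam' 0), f y = ((p:ℝ) * a) * y + c := by
        intro y hy
        have hy0 : 0 < y := lt_of_lt_of_le (by positivity) hy.1
        have hpy : (p:ℝ) * y ∈ Icc (lam' i) (lam' (i+1)) := by
          constructor
          · calc lam' i = (p:ℝ) * (lam' i / p) := by field_simp
              _ ≤ (p:ℝ) * y := mul_le_mul_of_nonneg_left hy.1 (le_of_lt hp0)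
          · rw [hv]
            exact mul_le_mul_of_nonneg_left hy.2 (le_of_lt hp0)
        rw [← hper y hy0, haff ((p:ℝ) * y) hpy]
        ring
      have := slope_left_unique huv' haff' (hdm (lam' 0) hu0').1
      rw [this, hdpa]
  -- telescoping
  set σ : ℕ → ℝ := fun i => dplus (lam' i) with hσ
  have hstep : ∀ i, i < m → f (lam' (i+1)) = f (lam' i) + σ i * (lam' (i+1) - lam' i) :=
    fun i hi => (key i hi).1
  have hdmin : ∀ i, i + 1 < m → dminus (lam' (i+1)) = σ i :=
    fun i hi => (key i (by omega)).2.1 hi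
  have hwrap : dminus (lam' 0) = (p:ℝ) * σ M := (key M (by omega)).2.2 hM.symm
  have hjump' : ∀ i (hi : i < m), h ⟨i, hi⟩ = lam' i * (σ i - dminus (lam' i)) := by
    intro i hi
    simp only [hσ]
    rw [hl0 i hi]
    exact (hjump ⟨i, hi⟩).symm
  have hperwrap : f (lam' m) = f (lam' 0) := by
    rw [hlm, hl0']
    exact hper _ (hlam0 i0)
  -- the two sums
  set H : ℕ → ℝ := fun i => if hi : i < m then h ⟨i, hi⟩ else 0 with hH
  set D : ℕ → ℝ := fun i => if hi : i < m then h ⟨i, hi⟩ / lam ⟨i, hi⟩ else 0 with hD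
  have hHe : ∀ i (hi : i < m), H i = h ⟨i, hi⟩ := by
    intro i hi; simp only [hH]; rw [dif_pos hi]
  have hDe : ∀ i (hi : i < m), D i = h ⟨i, hi⟩ / lam ⟨i, hi⟩ := by
    intro i hi; simp only [hD]; rw [dif_pos hi]
  have hsumH : (∑ i, h i) = ∑ i ∈ Finset.range m, H i := by
    rw [← Fin.sum_univ_eq_sum_range]
    exact Finset.sum_congr rfl fun i _ => by rw [hHe i.val i.isLt, Fin.eta]
  have hsumD : (∑ i, h i / lam i) = ∑ i ∈ Finset.range m, D i := by
    rw [← Fin.sum_univ_eq_sum_range]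
    exact Finset.sum_congr rfl fun i _ => by rw [hDe i.val i.isLt, Fin.eta]
  -- identities for H and D
  have hD' : ∀ i (hi : i < m), D i = σ i - dminus (lam' i) := by
    intro i hi
    have hne : lam ⟨i, hi⟩ ≠ 0 := ne_of_gt (hlam0 _)
    rw [hDe i hi, hjump' i hi, hl0 i hi]
    field_simp
  have hH' : ∀ i (hi : i < m), H i = lam' i * (σ i - dminus (lam' i)) := by
    intro i hi
    rw [hHe i hi, hjump' i hi]
  -- sum of D
  have hDsum : (∑ i ∈ Finset.range m, D i) = (1 - (p:ℝ)) * σ M := by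
    rw [hM, Finset.sum_range_succ']
    have e1 : ∀ i ∈ Finset.range M, D (i+1) = σ (i+1) - σ i := by
      intro i hi
      rw [Finset.mem_range] at hi
      rw [hD' (i+1) (by omega), hdmin i (by omega)]
    rw [Finset.sum_congr rfl e1, Finset.sum_range_sub (fun i => σ i) M,
      hD' 0 (by omega), hwrap]
    ring
  -- sum of H
  have hHsum : (∑ i ∈ Finset.range m, H i) = 0 := by
    set g : ℕ → ℝ := fun i => lam' i * σ i - f (lam' i) with hg
    rw [hM, Finset.sum_range_succ']
    have e1 : ∀ i ∈ Finset.range M, H (i+1) = g (i+1) - g i := by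
      intro i hi
      rw [Finset.mem_range] at hi
      simp only [hg]
      rw [hH' (i+1) (by omega), hdmin i (by omega)]
      have := hstep i (by omega)
      linear_combination this
    rw [Finset.sum_congr rfl e1, Finset.sum_range_sub g M,
      hH' 0 (by omega), hwrap]
    simp only [hg]
    have hsM := hstep M (by omega)
    have hvm : lam' (M+1) = (p:ℝ) * lam' 0 := by rw [← hM, hlm, hl0']
    rw [hvm] at hsM
    rw [hper (lam' 0) (hpos 0 (by omega))] at hsM
    linear_combination hsM
  constructor
  · rw [hsumH, hHsum]
  · rw [hsumD, hDsum]
    refine ⟨-(σ M), neg_mem (hdp (lam' M) (hpos M (by omega))).2, by ring⟩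

/-- given `λ_1 < … < λ_m` in `[1,p)` and `h_i ∈ λ_i·H_p`, there exists a global
rational function on `C_p` (continuous, `f(pλ) = f(λ)`, piecewise affine with slopes in `H_p`,
locally affine off the `p^ℤ`-orbits of the `λ_i`) with `Order(f)(λ_i) = h_i` for all `i`
if and only if `∑ h_i = 0` and `∑ h_i/λ_i ∈ (p-1)·H_p`: a divisor of degree `0` on `C_p` is
principal iff its invariant `χ` vanishes. -/
theorem statement7 (p : ℕ) (hp : p.Prime) (m : ℕ) (lam : Fin m → ℝ)
    (hmono : StrictMono lam) (hlam : ∀ i, lam i ∈ Set.Ico (1 : ℝ) (p : ℝ))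
    (h : Fin m → ℝ) (hmem : ∀ i, h i ∈ scaledHp p (lam i)) :
    (∃ f dplus dminus : ℝ → ℝ,
        ContinuousOn f (Set.Ioi 0) ∧
        (∀ x : ℝ, 0 < x → f ((p : ℝ) * x) = f x) ∧
        (∀ x : ℝ, 0 < x →
          HasDerivWithinAt f (dplus x) (Set.Ici x) x ∧ dplus x ∈ Hp p) ∧
        (∀ x : ℝ, 0 < x →
          HasDerivWithinAt f (dminus x) (Set.Iic x) x ∧ dminus x ∈ Hp p) ∧
        (∀ x : ℝ, 0 < x → (∀ i, ∀ n : ℤ, x ≠ lam i * (p : ℝ) ^ n) →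
          ∃ ε > (0 : ℝ), ∃ a c : ℝ, a ∈ Hp p ∧
            ∀ y ∈ Set.Ioo (x - ε) (x + ε), f y = a * y + c) ∧
        (∀ i, lam i * (dplus (lam i) - dminus (lam i)) = h i)) ↔
    ((∑ i, h i) = 0 ∧ (∑ i, h i / lam i) ∈ scaledHp p ((p : ℝ) - 1)) := by
  constructor
  · rintro ⟨f, dplus, dminus, hcont, hper, hdp, hdm, hloc, hjump⟩
    exact forward p hp m lam hmono hlam h f dplus dminus hcont hper hdp hdm hloc hjump
  · rintro ⟨hdeg, hchi⟩
    obtain ⟨q, hqHp, hq⟩ := hchi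
    exact backward p hp m lam hmono.injective hlam h hmem hdeg q hqHp hq
end

section
/- Let p be a prime and let D be a divisor on C_p, i.e., a finitely supported function on [1,p) with D(λ) ∈ λ·H_p for all λ, where H_p = ℤ[1/p]. If deg(D) = ∑_{λ ∈ [1,p)} D(λ) < 0, then there is no continuous function f : ℝ_{>0} → ℝ with f(pλ) = f(λ) for all λ, piecewise affine with slopes in H_p, such that D(λ) + Order(f)(λ) ≥ 0 for all λ ∈ [1,p). In other words, the Riemann–Roch space H⁰(D) contains no nonzero (real-valued) section when deg(D) < 0. -/
open Set Filter Topology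

section RRaux

variable {p : ℕ} {S : Finset ℝ} {f dplus dminus : ℝ → ℝ}

private lemma deriv_unique_aux {a b x : ℝ} {s : Set ℝ} (hs : UniqueDiffWithinAt ℝ s x)
    (h1 : HasDerivWithinAt f a s x) (h2 : HasDerivWithinAt f b s x) : a = b := by
  rw [← h1.derivWithin hs, ← h2.derivWithin hs]

private lemma affine_hasDerivAt (a c y : ℝ) : HasDerivAt (fun t : ℝ => a * t + c) a y := by
  simpa using ((hasDerivAt_id y).const_mul a).add_const c

/-- Key interval lemma: if `f` is locally affine on `(u,v)` then
`v * f'₋(v) - u * f'₊(u) = f v - f u`. -/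
private lemma interval_key
    (hC : ContinuousOn f (Set.Ioi 0))
    (hloc : ∀ lam : ℝ, 0 < lam → (∀ s ∈ S, ∀ n : ℤ, lam ≠ s * (p : ℝ) ^ n) →
      ∃ ε > (0 : ℝ), ∃ a c : ℝ, a ∈ Hp p ∧
        ∀ y ∈ Set.Ioo (lam - ε) (lam + ε), f y = a * y + c)
    {u v : ℝ} (hu : 0 < u) (huv : u < v)
    (hdu : HasDerivWithinAt f (dplus u) (Set.Ici u) u)
    (hdv : HasDerivWithinAt f (dminus v) (Set.Iic v) v)
    (hgood : ∀ z ∈ Set.Ioo u v, ∀ s ∈ S, ∀ n : ℤ, z ≠ s * (p : ℝ) ^ n) :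
    v * dminus v - u * dplus u = f v - f u := by
  have hIoo : Set.Ioo u v ⊆ Set.Ioi 0 := fun x hx => lt_trans hu hx.1
  -- local derivative data
  have hA : ∀ z ∈ Set.Ioo u v, ∃ ε > (0:ℝ),
      ∀ y ∈ Set.Ioo (z - ε) (z + ε), HasDerivAt f (deriv f z) y := by
    intro z hz
    obtain ⟨ε, hε, a, c, -, hq⟩ := hloc z (hIoo hz) (hgood z hz)
    have hball : ∀ y ∈ Set.Ioo (z - ε) (z + ε), HasDerivAt f a y := by
      intro y hy
      exact (affine_hasDerivAt a c y).congr_of_eventuallyEq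
        (by filter_upwards [Ioo_mem_nhds hy.1 hy.2] with t ht using hq t ht)
    have hzz : z ∈ Set.Ioo (z - ε) (z + ε) := ⟨by linarith, by linarith⟩
    have hdz : deriv f z = a := (hball z hzz).deriv
    rw [hdz]
    exact ⟨ε, hε, hball⟩
  -- the derivative is locally constant on (u,v), hence constant
  have hpre : PreconnectedSpace (Set.Ioo u v) := Subtype.preconnectedSpace isPreconnected_Ioo
  have hlc : IsLocallyConstant (fun z : Set.Ioo u v => deriv f (z : ℝ)) := by
    rw [IsLocallyConstant.iff_exists_open]
    rintro ⟨z, hz⟩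
    obtain ⟨ε, hε, hball⟩ := hA z hz
    refine ⟨(↑) ⁻¹' Set.Ioo (z - ε) (z + ε), isOpen_Ioo.preimage continuous_subtype_val,
      by simp only [Set.mem_preimage]; exact ⟨by linarith, by linarith⟩, ?_⟩
    rintro ⟨y, hy⟩ hyb
    exact (hball y hyb).deriv
  set x₀ : ℝ := (u + v) / 2 with hx₀def
  have hx₀ : x₀ ∈ Set.Ioo u v := ⟨by rw [hx₀def]; linarith, by rw [hx₀def]; linarith⟩
  set a : ℝ := deriv f x₀ with ha
  have hconst : ∀ z ∈ Set.Ioo u v, deriv f z = a :=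
    fun z hz => hlc.apply_eq_of_preconnectedSpace ⟨z, hz⟩ ⟨x₀, hx₀⟩
  have hder : ∀ z ∈ Set.Ioo u v, HasDerivAt f a z := by
    intro z hz
    obtain ⟨ε, hε, hball⟩ := hA z hz
    have := hball z ⟨by linarith, by linarith⟩
    rwa [hconst z hz] at this
  -- f is affine with slope a on (u,v)
  have hg : ∀ x y : ℝ, x ∈ Set.Ioo u v → y ∈ Set.Ioo u v → x ≤ y →
      f y - a * y = f x - a * x := by
    intro x y hx hy hxy
    have hsub : Set.Icc x y ⊆ Set.Ioo u v := fun t ht =>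
      ⟨lt_of_lt_of_le hx.1 ht.1, lt_of_le_of_lt ht.2 hy.2⟩
    have hcont : ContinuousOn (fun t => f t - a * t) (Set.Icc x y) :=
      (hC.mono (fun t ht => hIoo (hsub ht))).sub (continuousOn_const.mul continuousOn_id)
    have hder0 : ∀ t ∈ Set.Ico x y, HasDerivWithinAt (fun t => f t - a * t) 0 (Set.Ici t) t := by
      intro t ht
      have h1 : HasDerivAt (fun t => f t - a * t) (a - a * 1) t :=
        (hder t (hsub ⟨ht.1, ht.2.le⟩)).sub ((hasDerivAt_id t).const_mul a)
      simpa using h1.hasDerivWithinAt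
    have := constant_of_has_deriv_right_zero hcont hder0 y ⟨hxy, le_refl y⟩
    simpa using this
  set c : ℝ := f x₀ - a * x₀ with hc
  have haff : ∀ x ∈ Set.Ioo u v, f x = a * x + c := by
    intro x hx
    rcases le_total x x₀ with h | h
    · have := hg x x₀ hx hx₀ h
      rw [hc]; linarith
    · have := hg x₀ x hx₀ hx h
      rw [hc]; linarith
  -- boundary values by continuity
  have hfu : f u = a * u + c := by
    have hne : (𝓝[Set.Ioo u v] u).NeBot := left_nhdsWithin_Ioo_neBot huv
    have h1 : Filter.Tendsto f (𝓝[Set.Ioo u v] u) (𝓝 (f u)) :=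
      (hC.continuousWithinAt (Set.mem_Ioi.2 hu)).mono hIoo
    have h2 : Filter.Tendsto f (𝓝[Set.Ioo u v] u) (𝓝 (a * u + c)) := by
      have hcont : Filter.Tendsto (fun x => a * x + c) (𝓝[Set.Ioo u v] u) (𝓝 (a * u + c)) :=
        (((continuous_const.mul continuous_id).add continuous_const).tendsto u).mono_left
          nhdsWithin_le_nhds
      refine hcont.congr' ?_
      filter_upwards [self_mem_nhdsWithin] with t ht
      exact (haff t ht).symm
    exact tendsto_nhds_unique h1 h2
  have hfv : f v = a * v + c := by
    have hne : (𝓝[Set.Ioo u v] v).NeBot := right_nhdsWithin_Ioo_neBot huv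
    have h1 : Filter.Tendsto f (𝓝[Set.Ioo u v] v) (𝓝 (f v)) :=
      (hC.continuousWithinAt (Set.mem_Ioi.2 (lt_trans hu huv))).mono hIoo
    have h2 : Filter.Tendsto f (𝓝[Set.Ioo u v] v) (𝓝 (a * v + c)) := by
      have hcont : Filter.Tendsto (fun x => a * x + c) (𝓝[Set.Ioo u v] v) (𝓝 (a * v + c)) :=
        (((continuous_const.mul continuous_id).add continuous_const).tendsto v).mono_left
          nhdsWithin_le_nhds
      refine hcont.congr' ?_
      filter_upwards [self_mem_nhdsWithin] with t ht
      exact (haff t ht).symm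
    exact tendsto_nhds_unique h1 h2
  -- one-sided derivatives at the ends
  have haffu : HasDerivWithinAt f a (Set.Ici u) u := by
    refine (affine_hasDerivAt a c u).hasDerivWithinAt.congr_of_eventuallyEq ?_ hfu
    filter_upwards [mem_nhdsWithin_of_mem_nhds (Iio_mem_nhds huv), self_mem_nhdsWithin]
      with t ht1 ht2
    rcases eq_or_lt_of_le (Set.mem_Ici.mp ht2) with rfl | h
    · exact hfu
    · exact haff t ⟨h, ht1⟩
  have haffv : HasDerivWithinAt f a (Set.Iic v) v := by
    refine (affine_hasDerivAt a c v).hasDerivWithinAt.congr_of_eventuallyEq ?_ hfv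
    filter_upwards [mem_nhdsWithin_of_mem_nhds (Ioi_mem_nhds huv), self_mem_nhdsWithin]
      with t ht1 ht2
    rcases eq_or_lt_of_le (Set.mem_Iic.mp ht2) with h | h
    · rw [h]; exact hfv
    · exact haff t ⟨ht1, h⟩
  have hdu' : dplus u = a := deriv_unique_aux (uniqueDiffOn_Ici u u Set.self_mem_Ici) hdu haffu
  have hdv' : dminus v = a := deriv_unique_aux (uniqueDiffOn_Iic v v Set.self_mem_Iic) hdv haffv
  rw [hdu', hdv', hfu, hfv]; ring

/-- An interval `(u,v)` containing no point of `S` scaled by powers of `p` (in the sense of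
the gap condition) is "good". -/
private lemma good_of_gap (hp2 : 2 ≤ p) (hS : ↑S ⊆ Set.Ico (1 : ℝ) (p : ℝ))
    {u v : ℝ} (hu : 1 ≤ u) (hv : v ≤ (p : ℝ))
    (hgap : ∀ s ∈ S, s ≤ u ∨ v ≤ s) :
    ∀ z ∈ Set.Ioo u v, ∀ s ∈ S, ∀ n : ℤ, z ≠ s * (p : ℝ) ^ n := by
  have hp1 : (1 : ℝ) < (p : ℝ) := by exact_mod_cast hp2
  intro z hz s hs n heq
  obtain ⟨hs1, hs2⟩ := hS hs
  rcases hgap s hs with hsl | hsr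
  · rcases le_or_gt 1 n with hn | hn
    · have h1 : (p : ℝ) ^ (1 : ℤ) ≤ (p : ℝ) ^ n := zpow_le_zpow_right₀ hp1.le hn
      have : (p : ℝ) ≤ z := by
        rw [heq]
        calc (p : ℝ) = 1 * (p : ℝ) ^ (1 : ℤ) := by simp
        _ ≤ s * (p : ℝ) ^ n := by
            apply mul_le_mul hs1 h1 (by positivity) (by linarith)
      have := hz.2
      linarith
    · have hn0 : n ≤ 0 := by omega
      have h1 : (p : ℝ) ^ n ≤ 1 := zpow_le_one_of_nonpos₀ hp1.le hn0
      have : z ≤ s := by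
        rw [heq]
        calc s * (p : ℝ) ^ n ≤ s * 1 := by
              apply mul_le_mul_of_nonneg_left h1 (by linarith)
        _ = s := by ring
      have := hz.1
      linarith
  · rcases le_or_gt 0 n with hn | hn
    · have h1 : (1 : ℝ) ≤ (p : ℝ) ^ n := one_le_zpow₀ hp1.le hn
      have : s ≤ z := by
        rw [heq]
        calc s = s * 1 := by ring
        _ ≤ s * (p : ℝ) ^ n := by
            apply mul_le_mul_of_nonneg_left h1 (by linarith)
      have := hz.2
      linarith
    · have hn1 : n ≤ -1 := by omega
      have h1 : (p : ℝ) ^ n ≤ (p : ℝ) ^ (-1 : ℤ) := zpow_le_zpow_right₀ hp1.le hn1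
      have hz1 : z < 1 := by
        rw [heq]
        calc s * (p : ℝ) ^ n ≤ s * (p : ℝ) ^ (-1 : ℤ) := by
              apply mul_le_mul_of_nonneg_left h1 (by linarith)
        _ = s / (p : ℝ) := by rw [zpow_neg_one]; ring
        _ < 1 := (div_lt_one (by linarith)).mpr hs2
      have := hz.1
      linarith

/-- Telescoping over the break points: the degree of the divisor of `f` vanishes. -/
private lemma chain_key (hp2 : 2 ≤ p) (hS : ↑S ⊆ Set.Ico (1 : ℝ) (p : ℝ))
    (hC : ContinuousOn f (Set.Ioi 0))
    (hloc : ∀ lam : ℝ, 0 < lam → (∀ s ∈ S, ∀ n : ℤ, lam ≠ s * (p : ℝ) ^ n) →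
      ∃ ε > (0 : ℝ), ∃ a c : ℝ, a ∈ Hp p ∧
        ∀ y ∈ Set.Ioo (lam - ε) (lam + ε), f y = a * y + c)
    (hdp : ∀ lam : ℝ, 0 < lam → HasDerivWithinAt f (dplus lam) (Set.Ici lam) lam)
    (hdm : ∀ lam : ℝ, 0 < lam → HasDerivWithinAt f (dminus lam) (Set.Iic lam) lam) :
    ∀ T : Finset ℝ, ∀ hne : T.Nonempty, ↑T ⊆ Set.Ico (1 : ℝ) (p : ℝ) →
      (∀ s ∈ S, s ≤ T.min' hne ∨ s ∈ T) →
      (p : ℝ) * dminus (p : ℝ) - (T.min' hne) * dminus (T.min' hne)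
        - ∑ x ∈ T, x * (dplus x - dminus x) = f (p : ℝ) - f (T.min' hne) := by
  have hp1 : (1 : ℝ) < (p : ℝ) := by exact_mod_cast hp2
  have hp0 : (0 : ℝ) < (p : ℝ) := by linarith
  intro T
  induction T using Finset.strongInduction with
  | _ T ih =>
    intro hne hTsub hSmin
    set m := T.min' hne with hm
    have hmT : m ∈ T := T.min'_mem hne
    have hmIco : m ∈ Set.Ico (1 : ℝ) (p : ℝ) := hTsub hmT
    have hm0 : (0 : ℝ) < m := lt_of_lt_of_le one_pos hmIco.1
    rcases Finset.eq_empty_or_nonempty (T.erase m) with hemp | hne'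
    · -- T = {m}
      have hTm : T = {m} := by
        rw [Finset.eq_singleton_iff_unique_mem]
        refine ⟨hmT, fun x hx => ?_⟩
        by_contra hxm
        have : x ∈ T.erase m := Finset.mem_erase.2 ⟨hxm, hx⟩
        rw [hemp] at this
        exact absurd this (Finset.notMem_empty x)
      have hkey : (p : ℝ) * dminus (p : ℝ) - m * dplus m = f (p : ℝ) - f m := by
        apply interval_key hC hloc hm0 hmIco.2 (hdp m hm0) (hdm (p : ℝ) hp0)
        apply good_of_gap hp2 hS hmIco.1 (le_refl _)
        intro s hs
        left
        rcases hSmin s hs with h | h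
        · exact h
        · rw [hTm] at h
          rw [Finset.mem_singleton.mp h]
      rw [hTm, Finset.sum_singleton]
      linarith
    · -- peel off the minimum
      set m' := (T.erase m).min' hne' with hm'
      have hm'T' : m' ∈ T.erase m := (T.erase m).min'_mem hne'
      have hm'T : m' ∈ T := Finset.mem_of_mem_erase hm'T'
      have hm'ne : m' ≠ m := (Finset.mem_erase.mp hm'T').1
      have hmm' : m < m' := lt_of_le_of_ne (T.min'_le m' hm'T) (Ne.symm hm'ne)
      have hT'sub : ↑(T.erase m) ⊆ Set.Ico (1 : ℝ) (p : ℝ) :=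
        fun x hx => hTsub (Finset.mem_of_mem_erase hx)
      have hm'Ico : m' ∈ Set.Ico (1 : ℝ) (p : ℝ) := hTsub hm'T
      have hSmin' : ∀ s ∈ S, s ≤ m' ∨ s ∈ T.erase m := by
        intro s hs
        rcases hSmin s hs with h | h
        · exact Or.inl (le_of_lt (lt_of_le_of_lt h hmm'))
        · rcases eq_or_ne s m with h' | hsm
          · exact Or.inl (h' ▸ le_of_lt hmm')
          · exact Or.inr (Finset.mem_erase.2 ⟨hsm, h⟩)
      have hIH := ih (T.erase m) (Finset.erase_ssubset hmT) hne' hT'sub hSmin'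
      have hkey : m' * dminus m' - m * dplus m = f m' - f m := by
        apply interval_key hC hloc hm0 hmm' (hdp m hm0) (hdm m'
          (lt_of_lt_of_le one_pos hm'Ico.1))
        apply good_of_gap hp2 hS hmIco.1 (le_of_lt hm'Ico.2)
        intro s hs
        rcases hSmin s hs with h | h
        · exact Or.inl h
        · rcases eq_or_ne s m with h' | hsm
          · exact Or.inl (le_of_eq h')
          · exact Or.inr ((T.erase m).min'_le s (Finset.mem_erase.2 ⟨hsm, h⟩))
      have hsum : ∑ x ∈ T, x * (dplus x - dminus x)
          = m * (dplus m - dminus m) + ∑ x ∈ T.erase m, x * (dplus x - dminus x) :=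
        (Finset.add_sum_erase T _ hmT).symm
      rw [hsum]
      linarith

end RRaux

/-- if `D` is a divisor on `C_p` (a finitely supported function on `[1,p)` with
`D(λ) ∈ λ·H_p`) with `deg(D) < 0`, then there is no global rational function `f` on `C_p`
(continuous, `f(pλ) = f(λ)`, piecewise affine with slopes in `H_p`) with
`D(λ) + Order(f)(λ) ≥ 0` for all `λ ∈ [1,p)`: the Riemann-Roch space `H⁰(D)` has no nonzero
section. -/
theorem statement9 (p : ℕ) (hp : p.Prime) (D : ℝ → ℝ)
    (hDsupp : ∀ lam : ℝ, lam ∉ Set.Ico (1 : ℝ) (p : ℝ) → D lam = 0)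
    (hDfin : (Function.support D).Finite)
    (hDmem : ∀ lam ∈ Set.Ico (1 : ℝ) (p : ℝ), D lam ∈ scaledHp p lam)
    (hdeg : (∑ᶠ lam, D lam) < 0) :
    ¬ ∃ f dplus dminus : ℝ → ℝ, ∃ S : Finset ℝ, ↑S ⊆ Set.Ico (1 : ℝ) (p : ℝ) ∧
        ContinuousOn f (Set.Ioi 0) ∧
        (∀ lam : ℝ, 0 < lam → f ((p : ℝ) * lam) = f lam) ∧
        (∀ lam : ℝ, 0 < lam → (∀ s ∈ S, ∀ n : ℤ, lam ≠ s * (p : ℝ) ^ n) →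
          ∃ ε > (0 : ℝ), ∃ a c : ℝ, a ∈ Hp p ∧
            ∀ y ∈ Set.Ioo (lam - ε) (lam + ε), f y = a * y + c) ∧
        (∀ lam : ℝ, 0 < lam →
          HasDerivWithinAt f (dplus lam) (Set.Ici lam) lam ∧ dplus lam ∈ Hp p) ∧
        (∀ lam : ℝ, 0 < lam →
          HasDerivWithinAt f (dminus lam) (Set.Iic lam) lam ∧ dminus lam ∈ Hp p) ∧
        (∀ lam ∈ Set.Ico (1 : ℝ) (p : ℝ),
          0 ≤ D lam + lam * (dplus lam - dminus lam)) := by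
  rintro ⟨f, dplus, dminus, S, hS, hC, hper, hloc, hdp', hdm', hineq⟩
  have hdp : ∀ lam : ℝ, 0 < lam → HasDerivWithinAt f (dplus lam) (Set.Ici lam) lam :=
    fun lam h => (hdp' lam h).1
  have hdm : ∀ lam : ℝ, 0 < lam → HasDerivWithinAt f (dminus lam) (Set.Iic lam) lam :=
    fun lam h => (hdm' lam h).1
  have hp2 : 2 ≤ p := hp.two_le
  have hp1 : (1 : ℝ) < (p : ℝ) := by exact_mod_cast hp2
  have hp0 : (0 : ℝ) < (p : ℝ) := by linarith
  -- periodicity of the left derivative at 1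
  have hdminus1 : dminus 1 = dminus (p : ℝ) * (p : ℝ) := by
    have h1 : HasDerivWithinAt f (dminus (p : ℝ)) (Set.Iic (p : ℝ)) ((p : ℝ) * 1) := by
      rw [mul_one]; exact hdm (p : ℝ) hp0
    have h2 : HasDerivWithinAt (fun μ : ℝ => (p : ℝ) * μ) (p : ℝ) (Set.Iic 1) 1 := by
      simpa using ((hasDerivAt_id (1 : ℝ)).const_mul (p : ℝ)).hasDerivWithinAt
    have hmaps : Set.MapsTo (fun μ : ℝ => (p : ℝ) * μ) (Set.Iic 1) (Set.Iic (p : ℝ)) := by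
      intro x hx
      simp only [Set.mem_Iic] at hx ⊢
      nlinarith
    have hcomp : HasDerivWithinAt (fun μ : ℝ => f ((p : ℝ) * μ))
        (dminus (p : ℝ) * (p : ℝ)) (Set.Iic 1) 1 := h1.comp 1 h2 hmaps
    have heq : HasDerivWithinAt f (dminus (p : ℝ) * (p : ℝ)) (Set.Iic 1) 1 := by
      refine hcomp.congr_of_eventuallyEq ?_ (by simpa using (hper 1 one_pos).symm)
      filter_upwards [mem_nhdsWithin_of_mem_nhds (Ioi_mem_nhds one_pos)] with t ht
      exact (hper t ht).symm
    exact deriv_unique_aux (uniqueDiffOn_Iic 1 1 Set.self_mem_Iic) (hdm 1 one_pos) heq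
  -- total order of f over a fundamental domain is 0
  set T : Finset ℝ := insert (1 : ℝ) S with hT
  have hTne : T.Nonempty := Finset.insert_nonempty _ _
  have hTsub : ↑T ⊆ Set.Ico (1 : ℝ) (p : ℝ) := by
    rw [hT, Finset.coe_insert]
    exact Set.insert_subset ⟨le_refl _, hp1⟩ hS
  have hmin : T.min' hTne = 1 := by
    apply le_antisymm
    · exact T.min'_le 1 (Finset.mem_insert_self 1 S)
    · apply Finset.le_min'
      intro y hy
      exact (hTsub hy).1
  have hchain := chain_key hp2 hS hC hloc hdp hdm T hTne hTsub
    (fun s hs => Or.inr (Finset.mem_insert_of_mem hs))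
  rw [hmin] at hchain
  have hfp : f (p : ℝ) = f 1 := by
    have := hper 1 one_pos
    rwa [mul_one] at this
  have hzero : ∑ x ∈ T, x * (dplus x - dminus x) = 0 := by
    rw [hfp] at hchain
    rw [hdminus1] at hchain
    linarith
  -- off the break points the two one-sided derivatives agree
  have hoff : ∀ lam ∈ Set.Ico (1 : ℝ) (p : ℝ), lam ∉ T → dplus lam = dminus lam := by
    intro lam hlam hlamT
    have hlam0 : (0 : ℝ) < lam := lt_of_lt_of_le one_pos hlam.1
    have hgood : ∀ s ∈ S, ∀ n : ℤ, lam ≠ s * (p : ℝ) ^ n := by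
      intro s hs n heq
      obtain ⟨hs1, hs2⟩ := hS hs
      rcases lt_trichotomy n 0 with hn | hn | hn
      · have hn1 : n ≤ -1 := by omega
        have h1 : (p : ℝ) ^ n ≤ (p : ℝ) ^ (-1 : ℤ) := zpow_le_zpow_right₀ hp1.le hn1
        have : lam < 1 := by
          rw [heq]
          calc s * (p : ℝ) ^ n ≤ s * (p : ℝ) ^ (-1 : ℤ) :=
                mul_le_mul_of_nonneg_left h1 (by linarith)
          _ = s / (p : ℝ) := by rw [zpow_neg_one]; ring
          _ < 1 := (div_lt_one hp0).mpr hs2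
        linarith [hlam.1]
      · rw [hn] at heq
        simp only [zpow_zero, mul_one] at heq
        exact hlamT (by rw [hT, heq]; exact Finset.mem_insert_of_mem hs)
      · have hn1 : (1 : ℤ) ≤ n := hn
        have h1 : (p : ℝ) ^ (1 : ℤ) ≤ (p : ℝ) ^ n := zpow_le_zpow_right₀ hp1.le hn1
        have : (p : ℝ) ≤ lam := by
          rw [heq]
          calc (p : ℝ) = 1 * (p : ℝ) ^ (1 : ℤ) := by simp
          _ ≤ s * (p : ℝ) ^ n := mul_le_mul hs1 h1 (by positivity) (by linarith)
        linarith [hlam.2]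
    obtain ⟨ε, hε, a, c, -, hq⟩ := hloc lam hlam0 hgood
    have hmem : Set.Ioo (lam - ε) (lam + ε) ∈ 𝓝 lam :=
      Ioo_mem_nhds (by linarith) (by linarith)
    have hda : HasDerivAt f a lam :=
      (affine_hasDerivAt a c lam).congr_of_eventuallyEq
        (by filter_upwards [hmem] with t ht using hq t ht)
    have h1 : dplus lam = a :=
      deriv_unique_aux (uniqueDiffOn_Ici lam lam Set.self_mem_Ici)
        (hdp lam hlam0) hda.hasDerivWithinAt
    have h2 : dminus lam = a :=
      deriv_unique_aux (uniqueDiffOn_Iic lam lam Set.self_mem_Iic)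
        (hdm lam hlam0) hda.hasDerivWithinAt
    rw [h1, h2]
  -- assemble the contradiction
  set U : Finset ℝ := hDfin.toFinset ∪ T with hU
  have hUsub : ↑U ⊆ Set.Ico (1 : ℝ) (p : ℝ) := by
    rw [hU, Finset.coe_union]
    apply Set.union_subset _ hTsub
    intro x hx
    rw [Set.Finite.coe_toFinset] at hx
    by_contra hxn
    exact hx (hDsupp x hxn)
  have hsum_nonneg : (0 : ℝ) ≤ ∑ x ∈ U, (D x + x * (dplus x - dminus x)) :=
    Finset.sum_nonneg fun x hx => hineq x (hUsub hx)
  have hsplit : ∑ x ∈ U, (D x + x * (dplus x - dminus x))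
      = ∑ x ∈ U, D x + ∑ x ∈ U, x * (dplus x - dminus x) := Finset.sum_add_distrib
  have hDU : ∑ x ∈ U, D x = ∑ᶠ lam, D lam := by
    refine (finsum_eq_sum_of_support_subset D ?_).symm
    intro x hx
    rw [hU, Finset.coe_union, Set.Finite.coe_toFinset]
    exact Or.inl hx
  have hTU : ∑ x ∈ U, x * (dplus x - dminus x) = ∑ x ∈ T, x * (dplus x - dminus x) := by
    refine (Finset.sum_subset Finset.subset_union_right ?_).symm
    intro x hxU hxT
    rw [hoff x (hUsub hxU) hxT]
    ring
  rw [hsplit, hDU, hTU, hzero] at hsum_nonneg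
  linarith
end

section
/- Let H be a nontrivial additive subgroup of ℝ. Let R_H be the semiring whose nonzero elements are triples (x, h₊, h₋) with x ∈ ℝ, h₊, h₋ ∈ H, h₊ ≥ h₋, with a zero element 0, and whose operations on nonzero elements are: addition (x,h₊,h₋) ∨ (x',h'₊,h'₋) equal to (x,h₊,h₋) if x > x', to (x',h'₊,h'₋) if x' > x, and to (x, max(h₊,h'₊), min(h₋,h'₋)) if x = x'; and multiplication (x,h₊,h₋) • (x',h'₊,h'₋) = (x+x', h₊+h'₊, h₋+h'₋). Regard ℝ_max (the max-plus semifield on ℝ ∪ {−∞}) as embedded in R_H via x ↦ (x,0,0), −∞ ↦ 0. Then the only semiring homomorphism φ : R_H → ℝ_max restricting to the identity on ℝ_max is given by φ(x,h₊,h₋) = x and φ(0) = −∞. -/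
lemma max_mem_addSubgroup {H : AddSubgroup ℝ} {a b : ℝ} (ha : a ∈ H) (hb : b ∈ H) :
    max a b ∈ H := by
  rcases le_total a b with hab | hab
  · rwa [max_eq_right hab]
  · rwa [max_eq_left hab]

lemma min_mem_addSubgroup {H : AddSubgroup ℝ} {a b : ℝ} (ha : a ∈ H) (hb : b ∈ H) :
    min a b ∈ H := by
  rcases le_total a b with hab | hab
  · rwa [min_eq_left hab]
  · rwa [min_eq_right hab]

/-- A nonzero element `(x, h₊, h₋)` of the semiring `R_H` of germs at `λ = 1` of convex
piecewise affine continuous `ℝ_max`-valued functions with slopes in `H`. -/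
structure RHElem (H : AddSubgroup ℝ) where
  x : ℝ
  hplus : ℝ
  hminus : ℝ
  hplus_mem : hplus ∈ H
  hminus_mem : hminus ∈ H
  hle : hminus ≤ hplus

/-- Addition (the max of germs) on `R_H = Option (RHElem H)`, where `none` is the zero
element. -/
noncomputable def rhAdd {H : AddSubgroup ℝ} :
    Option (RHElem H) → Option (RHElem H) → Option (RHElem H)
  | none, b => b
  | some a, none => some a
  | some a, some b =>
    if a.x > b.x then some a
    else if b.x > a.x then some b
    else some ⟨a.x, max a.hplus b.hplus, min a.hminus b.hminus,
      max_mem_addSubgroup a.hplus_mem b.hplus_mem,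
      min_mem_addSubgroup a.hminus_mem b.hminus_mem,
      le_trans (min_le_left _ _) (le_trans a.hle (le_max_left _ _))⟩

/-- Multiplication (the sum of germs) on `R_H = Option (RHElem H)`. -/
def rhMul {H : AddSubgroup ℝ} :
    Option (RHElem H) → Option (RHElem H) → Option (RHElem H)
  | none, _ => none
  | some _, none => none
  | some a, some b =>
    some ⟨a.x + b.x, a.hplus + b.hplus, a.hminus + b.hminus,
      add_mem a.hplus_mem b.hplus_mem, add_mem a.hminus_mem b.hminus_mem,
      add_le_add a.hle b.hle⟩

/-- The embedding of `ℝ_max = ℝ ∪ {-∞}` into `R_H`, `x ↦ (x,0,0)`, `-∞ ↦ 0`. -/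
def rhOfRmax (H : AddSubgroup ℝ) : WithBot ℝ → Option (RHElem H)
  | ⊥ => none
  | (x : ℝ) => some ⟨x, 0, 0, zero_mem H, zero_mem H, le_refl 0⟩


lemma withBot_eq_of_squeeze (x : ℝ) (t : WithBot ℝ)
    (h1 : ∀ y : ℝ, y < x → (y : WithBot ℝ) ≤ t)
    (h2 : ∀ y : ℝ, x < y → t ≤ (y : WithBot ℝ)) : t = (x : WithBot ℝ) := by
  cases t with
  | bot => exact absurd (h1 (x - 1) (by linarith)) (by simp)
  | coe s =>
    norm_cast at h1 h2 ⊢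
    have hsx : s ≤ x := by
      by_contra hs; push_neg at hs
      have := h2 ((x + s) / 2) (by linarith); linarith
    have hxs : x ≤ s := by
      by_contra hs; push_neg at hs
      have := h1 ((x + s) / 2) (by linarith); linarith
    linarith

/-- for a nontrivial subgroup `H ⊆ ℝ`, the only semiring homomorphism
`φ : R_H → ℝ_max` restricting to the identity on `ℝ_max` is `(x,h₊,h₋) ↦ x`, `0 ↦ -∞`
(here `ℝ_max` is `WithBot ℝ` with addition `max` and multiplication `+`). -/
theorem statement10 (H : AddSubgroup ℝ) (hH : H ≠ ⊥) :
    (((∀ a b : Option (RHElem H),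
          (rhAdd a b).elim (⊥ : WithBot ℝ) (fun e => (e.x : WithBot ℝ)) =
            max (a.elim ⊥ fun e => (e.x : WithBot ℝ)) (b.elim ⊥ fun e => (e.x : WithBot ℝ))) ∧
        (∀ a b : Option (RHElem H),
          (rhMul a b).elim (⊥ : WithBot ℝ) (fun e => (e.x : WithBot ℝ)) =
            (a.elim ⊥ fun e => (e.x : WithBot ℝ)) + (b.elim ⊥ fun e => (e.x : WithBot ℝ))) ∧
        (∀ r : WithBot ℝ,
          (rhOfRmax H r).elim (⊥ : WithBot ℝ) (fun e => (e.x : WithBot ℝ)) = r))) ∧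
    ∀ φ : Option (RHElem H) → WithBot ℝ,
      (∀ a b, φ (rhAdd a b) = max (φ a) (φ b)) →
      (∀ a b, φ (rhMul a b) = φ a + φ b) →
      (∀ r : WithBot ℝ, φ (rhOfRmax H r) = r) →
      ∀ a : Option (RHElem H), φ a = a.elim ⊥ (fun e => (e.x : WithBot ℝ)) := by
  constructor
  · refine ⟨?_, ?_, ?_⟩
    · intro a b
      cases a with
      | none => simp [rhAdd]
      | some a =>
        cases b with
        | none => simp [rhAdd]
        | some b =>
          simp only [rhAdd]
          rcases lt_trichotomy a.x b.x with h | h | h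
          · rw [if_neg (not_lt.2 h.le), if_pos h]
            show (b.x : WithBot ℝ) = max (a.x : WithBot ℝ) (b.x : WithBot ℝ)
            exact (max_eq_right (by exact_mod_cast h.le)).symm
          · rw [if_neg (not_lt.2 h.le), if_neg (not_lt.2 h.ge)]
            show (a.x : WithBot ℝ) = max (a.x : WithBot ℝ) (b.x : WithBot ℝ)
            simp [h]
          · rw [if_pos h]
            show (a.x : WithBot ℝ) = max (a.x : WithBot ℝ) (b.x : WithBot ℝ)
            exact (max_eq_left (by exact_mod_cast h.le)).symm
    · intro a b
      cases a with
      | none => simp [rhMul]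
      | some a =>
        cases b with
        | none => simp [rhMul]
        | some b => simp [rhMul]
    · intro r
      cases r with
      | bot => simp [rhOfRmax]
      | coe x => simp [rhOfRmax]
  · intro φ hadd _hmul hr a
    cases a with
    | none =>
      have := hr ⊥
      simpa [rhOfRmax] using this
    | some e =>
      simp only [Option.elim]
      apply withBot_eq_of_squeeze e.x
      · intro y hy
        have h1 := hadd (rhOfRmax H (y : WithBot ℝ)) (some e)
        have h2 : rhAdd (rhOfRmax H (y : WithBot ℝ)) (some e) = some e := by
          simp [rhOfRmax, rhAdd, not_lt.2 hy.le, hy]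
        rw [h2, hr] at h1
        rw [h1]
        exact le_max_left _ _
      · intro y hy
        have h1 := hadd (some e) (rhOfRmax H (y : WithBot ℝ))
        have h2 : rhAdd (some e) (rhOfRmax H (y : WithBot ℝ)) =
            rhOfRmax H (y : WithBot ℝ) := by
          simp [rhOfRmax, rhAdd, not_lt.2 hy.le, hy]
        rw [h2, hr] at h1
        exact le_sup_left.trans_eq h1.symm
end

section
/- Let C be the category whose objects are the (possibly empty) bounded open intervals Ω ⊆ [0,∞), with Hom(Ω,Ω') = {n ∈ ℕ_{>0} : nΩ ⊆ Ω'} for Ω ≠ ∅ (composition being multiplication of integers) and with the empty interval an initial object. Then C admits pullbacks: given morphisms n_j : Ω_j → Ω (j = 1,2) with Ω_j ≠ ∅, setting n = lcm(n_1,n_2), n = a_j n_j, and Ω' = {λ ∈ [0,∞) : a_1λ ∈ Ω_1 and a_2λ ∈ Ω_2}, the object Ω' together with the morphisms a_j : Ω' → Ω_j is a pullback of the pair (n_1, n_2); if Ω' is empty the initial object is the pullback. -/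
open CategoryTheory

/-- An object of the scaling-site category `C`: a (possibly empty) bounded open interval
`Ω ⊆ [0,∞)`. -/
structure ScObj : Type where
  s : Set ℝ
  isInterval : ∃ a b : ℝ, s = Set.Ioo a b
  nonneg : s ⊆ Set.Ici 0

/-- The scaling-site category: a morphism `Ω → Ω'` is (the action on `Ω` of) a positive
integer `n` with `nΩ ⊆ Ω'`; for `Ω = ∅` all integers give the same (empty) map, so the empty
interval is an initial object. -/
instance : Category ScObj where
  Hom Ω Ω' := {φ : Ω.s → Ω'.s // ∃ n : ℕ+, ∀ x : Ω.s, (φ x : ℝ) = (n : ℝ) * (x : ℝ)}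
  id Ω := ⟨fun x => x, 1, fun x => by simp⟩
  comp {Ω₁ Ω₂ Ω₃} f g := ⟨fun x => g.1 (f.1 x), by
    obtain ⟨n, hn⟩ := f.2
    obtain ⟨m, hm⟩ := g.2
    exact ⟨m * n, fun x => by rw [hm, hn]; push_cast; ring⟩⟩
  id_comp f := rfl
  comp_id f := rfl
  assoc f g h := rfl

set_option maxHeartbeats 2000000

theorem scKey (Ω Ω₁ Ω₂ : ScObj) (f₁ : Ω₁ ⟶ Ω) (f₂ : Ω₂ ⟶ Ω) (n₁ n₂ : ℕ+)
    (h₁ : ∀ x : Ω₁.s, (f₁.1 x : ℝ) = (n₁ : ℝ) * (x : ℝ))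
    (h₂ : ∀ x : Ω₂.s, (f₂.1 x : ℝ) = (n₂ : ℝ) * (x : ℝ)) :
    ∃ (P : ScObj) (p₁ : P ⟶ Ω₁) (p₂ : P ⟶ Ω₂),
      P.s = {lam : ℝ | 0 ≤ lam ∧
          (((n₁ : ℕ).lcm n₂ / (n₁ : ℕ) : ℕ) : ℝ) * lam ∈ Ω₁.s ∧
          (((n₁ : ℕ).lcm n₂ / (n₂ : ℕ) : ℕ) : ℝ) * lam ∈ Ω₂.s} ∧
      (∀ x : P.s, (p₁.1 x : ℝ) = (((n₁ : ℕ).lcm n₂ / (n₁ : ℕ) : ℕ) : ℝ) * (x : ℝ)) ∧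
      (∀ x : P.s, (p₂.1 x : ℝ) = (((n₁ : ℕ).lcm n₂ / (n₂ : ℕ) : ℕ) : ℝ) * (x : ℝ)) ∧
      IsPullback p₁ p₂ f₁ f₂ := by
  set L : ℕ := (n₁ : ℕ).lcm n₂ with hLdef
  have hLpos : 0 < L := Nat.pos_of_ne_zero (Nat.lcm_ne_zero n₁.pos.ne' n₂.pos.ne')
  set a₁ : ℕ := L / (n₁ : ℕ) with ha₁def
  set a₂ : ℕ := L / (n₂ : ℕ) with ha₂def
  have hd₁ : (n₁ : ℕ) ∣ L := Nat.dvd_lcm_left _ _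
  have hd₂ : (n₂ : ℕ) ∣ L := Nat.dvd_lcm_right _ _
  have hm₁ : a₁ * (n₁ : ℕ) = L := Nat.div_mul_cancel hd₁
  have hm₂ : a₂ * (n₂ : ℕ) = L := Nat.div_mul_cancel hd₂
  have ha₁pos : 0 < a₁ := Nat.div_pos (Nat.le_of_dvd hLpos hd₁) n₁.pos
  have ha₂pos : 0 < a₂ := Nat.div_pos (Nat.le_of_dvd hLpos hd₂) n₂.pos
  have ha₁R : (0:ℝ) < (a₁ : ℝ) := by exact_mod_cast ha₁pos
  have ha₂R : (0:ℝ) < (a₂ : ℝ) := by exact_mod_cast ha₂pos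
  have hr₁ : (n₁ : ℝ) * (a₁ : ℝ) = (L : ℝ) := by exact_mod_cast (mul_comm a₁ (n₁:ℕ) ▸ hm₁)
  have hr₂ : (n₂ : ℝ) * (a₂ : ℝ) = (L : ℝ) := by exact_mod_cast (mul_comm a₂ (n₂:ℕ) ▸ hm₂)
  set S : Set ℝ := {lam : ℝ | 0 ≤ lam ∧ ((a₁ : ℕ) : ℝ) * lam ∈ Ω₁.s ∧
      ((a₂ : ℕ) : ℝ) * lam ∈ Ω₂.s} with hSdef
  obtain ⟨b₁, c₁, hI₁⟩ := Ω₁.isInterval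
  obtain ⟨b₂, c₂, hI₂⟩ := Ω₂.isInterval
  have hSI : S = Set.Ioo (max (b₁ / a₁) (b₂ / a₂)) (min (c₁ / a₁) (c₂ / a₂)) := by
    ext lam
    simp only [hSdef, Set.mem_setOf_eq, hI₁, hI₂, Set.mem_Ioo, max_lt_iff, lt_min_iff]
    constructor
    · rintro ⟨h0, ⟨u1, u2⟩, ⟨v1, v2⟩⟩
      refine ⟨⟨?_, ?_⟩, ?_, ?_⟩
      · rw [div_lt_iff₀ ha₁R]; nlinarith
      · rw [div_lt_iff₀ ha₂R]; nlinarith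
      · rw [lt_div_iff₀ ha₁R]; nlinarith
      · rw [lt_div_iff₀ ha₂R]; nlinarith
    · rintro ⟨⟨u1, u2⟩, v1, v2⟩
      rw [div_lt_iff₀ ha₁R] at u1
      rw [div_lt_iff₀ ha₂R] at u2
      rw [lt_div_iff₀ ha₁R] at v1
      rw [lt_div_iff₀ ha₂R] at v2
      have hmem : (a₁ : ℝ) * lam ∈ Ω₁.s := by rw [hI₁]; constructor <;> nlinarith
      have h0 : (0:ℝ) ≤ (a₁ : ℝ) * lam := Ω₁.nonneg hmem
      exact ⟨by nlinarith, ⟨by nlinarith, by nlinarith⟩, by nlinarith, by nlinarith⟩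
  set P : ScObj := ⟨S, ⟨_, _, hSI⟩, fun lam hl => hl.1⟩ with hPdef
  have hPmem : ∀ {lam : ℝ}, lam ∈ P.s →
      0 ≤ lam ∧ ((a₁:ℕ):ℝ) * lam ∈ Ω₁.s ∧ ((a₂:ℕ):ℝ) * lam ∈ Ω₂.s := fun h => h
  set p₁ : P ⟶ Ω₁ := ⟨fun x => ⟨(a₁ : ℝ) * x, (hPmem x.2).2.1⟩,
      ⟨⟨a₁, ha₁pos⟩, fun x => rfl⟩⟩ with hp₁def
  set p₂ : P ⟶ Ω₂ := ⟨fun x => ⟨(a₂ : ℝ) * x, (hPmem x.2).2.2⟩,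
      ⟨⟨a₂, ha₂pos⟩, fun x => rfl⟩⟩ with hp₂def
  have comm : p₁ ≫ f₁ = p₂ ≫ f₂ := by
    apply Subtype.ext; funext x; apply Subtype.ext
    show (f₁.1 (p₁.1 x) : ℝ) = (f₂.1 (p₂.1 x) : ℝ)
    rw [h₁, h₂]
    show (n₁ : ℝ) * ((a₁ : ℝ) * x) = (n₂ : ℝ) * ((a₂ : ℝ) * x)
    linear_combination (x : ℝ) * hr₁ - (x : ℝ) * hr₂
  have hlim : Limits.IsLimit (Limits.PullbackCone.mk p₁ p₂ comm) := by
    apply Limits.PullbackCone.isLimitAux'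
    intro s
    have hval : ∀ x : s.pt.s,
        (a₁ : ℝ) * (((s.fst.1 x : Ω₁.s) : ℝ) / (a₁ : ℝ)) = ((s.fst.1 x : Ω₁.s) : ℝ) ∧
        (a₂ : ℝ) * (((s.fst.1 x : Ω₁.s) : ℝ) / (a₁ : ℝ)) = ((s.snd.1 x : Ω₂.s) : ℝ) := by
      obtain ⟨m₁, hsm₁⟩ := s.fst.2
      obtain ⟨m₂, hsm₂⟩ := s.snd.2
      intro x
      have hc := congrArg (fun φ : s.pt ⟶ Ω => ((φ.1 x : Ω.s) : ℝ)) s.condition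
      have hc' : (f₁.1 (s.fst.1 x) : ℝ) = (f₂.1 (s.snd.1 x) : ℝ) := hc
      rw [h₁, h₂, hsm₁, hsm₂] at hc'
      have hLne : (L : ℝ) ≠ 0 := by positivity
      have ha₁ne : (a₁ : ℝ) ≠ 0 := ne_of_gt ha₁R
      rw [hsm₁ x, hsm₂ x]
      constructor
      · field_simp
      · field_simp
        apply mul_left_cancel₀ hLne
        linear_combination (a₁ : ℝ) * (a₂ : ℝ) * hc' - ((a₂ : ℝ) * (m₁ : ℝ) * (x : ℝ)) * hr₁
          + ((a₁ : ℝ) * (m₂ : ℝ) * (x : ℝ)) * hr₂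
    have hF : ∀ x : s.pt.s, ((s.fst.1 x : Ω₁.s) : ℝ) / (a₁ : ℝ) ∈ P.s := by
      intro x
      refine ⟨div_nonneg (Ω₁.nonneg (s.fst.1 x).2) (le_of_lt ha₁R), ?_, ?_⟩
      · rw [(hval x).1]; exact (s.fst.1 x).2
      · rw [(hval x).2]; exact (s.snd.1 x).2
    have hmult : ∃ n : ℕ+, ∀ x : s.pt.s,
        ((s.fst.1 x : Ω₁.s) : ℝ) / (a₁ : ℝ) = (n : ℝ) * (x : ℝ) := by
      obtain ⟨m₁, hsm₁⟩ := s.fst.2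
      obtain ⟨m₂, hsm₂⟩ := s.snd.2
      by_cases hne : s.pt.s.Nonempty
      · obtain ⟨b, c, hbc⟩ := s.pt.isInterval
        obtain ⟨y, hy⟩ := hne
        have hy' : y ∈ Set.Ioo b c := hbc ▸ hy
        have hy0 : 0 ≤ y := s.pt.nonneg hy
        have hz : (y + c) / 2 ∈ s.pt.s := by
          rw [hbc]
          exact ⟨by nlinarith [hy'.1, hy'.2], by nlinarith [hy'.2]⟩
        have hzpos : 0 < (y + c) / 2 := by nlinarith [hy'.2]
        have hc := congrArg (fun φ : s.pt ⟶ Ω => ((φ.1 ⟨(y + c) / 2, hz⟩ : Ω.s) : ℝ))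
          s.condition
        have hc' : (f₁.1 (s.fst.1 ⟨(y + c) / 2, hz⟩) : ℝ)
            = (f₂.1 (s.snd.1 ⟨(y + c) / 2, hz⟩) : ℝ) := hc
        rw [h₁, h₂, hsm₁, hsm₂] at hc'
        have hNR : (n₁ : ℝ) * (m₁ : ℝ) = (n₂ : ℝ) * (m₂ : ℝ) := by
          apply mul_right_cancel₀ (ne_of_gt hzpos)
          linear_combination hc'
        have hN : (n₁ : ℕ) * (m₁ : ℕ) = (n₂ : ℕ) * (m₂ : ℕ) := by exact_mod_cast hNR
        have hdvd : L ∣ (n₁ : ℕ) * (m₁ : ℕ) :=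
          Nat.lcm_dvd (dvd_mul_right _ _) (hN ▸ dvd_mul_right (n₂ : ℕ) (m₂ : ℕ))
        have hkL : ((n₁ : ℕ) * (m₁ : ℕ) / L) * L = (n₁ : ℕ) * (m₁ : ℕ) :=
          Nat.div_mul_cancel hdvd
        have hkpos : 0 < (n₁ : ℕ) * (m₁ : ℕ) / L :=
          Nat.div_pos (Nat.le_of_dvd (Nat.mul_pos n₁.pos m₁.pos) hdvd) hLpos
        have hka : ((n₁ : ℕ) * (m₁ : ℕ) / L) * a₁ = (m₁ : ℕ) := by
          apply Nat.eq_of_mul_eq_mul_right n₁.pos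
          calc ((n₁ : ℕ) * (m₁ : ℕ) / L) * a₁ * (n₁ : ℕ)
              = ((n₁ : ℕ) * (m₁ : ℕ) / L) * (a₁ * (n₁ : ℕ)) := by ring
            _ = ((n₁ : ℕ) * (m₁ : ℕ) / L) * L := by rw [hm₁]
            _ = (n₁ : ℕ) * (m₁ : ℕ) := hkL
            _ = (m₁ : ℕ) * (n₁ : ℕ) := by ring
        have hkaR : (((n₁ : ℕ) * (m₁ : ℕ) / L : ℕ) : ℝ) * (a₁ : ℝ) = (m₁ : ℝ) := by
          exact_mod_cast hka
        refine ⟨⟨(n₁ : ℕ) * (m₁ : ℕ) / L, hkpos⟩, fun x => ?_⟩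
        rw [hsm₁ x]
        show (m₁ : ℝ) * (x : ℝ) / (a₁ : ℝ) = (((n₁ : ℕ) * (m₁ : ℕ) / L : ℕ) : ℝ) * (x : ℝ)
        rw [div_eq_iff (ne_of_gt ha₁R)]
        linear_combination (-(x : ℝ)) * hkaR
      · exact ⟨1, fun x => absurd ⟨x.1, x.2⟩ hne⟩
    refine ⟨⟨fun x => ⟨((s.fst.1 x : Ω₁.s) : ℝ) / (a₁ : ℝ), hF x⟩, hmult⟩, ?_, ?_, ?_⟩
    · apply Subtype.ext; funext x; apply Subtype.ext
      exact (hval x).1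
    · apply Subtype.ext; funext x; apply Subtype.ext
      exact (hval x).2
    · intro m hfst _
      apply Subtype.ext; funext x; apply Subtype.ext
      have hc := congrArg (fun φ : s.pt ⟶ Ω₁ => ((φ.1 x : Ω₁.s) : ℝ)) hfst
      have hc' : (a₁ : ℝ) * ((m.1 x : P.s) : ℝ) = ((s.fst.1 x : Ω₁.s) : ℝ) := hc
      show ((m.1 x : P.s) : ℝ) = ((s.fst.1 x : Ω₁.s) : ℝ) / (a₁ : ℝ)
      rw [eq_div_iff (ne_of_gt ha₁R)]
      linear_combination hc'
  exact ⟨P, p₁, p₂, rfl, fun x => rfl, fun x => rfl, IsPullback.of_isLimit hlim⟩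

/-- the scaling-site category admits pullbacks; explicitly, the pullback of
`n₁ : Ω₁ → Ω`, `n₂ : Ω₂ → Ω` (with `Ω₁, Ω₂` nonempty) is the interval
`Ω' = {λ ∈ [0,∞) : a₁λ ∈ Ω₁, a₂λ ∈ Ω₂}` with the morphisms `a_j = lcm(n₁,n₂)/n_j`
(the empty interval, an initial object, when `Ω'` is empty). -/
theorem statement12 :
    Limits.HasPullbacks ScObj ∧
    ∀ (Ω Ω₁ Ω₂ : ScObj), Ω₁.s.Nonempty → Ω₂.s.Nonempty →
      ∀ (f₁ : Ω₁ ⟶ Ω) (f₂ : Ω₂ ⟶ Ω) (n₁ n₂ : ℕ+),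
        (∀ x : Ω₁.s, (f₁.1 x : ℝ) = (n₁ : ℝ) * (x : ℝ)) →
        (∀ x : Ω₂.s, (f₂.1 x : ℝ) = (n₂ : ℝ) * (x : ℝ)) →
        ∃ (P : ScObj) (p₁ : P ⟶ Ω₁) (p₂ : P ⟶ Ω₂),
          P.s = {lam : ℝ | 0 ≤ lam ∧
              (((n₁ : ℕ).lcm n₂ / (n₁ : ℕ) : ℕ) : ℝ) * lam ∈ Ω₁.s ∧
              (((n₁ : ℕ).lcm n₂ / (n₂ : ℕ) : ℕ) : ℝ) * lam ∈ Ω₂.s} ∧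
          (∀ x : P.s, (p₁.1 x : ℝ) = (((n₁ : ℕ).lcm n₂ / (n₁ : ℕ) : ℕ) : ℝ) * (x : ℝ)) ∧
          (∀ x : P.s, (p₂.1 x : ℝ) = (((n₁ : ℕ).lcm n₂ / (n₂ : ℕ) : ℕ) : ℝ) * (x : ℝ)) ∧
          IsPullback p₁ p₂ f₁ f₂ := by
  constructor
  · have H : ∀ {X Y Z : ScObj} {f : X ⟶ Z} {g : Y ⟶ Z}, Limits.HasLimit (Limits.cospan f g) := by
      intro X Y Z f g
      obtain ⟨n₁, hn₁⟩ := f.2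
      obtain ⟨n₂, hn₂⟩ := g.2
      obtain ⟨P, p₁, p₂, -, -, -, hpb⟩ := scKey Z X Y f g n₁ n₂ hn₁ hn₂
      exact Limits.HasLimit.mk ⟨_, hpb.isLimit⟩
    exact Limits.hasPullbacks_of_hasLimit_cospan _
  · intro Ω Ω₁ Ω₂ _ _ f₁ f₂ n₁ n₂ h₁ h₂
    exact scKey Ω Ω₁ Ω₂ f₁ f₂ n₁ n₂ h₁ h₂
end
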